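/- arXiv:2302.13888 — 4 statements merged into one kernel-verified Lean document; each statement's English description precedes it below -/
import Mathlib

section
/- A k-uniform-prize WVG G has an SCD-stable outcome (i.e., a non-empty SCD-core) if and only if G has k iterative singleton winners; moreover, every SCD-stable outcome of G has the unique payoff vector x with x_i = 1 if i is one of the k iterative singleton winners and x_i = 0 otherwise. -/
open Finset
open scoped Classical

/-- A `k`-Prize Weighted Voting Game with `n` players `{0, ..., n-1}`:
weights, prize values in descending order, and a strict total order `pref` (`≻`)
on coalitions that refines the comparison of total weights. -/
structure kWVG (n k : ℕ) : Type where
  /-- the weights of the players -/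
  w : Fin n → ℚ
  w_pos : ∀ i, 0 < w i
  /-- the prize values, in descending order -/
  p : Fin k → ℚ
  p_pos : ∀ j, 0 < p j
  p_desc : ∀ j j' : Fin k, j ≤ j' → p j' ≤ p j
  k_pos : 0 < k
  k_le_n : k ≤ n
  /-- the strict total order `≻` on coalitions (tie-breaking order) -/
  pref : Finset (Fin n) → Finset (Fin n) → Prop
  pref_irrefl : ∀ A, ¬ pref A A
  pref_trans : ∀ A B C, pref A B → pref B C → pref A C
  pref_total : ∀ A B, A ≠ B → pref A B ∨ pref B A
  pref_weight : ∀ A B, (∑ i ∈ B, w i) < (∑ i ∈ A, w i) → pref A B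

variable {n k : ℕ}

/-- `π` is a partition of `D` into nonempty pairwise disjoint coalitions. -/
def IsPartition (π : Finset (Finset (Fin n))) (D : Finset (Fin n)) : Prop :=
  (∀ C ∈ π, C.Nonempty) ∧
  (∀ A ∈ π, ∀ B ∈ π, A ≠ B → Disjoint A B) ∧
  π.sup id = D

/-- The value `v(C, π)` of coalition `C` in the partition `π`: if `r` is the number of
coalitions of `π` that are `≻`-larger than `C` (so that `C` is the `(r+1)`-st largest
coalition of `π`), then `C` gets the `(r+1)`-st prize if `r < k`, and `0` otherwise. -/
noncomputable def coalitionValue (G : kWVG n k) (π : Finset (Finset (Fin n)))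
    (C : Finset (Fin n)) : ℚ :=
  if h : (π.filter (fun C' => G.pref C' C)).card < k then
    G.p ⟨(π.filter (fun C' => G.pref C' C)).card, h⟩
  else 0

/-- An outcome of the game `G`: a partition of all the players together with
nonnegative payoffs, where each coalition's payoffs sum to its value. -/
structure Outcome (G : kWVG n k) : Type where
  part : Finset (Finset (Fin n))
  ispart : IsPartition part Finset.univ
  x : Fin n → ℚ
  x_nonneg : ∀ i, 0 ≤ x i
  x_budget : ∀ C ∈ part, ∑ i ∈ C, x i = coalitionValue G part C

/-- A single-coalition deviation (SCD) from an outcome with payoffs `x`. -/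
def IsSCD (G : kWVG n k) (x : Fin n → ℚ) (C : Finset (Fin n)) : Prop :=
  C.Nonempty ∧
  ∀ π', IsPartition π' Finset.univ → C ∈ π' → (∑ i ∈ C, x i) < coalitionValue G π' C

/-- A deviating partition: a nonempty family of nonempty, pairwise disjoint coalitions
(that is, a partition of the nonempty set `D := πD.sup id ⊆ N` of deviators). -/
def IsDevPartition (πD : Finset (Finset (Fin n))) : Prop :=
  πD.Nonempty ∧ (∀ C ∈ πD, C.Nonempty) ∧ (∀ A ∈ πD, ∀ B ∈ πD, A ≠ B → Disjoint A B)

/-- A multi-coalition deviation (MCD) from an outcome with payoffs `x`. -/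
def IsMCD (G : kWVG n k) (x : Fin n → ℚ) (πD : Finset (Finset (Fin n))) : Prop :=
  IsDevPartition πD ∧
  ∀ π', IsPartition π' Finset.univ → πD ⊆ π' →
    ∀ C ∈ πD, (∑ i ∈ C, x i) < coalitionValue G π' C

/-- A weak multi-coalition deviation (wMCD) from an outcome with payoffs `x`. -/
def IswMCD (G : kWVG n k) (x : Fin n → ℚ) (πD : Finset (Finset (Fin n))) : Prop :=
  IsDevPartition πD ∧
  ∀ π', IsPartition π' Finset.univ → πD ⊆ π' →
    (∀ C ∈ πD, (∑ i ∈ C, x i) ≤ coalitionValue G π' C) ∧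
    (∃ C ∈ πD, (∑ i ∈ C, x i) < coalitionValue G π' C)

/-- A multi-coalition deviation with inter-coalition transfer (MCDT) from an outcome
with payoffs `x`. -/
def IsMCDT (G : kWVG n k) (x : Fin n → ℚ) (πD : Finset (Finset (Fin n))) : Prop :=
  IsDevPartition πD ∧
  ∀ π', IsPartition π' Finset.univ → πD ⊆ π' →
    (∑ i ∈ πD.sup id, x i) < ∑ C ∈ πD, coalitionValue G π' C

/-- An outcome is SCD-stable if no SCD from it exists. -/
def SCDStable (G : kWVG n k) (ω : Outcome G) : Prop := ¬ ∃ C, IsSCD G ω.x C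

/-- An outcome is MCD-stable if no MCD from it exists. -/
def MCDStable (G : kWVG n k) (ω : Outcome G) : Prop := ¬ ∃ πD, IsMCD G ω.x πD

/-- An outcome is wMCD-stable if no wMCD from it exists. -/
def wMCDStable (G : kWVG n k) (ω : Outcome G) : Prop := ¬ ∃ πD, IswMCD G ω.x πD

/-- An outcome is MCDT-stable if no MCDT from it exists. -/
def MCDTStable (G : kWVG n k) (ω : Outcome G) : Prop := ¬ ∃ πD, IsMCDT G ω.x πD

/-- `i` is a singleton winner of the reduced uniform-prize game on player set `S`
with `m` (unit) prizes: as a singleton it is always among the `m` largest coalitions. -/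
def SWin (G : kWVG n k) (S : Finset (Fin n)) (m : ℕ) (i : Fin n) : Prop :=
  i ∈ S ∧ ∀ π, IsPartition π S → {i} ∈ π →
    (π.filter (fun C' => G.pref C' {i})).card < m

/-- One reduction step: remove all singleton winners of the current reduced game and
the same number of prizes. -/
noncomputable def reduceStep (G : kWVG n k) (Sm : Finset (Fin n) × ℕ) :
    Finset (Fin n) × ℕ :=
  (Sm.1 \ Sm.1.filter (fun i => SWin G Sm.1 Sm.2 i),
   Sm.2 - (Sm.1.filter (fun i => SWin G Sm.1 Sm.2 i)).card)

/-- `i` is an iterative singleton winner (ISW) of the uniform-prize game `G`: it is a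
singleton winner removed at some step of the iterative reduction of `G`. -/
def IsISW (G : kWVG n k) (i : Fin n) : Prop :=
  ∃ t, SWin G ((reduceStep G)^[t] (Finset.univ, k)).1
    ((reduceStep G)^[t] (Finset.univ, k)).2 i

namespace KWVGAux

variable {n k : ℕ}

/-! ### Basic preference lemmas -/

lemma pref_asymm (G : kWVG n k) {A B : Finset (Fin n)} (h : G.pref A B) : ¬ G.pref B A := by
  intro h'
  exact G.pref_irrefl A (G.pref_trans A B A h h')

lemma pref_wle (G : kWVG n k) {A B : Finset (Fin n)} (h : G.pref A B) :
    (∑ i ∈ B, G.w i) ≤ (∑ i ∈ A, G.w i) := by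
  by_contra hlt
  exact pref_asymm G h (G.pref_weight B A (lt_of_not_ge hlt))

lemma wsum_lt_of_ssubset (G : kWVG n k) {A B : Finset (Fin n)} (h : A ⊂ B) :
    (∑ i ∈ A, G.w i) < (∑ i ∈ B, G.w i) := by
  obtain ⟨j, hjB, hjA⟩ := Finset.exists_of_ssubset h
  have := Finset.sum_lt_sum_of_subset h.subset hjB hjA (G.w_pos j)
      (fun i _ _ => (G.w_pos i).le)
  exact this

lemma wsum_pos (G : kWVG n k) {A : Finset (Fin n)} (h : A.Nonempty) :
    0 < (∑ i ∈ A, G.w i) :=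
  Finset.sum_pos (fun i _ => G.w_pos i) h

lemma pref_superset (G : kWVG n k) {A A' C : Finset (Fin n)} (h : G.pref A C)
    (hsub : A ⊆ A') : G.pref A' C := by
  rcases eq_or_lt_of_le (Finset.le_iff_subset.mpr hsub) with heq | hlt
  · exact heq ▸ h
  · exact G.pref_weight A' C (lt_of_le_of_lt (pref_wle G h) (wsum_lt_of_ssubset G hlt))

lemma beater_nonempty (G : kWVG n k) {B C : Finset (Fin n)} (hC : C.Nonempty)
    (h : G.pref B C) : B.Nonempty := by
  rcases B.eq_empty_or_nonempty with rfl | hne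
  · exfalso
    have h0 : (∑ i ∈ (∅ : Finset (Fin n)), G.w i) < ∑ i ∈ C, G.w i := by
      simpa using wsum_pos G hC
    exact pref_asymm G h (G.pref_weight C ∅ h0)
  · exact hne

/-! ### keyN : numeric rank of a coalition under `pref` -/

noncomputable def keyN (G : kWVG n k) (A : Finset (Fin n)) : ℕ :=
  (Finset.univ.filter (fun B => G.pref A B)).card

lemma keyN_lt_of_pref (G : kWVG n k) {A B : Finset (Fin n)} (h : G.pref A B) :
    keyN G B < keyN G A := by
  apply Finset.card_lt_card
  constructor
  · intro C hC
    simp only [Finset.mem_filter, Finset.mem_univ, true_and] at hC ⊢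
    exact G.pref_trans A B C h hC
  · intro hsub
    have hB : B ∈ Finset.univ.filter (fun C => G.pref A C) := by
      simp [h]
    have := hsub hB
    simp only [Finset.mem_filter] at this
    exact G.pref_irrefl B this.2

lemma pref_of_keyN_lt (G : kWVG n k) {A B : Finset (Fin n)} (h : keyN G B < keyN G A) :
    G.pref A B := by
  have hne : A ≠ B := by rintro rfl; exact lt_irrefl _ h
  rcases G.pref_total A B hne with h' | h'
  · exact h'
  · exact absurd (keyN_lt_of_pref G h') (by omega)

/-- any nonempty finite family of coalitions has a `pref`-least element -/
lemma exists_pref_min (G : kWVG n k) (F : Finset (Finset (Fin n))) (hF : F.Nonempty) :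
    ∃ Z ∈ F, ∀ B ∈ F, B ≠ Z → G.pref B Z := by
  obtain ⟨Z, hZF, hZ⟩ := F.exists_min_image (keyN G) hF
  refine ⟨Z, hZF, fun B hB hne => ?_⟩
  rcases G.pref_total B Z hne with h | h
  · exact h
  · exact absurd (hZ B hB) (by have := keyN_lt_of_pref G h; omega)

end KWVGAux
namespace KWVGAux

variable {n k : ℕ}

/-! ### Packings of disjoint beaters -/

/-- There are `r` pairwise disjoint subsets of `A`, each `pref`-beating `C`. -/
def Pack (G : kWVG n k) (A C : Finset (Fin n)) (r : ℕ) : Prop :=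
  ∃ F : Finset (Finset (Fin n)), F.card = r ∧ (∀ B ∈ F, B ⊆ A) ∧
    (∀ B ∈ F, G.pref B C) ∧ (∀ B₁ ∈ F, ∀ B₂ ∈ F, B₁ ≠ B₂ → Disjoint B₁ B₂)

lemma Pack.mono (G : kWVG n k) {A C : Finset (Fin n)} {r r' : ℕ} (h : r' ≤ r)
    (hp : Pack G A C r) : Pack G A C r' := by
  obtain ⟨F, hcard, hsub, hpref, hdisj⟩ := hp
  obtain ⟨F', hF'sub, hF'card⟩ := Finset.exists_subset_card_eq (s := F) (n := r') (hcard ▸ h)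
  exact ⟨F', hF'card, fun B hB => hsub B (hF'sub hB), fun B hB => hpref B (hF'sub hB),
    fun B₁ h₁ B₂ h₂ hne => hdisj B₁ (hF'sub h₁) B₂ (hF'sub h₂) hne⟩

lemma Pack.zero (G : kWVG n k) (A C : Finset (Fin n)) : Pack G A C 0 :=
  ⟨∅, rfl, by simp, by simp, by simp⟩

/-! ### Partition building blocks -/

lemma isPartition_insert {π : Finset (Finset (Fin n))} {S C : Finset (Fin n)}
    (h : IsPartition π (S \ C)) (hC : C.Nonempty) (hCS : C ⊆ S) :
    IsPartition (insert C π) S ∧ C ∉ π := by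
  obtain ⟨hne, hdisj, hsup⟩ := h
  have hCnot : C ∉ π := by
    intro hmem
    have : C ⊆ S \ C := hsup ▸ Finset.le_sup (f := id) hmem
    obtain ⟨x, hx⟩ := hC
    exact (Finset.mem_sdiff.mp (this hx)).2 hx
  refine ⟨⟨?_, ?_, ?_⟩, hCnot⟩
  · intro B hB
    rcases Finset.mem_insert.mp hB with rfl | hB
    · exact hC
    · exact hne B hB
  · intro A hA B hB hAB
    have hdisjC : ∀ B ∈ π, Disjoint C B := by
      intro B hB
      have hBsub : B ⊆ S \ C := hsup ▸ Finset.le_sup (f := id) hB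
      exact Finset.disjoint_left.mpr fun a haC haB => (Finset.mem_sdiff.mp (hBsub haB)).2 haC
    rcases Finset.mem_insert.mp hA with hA | hA
    · rcases Finset.mem_insert.mp hB with hB | hB
      · exact absurd (hA.trans hB.symm) hAB
      · rw [hA]; exact hdisjC B hB
    · rcases Finset.mem_insert.mp hB with hB | hB
      · rw [hB]; exact (hdisjC A hA).symm
      · exact hdisj A hA B hB hAB
  · rw [Finset.sup_insert, hsup]
    simp only [id, Finset.sup_eq_union]
    exact Finset.union_sdiff_of_subset hCS

/-- From a family `F` of disjoint nonempty subsets of `T`, build a partition of `T`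
consisting of the members of `F` together with the rest `T \ F.sup id` (assumed nonempty). -/
lemma partition_with_rest {T : Finset (Fin n)} {F : Finset (Finset (Fin n))}
    (hsub : ∀ B ∈ F, B ⊆ T) (hne : ∀ B ∈ F, B.Nonempty)
    (hdisj : ∀ B₁ ∈ F, ∀ B₂ ∈ F, B₁ ≠ B₂ → Disjoint B₁ B₂)
    (hrest : (T \ F.sup id).Nonempty) :
    IsPartition (insert (T \ F.sup id) F) T ∧ (insert (T \ F.sup id) F).card = F.card + 1 := by
  set R := T \ F.sup id with hR
  have hRnot : R ∉ F := by
    intro hmem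
    obtain ⟨x, hx⟩ := hrest
    have : R ⊆ F.sup id := Finset.le_sup (f := id) hmem
    exact (Finset.mem_sdiff.mp hx).2 (this hx)
  have hdisjR : ∀ B ∈ F, Disjoint R B := by
    intro B hB
    have : B ⊆ F.sup id := Finset.le_sup (f := id) hB
    exact Finset.disjoint_left.mpr fun a haR haB => (Finset.mem_sdiff.mp haR).2 (this haB)
  constructor
  · refine ⟨?_, ?_, ?_⟩
    · intro B hB
      rcases Finset.mem_insert.mp hB with rfl | hB
      · exact hrest
      · exact hne B hB
    · intro A hA B hB hAB
      rcases Finset.mem_insert.mp hA with hA | hA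
      · rcases Finset.mem_insert.mp hB with hB | hB
        · exact absurd (hA.trans hB.symm) hAB
        · rw [hA]; exact hdisjR B hB
      · rcases Finset.mem_insert.mp hB with hB | hB
        · rw [hB]; exact (hdisjR A hA).symm
        · exact hdisj A hA B hB hAB
    · rw [Finset.sup_insert]
      simp only [id]
      apply Finset.Subset.antisymm
      · apply Finset.union_subset (Finset.sdiff_subset)
        exact Finset.sup_le fun B hB => hsub B hB
      · intro x hx
        by_cases hxF : x ∈ F.sup id
        · exact Finset.mem_union.mpr (Or.inr hxF)
        · exact Finset.mem_union.mpr (Or.inl (Finset.mem_sdiff.mpr ⟨hx, hxF⟩))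
  · rw [Finset.card_insert_of_notMem hRnot]

/-- every nonempty subset of `S` belongs to some partition of `S` -/
lemma exists_partition_mem {S C : Finset (Fin n)} (hC : C.Nonempty) (hCS : C ⊆ S) :
    ∃ π, IsPartition π S ∧ C ∈ π := by
  rcases (S \ C).eq_empty_or_nonempty with hSC | hSC
  · refine ⟨insert C ∅, ?_, Finset.mem_insert_self _ _⟩
    have h0 : IsPartition (∅ : Finset (Finset (Fin n))) (S \ C) := by
      refine ⟨by simp, by simp, by simp [hSC]⟩
    exact (isPartition_insert h0 hC hCS).1
  · refine ⟨insert C {S \ C}, ?_, Finset.mem_insert_self _ _⟩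
    have h0 : IsPartition ({S \ C} : Finset (Finset (Fin n))) (S \ C) := by
      refine ⟨by simpa using hSC, by simp, by simp⟩
    exact (isPartition_insert h0 hC hCS).1

end KWVGAux
namespace KWVGAux

variable {n k : ℕ}

/-! ### Ranks and coalition values -/

/-- the rank of `C` in `π`: the number of coalitions of `π` that beat `C` -/
noncomputable def rk (G : kWVG n k) (π : Finset (Finset (Fin n))) (C : Finset (Fin n)) : ℕ :=
  (π.filter (fun C' => G.pref C' C)).card

lemma cv_eq (G : kWVG n k) (hp : ∀ j, G.p j = 1) (π : Finset (Finset (Fin n)))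
    (C : Finset (Fin n)) :
    coalitionValue G π C = if rk G π C < k then 1 else 0 := by
  unfold coalitionValue rk
  split_ifs with h
  · exact hp _
  · rfl

lemma rk_lt_of_pref (G : kWVG n k) {π : Finset (Finset (Fin n))} {A B : Finset (Fin n)}
    (hA : A ∈ π) (h : G.pref A B) : rk G π A < rk G π B := by
  have hsub : insert A (π.filter (fun C' => G.pref C' A)) ⊆ π.filter (fun C' => G.pref C' B) := by
    intro C hC
    rcases Finset.mem_insert.mp hC with rfl | hC
    · exact Finset.mem_filter.mpr ⟨hA, h⟩
    · obtain ⟨hCπ, hCA⟩ := Finset.mem_filter.mp hC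
      exact Finset.mem_filter.mpr ⟨hCπ, G.pref_trans C A B hCA h⟩
  have hAnot : A ∉ π.filter (fun C' => G.pref C' A) := by
    simp only [Finset.mem_filter]
    exact fun hc => G.pref_irrefl A hc.2
  have := Finset.card_le_card hsub
  rw [Finset.card_insert_of_notMem hAnot] at this
  exact Nat.lt_of_lt_of_le (Nat.lt_succ_self _) this

lemma rk_injOn (G : kWVG n k) {π : Finset (Finset (Fin n))} {A B : Finset (Fin n)}
    (hA : A ∈ π) (hB : B ∈ π) (hne : A ≠ B) : rk G π A ≠ rk G π B := by
  rcases G.pref_total A B hne with h | h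
  · exact Nat.ne_of_lt (rk_lt_of_pref G hA h)
  · exact (Nat.ne_of_lt (rk_lt_of_pref G hB h)).symm

lemma rk_lt_card (G : kWVG n k) {π : Finset (Finset (Fin n))} {C : Finset (Fin n)}
    (hC : C ∈ π) : rk G π C < π.card := by
  have hsub : π.filter (fun C' => G.pref C' C) ⊆ π.erase C := by
    intro B hB
    obtain ⟨hBπ, hBC⟩ := Finset.mem_filter.mp hB
    exact Finset.mem_erase.mpr ⟨fun he => G.pref_irrefl C (he ▸ hBC), hBπ⟩
  calc rk G π C ≤ (π.erase C).card := Finset.card_le_card hsub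
    _ < π.card := Finset.card_erase_lt_of_mem hC

lemma image_rk (G : kWVG n k) (π : Finset (Finset (Fin n))) :
    π.image (rk G π) = Finset.range π.card := by
  apply Finset.eq_of_subset_of_card_le
  · intro m hm
    obtain ⟨C, hC, rfl⟩ := Finset.mem_image.mp hm
    exact Finset.mem_range.mpr (rk_lt_card G hC)
  · rw [Finset.card_range, Finset.card_image_of_injOn]
    intro A hA B hB h
    by_contra hne
    exact rk_injOn G hA hB hne h

lemma card_rk_lt (G : kWVG n k) (π : Finset (Finset (Fin n))) (r : ℕ) :
    (π.filter (fun C => rk G π C < r)).card = min π.card r := by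
  have hinj : ∀ A ∈ π.filter (fun C => rk G π C < r), ∀ B ∈ π.filter (fun C => rk G π C < r),
      rk G π A = rk G π B → A = B := by
    intro A hA B hB h
    by_contra hne
    exact rk_injOn G (Finset.mem_filter.mp hA).1 (Finset.mem_filter.mp hB).1 hne h
  have h1 : (π.filter (fun C => rk G π C < r)).card
      = ((π.filter (fun C => rk G π C < r)).image (rk G π)).card :=
    (Finset.card_image_of_injOn hinj).symm
  have h2 : (π.filter (fun C => rk G π C < r)).image (rk G π)
      = (π.image (rk G π)).filter (fun m => m < r) := by
    ext m
    simp only [Finset.mem_image, Finset.mem_filter]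
    constructor
    · rintro ⟨C, ⟨hCπ, hlt⟩, rfl⟩
      exact ⟨⟨C, hCπ, rfl⟩, hlt⟩
    · rintro ⟨⟨C, hCπ, rfl⟩, hlt⟩
      exact ⟨C, ⟨hCπ, hlt⟩, rfl⟩
  have h3 : (Finset.range π.card).filter (fun m => m < r) = Finset.range (min π.card r) := by
    ext m
    simp only [Finset.mem_filter, Finset.mem_range]
    omega
  rw [h1, h2, image_rk, h3, Finset.card_range]

lemma sum_cv (G : kWVG n k) (hp : ∀ j, G.p j = 1) (π : Finset (Finset (Fin n))) :
    (∑ C ∈ π, coalitionValue G π C) = (min π.card k : ℕ) := by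
  have : (∑ C ∈ π, coalitionValue G π C)
      = ∑ C ∈ π, (if rk G π C < k then (1:ℚ) else 0) := by
    apply Finset.sum_congr rfl
    intro C _
    exact cv_eq G hp π C
  rw [this, Finset.sum_boole, card_rk_lt]

lemma cv_le_one (G : kWVG n k) (hp : ∀ j, G.p j = 1) (π : Finset (Finset (Fin n)))
    (C : Finset (Fin n)) : coalitionValue G π C ≤ 1 := by
  rw [cv_eq G hp]
  split_ifs <;> norm_num

/-! ### always-winning ↔ no packing -/

lemma winIff (G : kWVG n k) {S C : Finset (Fin n)} {m : ℕ} (hC : C.Nonempty) (hCS : C ⊆ S) :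
    (∀ π, IsPartition π S → C ∈ π → (π.filter (fun C' => G.pref C' C)).card < m)
      ↔ ¬ Pack G (S \ C) C m := by
  constructor
  · intro hwin hpack
    obtain ⟨F, hcard, hsub, hpref, hdisj⟩ := hpack
    rcases Nat.eq_zero_or_pos m with rfl | hm
    · obtain ⟨π₀, hπ₀, hmem⟩ := exists_partition_mem hC hCS
      exact Nat.not_lt_zero _ (hwin π₀ hπ₀ hmem)
    · have hFne : ∀ B ∈ F, B.Nonempty := fun B hB => beater_nonempty G hC (hpref B hB)
      -- build a partition π' of S \ C extending F
      have key : ∃ π', IsPartition π' (S \ C) ∧ F ⊆ π' := by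
        rcases ((S \ C) \ F.sup id).eq_empty_or_nonempty with hrest | hrest
        · refine ⟨F, ⟨hFne, hdisj, ?_⟩, Finset.Subset.refl F⟩
          apply Finset.Subset.antisymm
          · exact Finset.sup_le fun B hB => hsub B hB
          · intro x hx
            by_contra hxF
            have : x ∈ (S \ C) \ F.sup id := Finset.mem_sdiff.mpr ⟨hx, hxF⟩
            rw [hrest] at this
            exact absurd this (Finset.notMem_empty x)
        · obtain ⟨hpart, _⟩ := partition_with_rest hsub hFne hdisj hrest
          exact ⟨_, hpart, Finset.subset_insert _ _⟩
      obtain ⟨π', hπ', hFπ'⟩ := key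
      obtain ⟨hpart, hCnot⟩ := isPartition_insert hπ' hC hCS
      have hrk := hwin _ hpart (Finset.mem_insert_self C π')
      have hsubf : F ⊆ (insert C π').filter (fun C' => G.pref C' C) := by
        intro B hB
        exact Finset.mem_filter.mpr
          ⟨Finset.mem_insert_of_mem (hFπ' hB), hpref B hB⟩
      have := Finset.card_le_card hsubf
      omega
  · intro hnp π hπ hmem
    by_contra hge
    push_neg at hge
    obtain ⟨F, hFsub, hFcard⟩ := Finset.exists_subset_card_eq
      (s := π.filter (fun C' => G.pref C' C)) (n := m) hge
    apply hnp
    refine ⟨F, hFcard, ?_, ?_, ?_⟩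
    · intro B hB
      obtain ⟨hBπ, hBC⟩ := Finset.mem_filter.mp (hFsub hB)
      have hBne : B ≠ C := fun he => G.pref_irrefl C (he ▸ hBC)
      have hBS : B ⊆ S := hπ.2.2 ▸ Finset.le_sup (f := id) hBπ
      exact Finset.subset_sdiff.mpr ⟨hBS, hπ.2.1 B hBπ C hmem hBne⟩
    · exact fun B hB => (Finset.mem_filter.mp (hFsub hB)).2
    · exact fun B₁ h₁ B₂ h₂ hne =>
        hπ.2.1 B₁ (Finset.mem_filter.mp (hFsub h₁)).1 B₂ (Finset.mem_filter.mp (hFsub h₂)).1 hne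

lemma SWin_iff (G : kWVG n k) (S : Finset (Fin n)) (m : ℕ) (i : Fin n) :
    SWin G S m i ↔ i ∈ S ∧ ¬ Pack G (S \ {i}) {i} m := by
  unfold SWin
  constructor
  · rintro ⟨hiS, h⟩
    exact ⟨hiS, (winIff G (Finset.singleton_nonempty i)
      (Finset.singleton_subset_iff.mpr hiS)).mp h⟩
  · rintro ⟨hiS, h⟩
    exact ⟨hiS, (winIff G (Finset.singleton_nonempty i)
      (Finset.singleton_subset_iff.mpr hiS)).mpr h⟩

lemma IsSCD_iff (G : kWVG n k) (hp : ∀ j, G.p j = 1) (x : Fin n → ℚ)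
    (hx : ∀ i, 0 ≤ x i) (C : Finset (Fin n)) :
    IsSCD G x C ↔ C.Nonempty ∧ (∑ i ∈ C, x i) < 1 ∧ ¬ Pack G (Finset.univ \ C) C k := by
  constructor
  · rintro ⟨hCne, hdev⟩
    have hCS : C ⊆ Finset.univ := Finset.subset_univ C
    obtain ⟨π₀, hπ₀, hmem₀⟩ := exists_partition_mem hCne hCS
    have hlt : (∑ i ∈ C, x i) < 1 :=
      lt_of_lt_of_le (hdev π₀ hπ₀ hmem₀) (cv_le_one G hp π₀ C)
    refine ⟨hCne, hlt, (winIff G hCne hCS).mp ?_⟩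
    intro π hπ hmem
    by_contra hge
    have hzero : coalitionValue G π C = 0 := by
      rw [cv_eq G hp]
      exact if_neg hge
    have := hdev π hπ hmem
    rw [hzero] at this
    exact absurd this (not_lt.mpr (Finset.sum_nonneg fun i _ => hx i))
  · rintro ⟨hCne, hlt, hnp⟩
    refine ⟨hCne, fun π hπ hmem => ?_⟩
    have hrk : rk G π C < k := (winIff G hCne (Finset.subset_univ C)).mpr hnp π hπ hmem
    rw [cv_eq G hp, if_pos hrk]
    exact hlt

end KWVGAux
namespace KWVGAux

variable {n k : ℕ}

/-! ### The reduction sequence -/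

noncomputable def St (G : kWVG n k) (t : ℕ) : Finset (Fin n) × ℕ :=
  (reduceStep G)^[t] (Finset.univ, k)

noncomputable def Wt (G : kWVG n k) (t : ℕ) : Finset (Fin n) :=
  (St G t).1.filter (fun i => SWin G (St G t).1 (St G t).2 i)

lemma St_zero (G : kWVG n k) : St G 0 = (Finset.univ, k) := rfl

lemma St_succ (G : kWVG n k) (t : ℕ) : St G (t + 1) = reduceStep G (St G t) :=
  Function.iterate_succ_apply' _ _ _

lemma St_succ_fst (G : kWVG n k) (t : ℕ) : (St G (t + 1)).1 = (St G t).1 \ Wt G t := by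
  rw [St_succ]; rfl

lemma St_succ_snd (G : kWVG n k) (t : ℕ) : (St G (t + 1)).2 = (St G t).2 - (Wt G t).card := by
  rw [St_succ]; rfl

lemma Wt_subset (G : kWVG n k) (t : ℕ) : Wt G t ⊆ (St G t).1 := Finset.filter_subset _ _

lemma SWin_not_zero (G : kWVG n k) {S : Finset (Fin n)} {i : Fin n}
    (h : SWin G S 0 i) : False := by
  rw [SWin_iff] at h
  exact h.2 (Pack.zero G _ _)

lemma card_Wt_le (G : kWVG n k) (t : ℕ) : (Wt G t).card ≤ (St G t).2 := by
  rcases (Wt G t).eq_empty_or_nonempty with he | hne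
  · simp [he]
  · obtain ⟨v, hvW, hv⟩ := (Wt G t).exists_min_image (fun u => keyN G {u}) hne
    have hvS : SWin G (St G t).1 (St G t).2 v := (Finset.mem_filter.mp hvW).2
    have hnp : ¬ Pack G ((St G t).1 \ {v}) {v} (St G t).2 := ((SWin_iff G _ _ _).mp hvS).2
    have hpack : Pack G ((St G t).1 \ {v}) {v} ((Wt G t).card - 1) := by
      refine ⟨((Wt G t).erase v).image (fun u => ({u} : Finset (Fin n))), ?_, ?_, ?_, ?_⟩
      · rw [Finset.card_image_of_injective _ Finset.singleton_injective,
          Finset.card_erase_of_mem hvW]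
      · intro B hB
        obtain ⟨u, hu, rfl⟩ := Finset.mem_image.mp hB
        obtain ⟨hune, huW⟩ := Finset.mem_erase.mp hu
        have huS : u ∈ (St G t).1 := Wt_subset G t huW
        intro x hx
        rw [Finset.mem_singleton] at hx
        subst hx
        exact Finset.mem_sdiff.mpr ⟨huS, by simpa using hune⟩
      · intro B hB
        obtain ⟨u, hu, rfl⟩ := Finset.mem_image.mp hB
        obtain ⟨hune, huW⟩ := Finset.mem_erase.mp hu
        have hne2 : ({u} : Finset (Fin n)) ≠ {v} := by
          simpa using hune
        rcases G.pref_total {u} {v} hne2 with h | h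
        · exact h
        · exact absurd (hv u huW) (by have := keyN_lt_of_pref G h; omega)
      · intro B₁ h₁ B₂ h₂ hne12
        obtain ⟨u₁, _, rfl⟩ := Finset.mem_image.mp h₁
        obtain ⟨u₂, _, rfl⟩ := Finset.mem_image.mp h₂
        have : u₁ ≠ u₂ := fun he => hne12 (by rw [he])
        exact Finset.disjoint_singleton.mpr this
    by_contra hgt
    push_neg at hgt
    exact hnp (Pack.mono G (by omega) hpack)

lemma St_inv (G : kWVG n k) (t : ℕ) :
    (St G t).2 + (Finset.univ \ (St G t).1).card = k := by
  induction t with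
  | zero => simp [St_zero]
  | succ t ih =>
    have hWle := card_Wt_le G t
    have hWsub := Wt_subset G t
    rw [St_succ_fst, St_succ_snd]
    have hsd : Finset.univ \ ((St G t).1 \ Wt G t)
        = (Finset.univ \ (St G t).1) ∪ Wt G t := by
      ext x
      simp only [Finset.mem_sdiff, Finset.mem_union, Finset.mem_univ, true_and]
      constructor
      · intro h
        by_cases hx : x ∈ (St G t).1
        · right
          by_contra hw
          exact h ⟨hx, hw⟩
        · left; exact hx
      · rintro (h | h)
        · exact fun hc => h hc.1
        · exact fun hc => hc.2 h
    have hdisj : Disjoint (Finset.univ \ (St G t).1) (Wt G t) :=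
      Finset.disjoint_left.mpr fun a ha haW =>
        (Finset.mem_sdiff.mp ha).2 (hWsub haW)
    rw [hsd, Finset.card_union_of_disjoint hdisj]
    omega

lemma m_le_k (G : kWVG n k) (t : ℕ) : (St G t).2 ≤ k := by
  have := St_inv G t; omega

lemma S_mono (G : kWVG n k) {a b : ℕ} (h : a ≤ b) : (St G b).1 ⊆ (St G a).1 := by
  induction b with
  | zero => rw [Nat.le_zero.mp h]
  | succ b ih =>
    rcases Nat.lt_or_ge a (b+1) with hlt | hge
    · have := ih (by omega)
      rw [St_succ_fst]
      exact Finset.Subset.trans Finset.sdiff_subset this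
    · rw [Nat.le_antisymm h hge]

lemma fix_of_W_empty (G : kWVG n k) {t : ℕ} (h : Wt G t = ∅) : St G (t + 1) = St G t := by
  rw [St_succ]
  unfold reduceStep
  rw [Wt] at h
  rw [h]
  simp

lemma St_const (G : kWVG n k) {t : ℕ} (h : Wt G t = ∅) (d : ℕ) : St G (t + d) = St G t := by
  induction d with
  | zero => rfl
  | succ d ih =>
    have hw : Wt G (t + d) = ∅ := by
      rw [Wt, ih]
      rw [Wt] at h
      exact h
    have h2 : St G (t + d + 1) = St G (t + d) := fix_of_W_empty G hw
    show St G ((t + d) + 1) = St G t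
    rw [h2, ih]

lemma exists_fix (G : kWVG n k) : ∃ t₀, t₀ ≤ k ∧ Wt G t₀ = ∅ := by
  by_contra hc
  push_neg at hc
  have claim2 : ∀ t, t ≤ k + 1 → (St G t).2 + t ≤ k := by
    intro t
    induction t with
    | zero => intro _; simp [St_zero]
    | succ t ih =>
      intro ht
      have h1 := ih (by omega)
      have h2 : Wt G t ≠ ∅ := Finset.nonempty_iff_ne_empty.mp (hc t (by omega))
      have h3 : 1 ≤ (Wt G t).card := Finset.card_pos.mpr (Finset.nonempty_iff_ne_empty.mpr h2)
      have h4 := card_Wt_le G t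
      rw [St_succ_snd]
      omega
  have h5 : (St G k).2 = 0 := by
    have := claim2 k (by omega)
    omega
  have h6 : Wt G k = ∅ := by
    apply Finset.filter_eq_empty_iff.mpr
    intro i _ hsw
    rw [h5] at hsw
    exact SWin_not_zero G hsw
  exact (Finset.nonempty_iff_ne_empty.mp (hc k (le_refl k))) h6

lemma St_k_fix (G : kWVG n k) : Wt G k = ∅ ∧ ∀ t, k ≤ t → St G t = St G k := by
  obtain ⟨t₀, ht₀, hW⟩ := exists_fix G
  have hconst : ∀ t, t₀ ≤ t → St G t = St G t₀ := by
    intro t ht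
    have := St_const G hW (t - t₀)
    rwa [Nat.add_sub_cancel' ht] at this
  have hk : St G k = St G t₀ := hconst k ht₀
  have hWk : Wt G k = ∅ := by
    rw [Wt, hk]
    rw [Wt] at hW
    exact hW
  exact ⟨hWk, fun t ht => by rw [hconst t (le_trans ht₀ ht), hk]⟩

lemma not_SWin_fin (G : kWVG n k) (i : Fin n) :
    ¬ SWin G (St G k).1 (St G k).2 i := by
  intro h
  have hi : i ∈ Wt G k := Finset.mem_filter.mpr ⟨h.1, h⟩
  rw [(St_k_fix G).1] at hi
  exact absurd hi (Finset.notMem_empty i)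

lemma ISW_iff (G : kWVG n k) (i : Fin n) : IsISW G i ↔ i ∉ (St G k).1 := by
  constructor
  · rintro ⟨t, hsw⟩
    have hsw' : SWin G (St G t).1 (St G t).2 i := hsw
    have hiW : i ∈ Wt G t := Finset.mem_filter.mpr ⟨hsw'.1, hsw'⟩
    rcases Nat.lt_or_ge t k with hlt | hge
    · intro hik
      have h1 : i ∈ (St G (t+1)).1 := S_mono G (by omega) hik
      rw [St_succ_fst] at h1
      exact (Finset.mem_sdiff.mp h1).2 hiW
    · exfalso
      have hEq := (St_k_fix G).2 t hge
      rw [Wt, hEq] at hiW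
      have hWk : Wt G k = ∅ := (St_k_fix G).1
      rw [Wt] at hWk
      rw [hWk] at hiW
      exact absurd hiW (Finset.notMem_empty i)
  · intro hik
    have hex : ∃ t, i ∉ (St G t).1 := ⟨k, hik⟩
    have hspec : i ∉ (St G (Nat.find hex)).1 := Nat.find_spec hex
    have hpos : Nat.find hex ≠ 0 := by
      intro h
      rw [h] at hspec
      exact hspec (by rw [St_zero]; exact Finset.mem_univ i)
    obtain ⟨s, hs_eq⟩ := Nat.exists_eq_succ_of_ne_zero hpos
    have hs : i ∈ (St G s).1 := by
      by_contra h
      exact Nat.find_min hex (by omega) h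
    have h1 : i ∉ (St G (s+1)).1 := by
      have he : s + 1 = Nat.find hex := hs_eq.symm
      rw [he]
      exact hspec
    rw [St_succ_fst] at h1
    have hiW : i ∈ Wt G s := by
      by_contra hw
      exact h1 (Finset.mem_sdiff.mpr ⟨hs, hw⟩)
    exact ⟨s, (Finset.mem_filter.mp hiW).2⟩

lemma ISW_filter_eq (G : kWVG n k) :
    Finset.univ.filter (fun i => IsISW G i) = Finset.univ \ (St G k).1 := by
  ext i
  simp only [Finset.mem_filter, Finset.mem_univ, true_and, Finset.mem_sdiff]
  exact ISW_iff G i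

lemma card_ISW (G : kWVG n k) :
    (Finset.univ.filter (fun i => IsISW G i)).card = k - (St G k).2 := by
  rw [ISW_filter_eq]
  have := St_inv G k
  omega

/-! ### Lifting always-winning sets from reduced games to the full game -/

lemma liftPack (G : kWVG n k) (t : ℕ) {C : Finset (Fin n)} (hCsub : C ⊆ (St G t).1)
    (hnp : ¬ Pack G ((St G t).1 \ C) C (St G t).2) : ¬ Pack G (Finset.univ \ C) C k := by
  rintro ⟨F, hcard, hsub, hpref, hdisj⟩
  set S := (St G t).1 with hS
  set m := (St G t).2 with hm
  have hcard₂ : (F.filter (fun B => ¬ B ⊆ S)).card ≤ (Finset.univ \ S).card := by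
    have h1 : (F.filter (fun B => ¬ B ⊆ S)).card
        ≤ ∑ B ∈ F.filter (fun B => ¬ B ⊆ S), (B \ S).card := by
      have hh : ∀ B ∈ F.filter (fun B => ¬ B ⊆ S), 1 ≤ (B \ S).card := by
        intro B hB
        have : ¬ B ⊆ S := (Finset.mem_filter.mp hB).2
        exact Finset.card_pos.mpr (Finset.sdiff_nonempty.mpr this)
      calc (F.filter (fun B => ¬ B ⊆ S)).card = ∑ _B ∈ F.filter (fun B => ¬ B ⊆ S), 1 := by simp
        _ ≤ _ := Finset.sum_le_sum hh
    have h2 : ∑ B ∈ F.filter (fun B => ¬ B ⊆ S), (B \ S).card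
        = ((F.filter (fun B => ¬ B ⊆ S)).biUnion (fun B => B \ S)).card := by
      rw [Finset.card_biUnion]
      intro B₁ h₁ B₂ h₂ hne
      exact Finset.disjoint_of_subset_left Finset.sdiff_subset
        (Finset.disjoint_of_subset_right Finset.sdiff_subset
          (hdisj B₁ (Finset.mem_filter.mp h₁).1 B₂ (Finset.mem_filter.mp h₂).1 hne))
    have h3 : (F.filter (fun B => ¬ B ⊆ S)).biUnion (fun B => B \ S) ⊆ Finset.univ \ S := by
      intro x hx
      obtain ⟨B, _, hxB⟩ := Finset.mem_biUnion.mp hx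
      exact Finset.mem_sdiff.mpr ⟨Finset.mem_univ x, (Finset.mem_sdiff.mp hxB).2⟩
    calc (F.filter (fun B => ¬ B ⊆ S)).card ≤ _ := h1
      _ = _ := h2
      _ ≤ (Finset.univ \ S).card := Finset.card_le_card h3
  have hsplit : (F.filter (fun B => B ⊆ S)).card + (F.filter (fun B => ¬ B ⊆ S)).card
      = F.card := Finset.card_filter_add_card_filter_not (p := fun B => B ⊆ S)
  have hks : m + (Finset.univ \ S).card = k := St_inv G t
  have hcard₁ : m ≤ (F.filter (fun B => B ⊆ S)).card := by
    clear_value S m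
    omega
  apply hnp
  apply Pack.mono G hcard₁
  refine ⟨F.filter (fun B => B ⊆ S), rfl, ?_, ?_, ?_⟩
  · intro B hB
    have hBS : B ⊆ S := (Finset.mem_filter.mp hB).2
    have hBU : B ⊆ Finset.univ \ C := hsub B (Finset.mem_filter.mp hB).1
    have hBC : Disjoint B C := (Finset.subset_sdiff.mp hBU).2
    exact Finset.subset_sdiff.mpr ⟨hBS, hBC⟩
  · exact fun B hB => hpref B (Finset.mem_filter.mp hB).1
  · exact fun B₁ h₁ B₂ h₂ hne =>
      hdisj B₁ (Finset.mem_filter.mp h₁).1 B₂ (Finset.mem_filter.mp h₂).1 hne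

lemma ISW_AW (G : kWVG n k) {i : Fin n} (h : IsISW G i) :
    ¬ Pack G (Finset.univ \ {i}) {i} k := by
  obtain ⟨t, hsw⟩ := h
  have hsw' : SWin G (St G t).1 (St G t).2 i := hsw
  obtain ⟨hiS, hnp⟩ := (SWin_iff G _ _ _).mp hsw'
  exact liftPack G t (Finset.singleton_subset_iff.mpr hiS) hnp

end KWVGAux
namespace KWVGAux

variable {n k : ℕ}

lemma sum_partition {π : Finset (Finset (Fin n))} {S : Finset (Fin n)}
    (h : IsPartition π S) (f : Fin n → ℚ) :
    ∑ i ∈ S, f i = ∑ C ∈ π, ∑ i ∈ C, f i := by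
  have hsup : S = π.biUnion id := by
    rw [← h.2.2, Finset.sup_eq_biUnion]
  rw [hsup]
  apply Finset.sum_biUnion
  intro A hA B hB hne
  exact h.2.1 A (by simpa using hA) B (by simpa using hB) hne

lemma outcome_total (G : kWVG n k) (hp : ∀ j, G.p j = 1) (ω : Outcome G) :
    ∑ i, ω.x i = (min ω.part.card k : ℕ) := by
  rw [sum_partition ω.ispart ω.x]
  rw [Finset.sum_congr rfl (fun C hC => ω.x_budget C hC)]
  exact sum_cv G hp ω.part

/-- there cannot be `k+1` pairwise disjoint nonempty always-winning coalitions -/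
lemma family_bound (G : kWVG n k) (F : Finset (Finset (Fin n)))
    (hne : ∀ B ∈ F, B.Nonempty)
    (hdisj : ∀ B₁ ∈ F, ∀ B₂ ∈ F, B₁ ≠ B₂ → Disjoint B₁ B₂)
    (hAW : ∀ B ∈ F, ¬ Pack G (Finset.univ \ B) B k)
    (hcard : k + 1 ≤ F.card) : False := by
  have hFne : F.Nonempty := Finset.card_pos.mp (by omega)
  obtain ⟨Z, hZF, hZ⟩ := exists_pref_min G F hFne
  apply hAW Z hZF
  apply Pack.mono G (show k ≤ (F.erase Z).card by rw [Finset.card_erase_of_mem hZF]; omega)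
  refine ⟨F.erase Z, rfl, ?_, ?_, ?_⟩
  · intro B hB
    obtain ⟨hBne, hBF⟩ := Finset.mem_erase.mp hB
    exact Finset.subset_sdiff.mpr ⟨Finset.subset_univ B, hdisj B hBF Z hZF hBne⟩
  · intro B hB
    obtain ⟨hBne, hBF⟩ := Finset.mem_erase.mp hB
    exact hZ B hBF hBne
  · intro B₁ h₁ B₂ h₂ hne12
    exact hdisj B₁ (Finset.mem_erase.mp h₁).2 B₂ (Finset.mem_erase.mp h₂).2 hne12

lemma backward (G : kWVG n k) (hp : ∀ j, G.p j = 1) (hfin : (St G k).2 = 0) :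
    ∃ ω : Outcome G, SCDStable G ω := by
  set π : Finset (Finset (Fin n)) := Finset.univ.image (fun i => ({i} : Finset (Fin n)))
    with hπdef
  have hmemπ : ∀ i : Fin n, ({i} : Finset (Fin n)) ∈ π := fun i =>
    Finset.mem_image.mpr ⟨i, Finset.mem_univ i, rfl⟩
  have hpart : IsPartition π Finset.univ := by
    refine ⟨?_, ?_, ?_⟩
    · intro C hC
      obtain ⟨i, _, rfl⟩ := Finset.mem_image.mp hC
      exact Finset.singleton_nonempty i
    · intro A hA B hB hAB
      obtain ⟨i, _, rfl⟩ := Finset.mem_image.mp hA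
      obtain ⟨j, _, rfl⟩ := Finset.mem_image.mp hB
      exact Finset.disjoint_singleton.mpr (fun he => hAB (by rw [he]))
    · apply Finset.Subset.antisymm (Finset.subset_univ _)
      intro x _
      exact Finset.mem_sup.mpr ⟨{x}, hmemπ x, Finset.mem_singleton_self x⟩
  set xv : Fin n → ℚ := fun i => if IsISW G i then 1 else 0 with hxdef
  have hxnn : ∀ i, 0 ≤ xv i := by
    intro i
    rw [hxdef]
    dsimp only
    split_ifs <;> norm_num
  have hISWcard : (Finset.univ.filter (fun i => IsISW G i)).card = k := by
    rw [card_ISW, hfin]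
    omega
  -- ISW singletons win
  have hwin : ∀ i : Fin n, IsISW G i → rk G π {i} < k := by
    intro i hi
    exact (winIff G (Finset.singleton_nonempty i) (Finset.subset_univ _)).mpr
      (ISW_AW G hi) π hpart (hmemπ i)
  -- non-ISW singletons lose
  have hlose : ∀ j : Fin n, ¬ IsISW G j → ¬ (rk G π {j} < k) := by
    intro j hj hrk
    set A : Finset (Finset (Fin n)) :=
      insert ({j} : Finset (Fin n))
        ((Finset.univ.filter (fun i => IsISW G i)).image (fun i => ({i} : Finset (Fin n))))
      with hAdef
    have hAsub : A ⊆ π := by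
      intro B hB
      rcases Finset.mem_insert.mp hB with hB | hB
      · rw [hB]; exact hmemπ j
      · obtain ⟨i, _, rfl⟩ := Finset.mem_image.mp hB
        exact hmemπ i
    have hjnot : ({j} : Finset (Fin n))
        ∉ (Finset.univ.filter (fun i => IsISW G i)).image (fun i => ({i} : Finset (Fin n))) := by
      intro hc
      obtain ⟨i, hi, he⟩ := Finset.mem_image.mp hc
      have : i = j := Finset.singleton_injective he
      rw [this] at hi
      exact hj (Finset.mem_filter.mp hi).2
    have hAcard : A.card = k + 1 := by
      rw [hAdef, Finset.card_insert_of_notMem hjnot,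
        Finset.card_image_of_injective _ Finset.singleton_injective, hISWcard]
    have hArk : ∀ B ∈ A, rk G π B < k := by
      intro B hB
      rcases Finset.mem_insert.mp hB with hB | hB
      · rw [hB]; exact hrk
      · obtain ⟨i, hi, rfl⟩ := Finset.mem_image.mp hB
        exact hwin i (Finset.mem_filter.mp hi).2
    have himg : A.image (rk G π) ⊆ Finset.range k := by
      intro m hm
      obtain ⟨B, hB, rfl⟩ := Finset.mem_image.mp hm
      exact Finset.mem_range.mpr (hArk B hB)
    have hinj : (A.image (rk G π)).card = k + 1 := by
      rw [Finset.card_image_of_injOn, hAcard]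
      intro B₁ h₁ B₂ h₂ he
      by_contra hne
      exact rk_injOn G (hAsub h₁) (hAsub h₂) hne he
    have := Finset.card_le_card himg
    rw [hinj, Finset.card_range] at this
    omega
  have hbudget : ∀ C ∈ π, ∑ i ∈ C, xv i = coalitionValue G π C := by
    intro C hC
    obtain ⟨j, _, rfl⟩ := Finset.mem_image.mp hC
    rw [Finset.sum_singleton, cv_eq G hp, hxdef]
    dsimp only
    by_cases hj : IsISW G j
    · rw [if_pos hj, if_pos (hwin j hj)]
    · rw [if_neg hj, if_neg (hlose j hj)]
  refine ⟨⟨π, hpart, xv, hxnn, hbudget⟩, ?_⟩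
  rintro ⟨C, hSCD⟩
  rw [IsSCD_iff G hp xv hxnn] at hSCD
  obtain ⟨hCne, hlt, hAW⟩ := hSCD
  have hCdisj : ∀ i ∈ C, ¬ IsISW G i := by
    intro i hiC hisw
    have h1 : xv i ≤ ∑ i ∈ C, xv i := Finset.single_le_sum (fun j _ => hxnn j) hiC
    rw [hxdef] at h1
    dsimp only at h1
    rw [if_pos hisw] at h1
    exact absurd (lt_of_le_of_lt h1 hlt) (lt_irrefl 1)
  -- the k ISW singletons together with C are k+1 disjoint AW sets
  apply family_bound G
    (insert C ((Finset.univ.filter (fun i => IsISW G i)).image (fun i => ({i} : Finset (Fin n)))))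
  · intro B hB
    rcases Finset.mem_insert.mp hB with hB | hB
    · rw [hB]; exact hCne
    · obtain ⟨i, _, rfl⟩ := Finset.mem_image.mp hB
      exact Finset.singleton_nonempty i
  · intro B₁ h₁ B₂ h₂ hne12
    have hsing : ∀ B ∈ (Finset.univ.filter (fun i => IsISW G i)).image
        (fun i => ({i} : Finset (Fin n))), Disjoint C B := by
      intro B hB
      obtain ⟨i, hi, rfl⟩ := Finset.mem_image.mp hB
      rw [Finset.disjoint_singleton_right]
      exact fun hc => hCdisj i hc (Finset.mem_filter.mp hi).2
    rcases Finset.mem_insert.mp h₁ with h₁ | h₁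
    · rcases Finset.mem_insert.mp h₂ with h₂ | h₂
      · exact absurd (h₁.trans h₂.symm) hne12
      · rw [h₁]; exact hsing B₂ h₂
    · rcases Finset.mem_insert.mp h₂ with h₂ | h₂
      · rw [h₂]; exact (hsing B₁ h₁).symm
      · obtain ⟨i, _, rfl⟩ := Finset.mem_image.mp h₁
        obtain ⟨i', _, rfl⟩ := Finset.mem_image.mp h₂
        exact Finset.disjoint_singleton.mpr (fun he => hne12 (by rw [he]))
  · intro B hB
    rcases Finset.mem_insert.mp hB with hB | hB
    · rw [hB]; exact hAW
    · obtain ⟨i, hi, rfl⟩ := Finset.mem_image.mp hB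
      exact ISW_AW G (Finset.mem_filter.mp hi).2
  · have hCnot : C ∉ (Finset.univ.filter (fun i => IsISW G i)).image
        (fun i => ({i} : Finset (Fin n))) := by
      intro hc
      obtain ⟨i, hi, he⟩ := Finset.mem_image.mp hc
      apply hCdisj i
      · rw [← he]; exact Finset.mem_singleton_self i
      · exact (Finset.mem_filter.mp hi).2
    rw [Finset.card_insert_of_notMem hCnot,
      Finset.card_image_of_injective _ Finset.singleton_injective, hISWcard]

end KWVGAux
namespace KWVGAux

variable {n k : ℕ}

/-- lump a disjoint family of `r+1` nonempty subsets of `T` into a partition of `T`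
with `r+1` pieces, each containing a member of the family -/
lemma lump_family {T : Finset (Fin n)} {F : Finset (Finset (Fin n))} {r : ℕ}
    (hcard : F.card = r + 1)
    (hsub : ∀ B ∈ F, B ⊆ T) (hne : ∀ B ∈ F, B.Nonempty)
    (hdisj : ∀ B₁ ∈ F, ∀ B₂ ∈ F, B₁ ≠ B₂ → Disjoint B₁ B₂) :
    ∃ σ, IsPartition σ T ∧ σ.card = r + 1 ∧ ∀ P ∈ σ, ∃ B ∈ F, B ⊆ P := by
  obtain ⟨F', hF'sub, hF'card⟩ := Finset.exists_subset_card_eq (s := F) (n := r) (by omega)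
  have hBex : (F \ F').Nonempty := by
    apply Finset.card_pos.mp
    rw [Finset.card_sdiff_of_subset hF'sub]
    omega
  obtain ⟨B₀, hB₀⟩ := hBex
  have hB₀F : B₀ ∈ F := (Finset.mem_sdiff.mp hB₀).1
  have hB₀F' : B₀ ∉ F' := (Finset.mem_sdiff.mp hB₀).2
  have hB₀REST : B₀ ⊆ T \ F'.sup id := by
    intro x hx
    refine Finset.mem_sdiff.mpr ⟨hsub B₀ hB₀F hx, ?_⟩
    intro hc
    obtain ⟨B, hBF', hxB⟩ := Finset.mem_sup.mp hc
    have hBne : B₀ ≠ B := fun he => hB₀F' (he ▸ hBF')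
    exact Finset.disjoint_left.mp (hdisj B₀ hB₀F B (hF'sub hBF') hBne) hx hxB
  have hrest : (T \ F'.sup id).Nonempty := by
    obtain ⟨x, hx⟩ := hne B₀ hB₀F
    exact ⟨x, hB₀REST hx⟩
  obtain ⟨hpart, hcard'⟩ := partition_with_rest (fun B hB => hsub B (hF'sub hB))
    (fun B hB => hne B (hF'sub hB))
    (fun B₁ h₁ B₂ h₂ h12 => hdisj B₁ (hF'sub h₁) B₂ (hF'sub h₂) h12) hrest
  refine ⟨insert (T \ F'.sup id) F', hpart, by rw [hcard', hF'card], ?_⟩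
  intro P hP
  rcases Finset.mem_insert.mp hP with hP | hP
  · exact ⟨B₀, hB₀F, hP ▸ hB₀REST⟩
  · exact ⟨P, hF'sub hP, Finset.Subset.refl P⟩

/-- Key combinatorial lemma: in an irreducible reduced game `(S, m)` with `m ≥ 1`,
for every player `i ∈ S` there is a partition of `S \ {i}` into `m` coalitions,
each of which is always-winning in the reduced game. -/
lemma crux (G : kWVG n k) {S : Finset (Fin n)} {m : ℕ} (hm : 1 ≤ m)
    (hirr : ∀ j ∈ S, Pack G (S \ {j}) {j} m) {i : Fin n} (hi : i ∈ S) :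
    ∃ σ, IsPartition σ (S \ {i}) ∧ σ.card = m ∧
      ∀ P ∈ σ, ¬ Pack G (S \ P) P m := by
  classical
  set T : Finset (Fin n) := S \ {i} with hT
  -- the family of "good" partitions
  set Good : Finset (Finset (Fin n)) → Prop :=
    fun σ => IsPartition σ T ∧ σ.card = m ∧ ∀ P ∈ σ, G.pref P {i} with hGood
  -- feasibility
  have hfeas : ∃ σ, Good σ := by
    obtain ⟨F, hFcard, hFsub, hFpref, hFdisj⟩ := hirr i hi
    have hFne : ∀ B ∈ F, B.Nonempty :=
      fun B hB => beater_nonempty G (Finset.singleton_nonempty i) (hFpref B hB)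
    obtain ⟨σ, hσpart, hσcard, hσmem⟩ := lump_family (T := T) (F := F) (r := m - 1)
      (by omega) hFsub hFne hFdisj
    refine ⟨σ, hσpart, by omega, ?_⟩
    intro P hP
    obtain ⟨B, hBF, hBP⟩ := hσmem P hP
    exact pref_superset G (hFpref B hBF) hBP
  -- the minimum key of a partition
  set f : Finset (Finset (Fin n)) → ℕ :=
    fun σ => if h : (σ.image (keyN G)).Nonempty then (σ.image (keyN G)).min' h else 0 with hf
  have fspec : ∀ σ : Finset (Finset (Fin n)), σ.Nonempty →
      ∃ P ∈ σ, f σ = keyN G P ∧ ∀ Q ∈ σ, f σ ≤ keyN G Q := by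
    intro σ hσ
    have himg : (σ.image (keyN G)).Nonempty := hσ.image _
    have hfval : f σ = (σ.image (keyN G)).min' himg := dif_pos himg
    obtain ⟨P, hPσ, hPval⟩ := Finset.mem_image.mp ((σ.image (keyN G)).min'_mem himg)
    refine ⟨P, hPσ, by rw [hfval, hPval], ?_⟩
    intro Q hQ
    rw [hfval]
    exact Finset.min'_le _ _ (Finset.mem_image.mpr ⟨Q, hQ, rfl⟩)
  -- choose a good partition maximizing f
  obtain ⟨σ₀, hσ₀⟩ := hfeas
  have h𝒫ne : (Finset.univ.filter Good).Nonempty :=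
    ⟨σ₀, Finset.mem_filter.mpr ⟨Finset.mem_univ _, hσ₀⟩⟩
  obtain ⟨σ, hσmem, hσmax⟩ := Finset.exists_max_image (Finset.univ.filter Good) f h𝒫ne
  obtain ⟨hσpart, hσcard, hσpref⟩ := (Finset.mem_filter.mp hσmem).2
  have hσne : σ.Nonempty := Finset.card_pos.mp (by omega)
  obtain ⟨P₀, hP₀σ, hfP₀, hP₀min⟩ := fspec σ hσne
  have hP₀least : ∀ Q ∈ σ, Q ≠ P₀ → G.pref Q P₀ := by
    intro Q hQ hne
    rcases G.pref_total Q P₀ hne with h | h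
    · exact h
    · have := keyN_lt_of_pref G h
      have := hP₀min Q hQ
      omega
  refine ⟨σ, hσpart, hσcard, ?_⟩
  intro P hPσ hpack
  obtain ⟨F, hFcard, hFsub, hFpref, hFdisj⟩ := hpack
  have hPsubT : P ⊆ T := hσpart.2.2 ▸ Finset.le_sup (f := id) hPσ
  have hPne : P.Nonempty := hσpart.1 P hPσ
  have hPprefi : G.pref P {i} := hσpref P hPσ
  have hFne : ∀ B ∈ F, B.Nonempty := fun B hB => beater_nonempty G hPne (hFpref B hB)
  -- at most one member of F contains i
  have hone : (F.filter (fun B => i ∈ B)).card ≤ 1 := by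
    apply Finset.card_le_one.mpr
    intro B₁ h₁ B₂ h₂
    by_contra hne12
    exact Finset.disjoint_left.mp
      (hFdisj B₁ (Finset.mem_filter.mp h₁).1 B₂ (Finset.mem_filter.mp h₂).1 hne12)
      (Finset.mem_filter.mp h₁).2 (Finset.mem_filter.mp h₂).2
  have hsplitF : (F.filter (fun B => i ∈ B)).card + (F.filter (fun B => ¬ i ∈ B)).card
      = F.card := Finset.card_filter_add_card_filter_not (p := fun B => i ∈ B)
  have hF'card : m - 1 ≤ (F.filter (fun B => ¬ i ∈ B)).card := by omega
  have hF'mem : ∀ B ∈ F.filter (fun B => ¬ i ∈ B),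
      B ⊆ T \ P ∧ G.pref B P ∧ B.Nonempty := by
    intro B hB
    obtain ⟨hBF, hBi⟩ := Finset.mem_filter.mp hB
    refine ⟨?_, hFpref B hBF, hFne B hBF⟩
    intro x hx
    have hxSP := hFsub B hBF hx
    have hxS := (Finset.mem_sdiff.mp hxSP).1
    have hxP := (Finset.mem_sdiff.mp hxSP).2
    have hxi : x ≠ i := fun he => hBi (he ▸ hx)
    exact Finset.mem_sdiff.mpr ⟨Finset.mem_sdiff.mpr ⟨hxS, by simpa using hxi⟩, hxP⟩
  -- construct an improved good partition, contradiction with maximality of f σ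
  have himpr : ∃ σ', Good σ' ∧ ∀ Q ∈ σ', G.pref Q P₀ := by
    by_cases hPP₀ : P = P₀
    · -- P is the least piece
      subst hPP₀
      obtain ⟨F'', hF''sub, hF''card⟩ := Finset.exists_subset_card_eq
        (s := F.filter (fun B => ¬ i ∈ B)) (n := m - 1) hF'card
      have hF''F : ∀ B ∈ F'', B ∈ F :=
        fun B hB => (Finset.mem_filter.mp (hF''sub hB)).1
      have hF''T : ∀ B ∈ F'', B ⊆ T :=
        fun B hB => Finset.Subset.trans (hF'mem B (hF''sub hB)).1 Finset.sdiff_subset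
      have hF''ne : ∀ B ∈ F'', B.Nonempty := fun B hB => (hF'mem B (hF''sub hB)).2.2
      have hF''disj : ∀ B₁ ∈ F'', ∀ B₂ ∈ F'', B₁ ≠ B₂ → Disjoint B₁ B₂ :=
        fun B₁ h₁ B₂ h₂ h12 => hFdisj B₁ (hF''F B₁ h₁) B₂ (hF''F B₂ h₂) h12
      set R : Finset (Fin n) := T \ F''.sup id with hR
      have hPR : P ⊆ R := by
        intro x hx
        refine Finset.mem_sdiff.mpr ⟨hPsubT hx, ?_⟩
        intro hc
        obtain ⟨B, hBF'', hxB⟩ := Finset.mem_sup.mp hc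
        exact (Finset.mem_sdiff.mp ((hF'mem B (hF''sub hBF'')).1 hxB)).2 hx
      -- find a point of R outside P
      have hη : ∃ η, η ∈ R ∧ η ∉ P := by
        have hBex : (F \ F'').Nonempty := by
          apply Finset.card_pos.mp
          rw [Finset.card_sdiff_of_subset (fun B hB => hF''F B hB)]
          omega
        obtain ⟨B₀, hB₀⟩ := hBex
        have hB₀F : B₀ ∈ F := (Finset.mem_sdiff.mp hB₀).1
        have hB₀F'' : B₀ ∉ F'' := (Finset.mem_sdiff.mp hB₀).2
        have hB₀ni : B₀ ≠ {i} := by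
          intro he
          have : G.pref {i} P := he ▸ hFpref B₀ hB₀F
          exact pref_asymm G hPprefi this
        have hηex : ∃ η ∈ B₀, η ≠ i := by
          by_contra hc
          push_neg at hc
          have hsub1 : B₀ ⊆ {i} := fun x hx => Finset.mem_singleton.mpr (hc x hx)
          obtain ⟨y, hy⟩ := hFne B₀ hB₀F
          have hyi : y = i := Finset.mem_singleton.mp (hsub1 hy)
          apply hB₀ni
          apply Finset.Subset.antisymm hsub1
          intro z hz
          rw [Finset.mem_singleton] at hz
          rw [hz, ← hyi]
          exact hy
        obtain ⟨η, hηB₀, hηi⟩ := hηex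
        have hηSP := hFsub B₀ hB₀F hηB₀
        refine ⟨η, Finset.mem_sdiff.mpr ⟨?_, ?_⟩, (Finset.mem_sdiff.mp hηSP).2⟩
        · exact Finset.mem_sdiff.mpr ⟨(Finset.mem_sdiff.mp hηSP).1, by simpa using hηi⟩
        · intro hc
          obtain ⟨B, hBF'', hηB⟩ := Finset.mem_sup.mp hc
          have hBne : B₀ ≠ B := fun he => hB₀F'' (he ▸ hBF'')
          exact Finset.disjoint_left.mp (hFdisj B₀ hB₀F B (hF''F B hBF'') hBne) hηB₀ hηB
      obtain ⟨η, hηR, hηP⟩ := hη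
      have hRrest : R.Nonempty := ⟨η, hηR⟩
      obtain ⟨hpart', hcard'⟩ := partition_with_rest hF''T hF''ne hF''disj hRrest
      have hPltR : (∑ x ∈ P, G.w x) < ∑ x ∈ R, G.w x :=
        wsum_lt_of_ssubset G (Finset.ssubset_iff_of_subset hPR |>.mpr ⟨η, hηR, hηP⟩)
      have hprefRP : G.pref R P := G.pref_weight R P hPltR
      have hprefRi : G.pref R {i} := by
        apply G.pref_weight
        exact lt_of_le_of_lt (pref_wle G hPprefi) hPltR
      refine ⟨insert R F'', ⟨hpart', by rw [hcard', hF''card]; omega, ?_⟩, ?_⟩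
      · intro Q hQ
        rcases Finset.mem_insert.mp hQ with hQ | hQ
        · rw [hQ]; exact hprefRi
        · exact G.pref_trans Q P {i} (hFpref Q (hF''F Q hQ)) hPprefi
      · intro Q hQ
        rcases Finset.mem_insert.mp hQ with hQ | hQ
        · rw [hQ]; exact hprefRP
        · exact hFpref Q (hF''F Q hQ)
    · -- P is not the least piece : m ≥ 2
      have hm2 : 2 ≤ m := by
        by_contra hc
        have hm1 : m = 1 := by omega
        have : σ.card = 1 := by rw [hσcard, hm1]
        obtain ⟨Q, hQ⟩ := Finset.card_eq_one.mp this
        rw [hQ] at hPσ hP₀σ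
        rw [Finset.mem_singleton] at hPσ hP₀σ
        exact hPP₀ (hPσ.trans hP₀σ.symm)
      obtain ⟨F₄, hF₄sub, hF₄card⟩ := Finset.exists_subset_card_eq
        (s := F.filter (fun B => ¬ i ∈ B)) (n := m - 1) hF'card
      have hF₄F : ∀ B ∈ F₄, B ∈ F :=
        fun B hB => (Finset.mem_filter.mp (hF₄sub hB)).1
      obtain ⟨σ'', hσ''part, hσ''card, hσ''mem⟩ := lump_family (T := T \ P) (F := F₄)
        (r := m - 2) (by omega)
        (fun B hB => (hF'mem B (hF₄sub hB)).1)
        (fun B hB => (hF'mem B (hF₄sub hB)).2.2)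
        (fun B₁ h₁ B₂ h₂ h12 => hFdisj B₁ (hF₄F B₁ h₁) B₂ (hF₄F B₂ h₂) h12)
      obtain ⟨hpart', hPnot⟩ := isPartition_insert hσ''part hPne hPsubT
      have hprefQ : ∀ Q ∈ σ'', G.pref Q P := by
        intro Q hQ
        obtain ⟨B, hBF₄, hBQ⟩ := hσ''mem Q hQ
        exact pref_superset G (hFpref B (hF₄F B hBF₄)) hBQ
      have hprefPP₀ : G.pref P P₀ := hP₀least P hPσ hPP₀
      refine ⟨insert P σ'', ⟨hpart', ?_, ?_⟩, ?_⟩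
      · rw [Finset.card_insert_of_notMem hPnot, hσ''card]
        omega
      · intro Q hQ
        rcases Finset.mem_insert.mp hQ with hQ | hQ
        · rw [hQ]; exact hPprefi
        · exact G.pref_trans Q P {i} (hprefQ Q hQ) hPprefi
      · intro Q hQ
        rcases Finset.mem_insert.mp hQ with hQ | hQ
        · rw [hQ]; exact hprefPP₀
        · exact G.pref_trans Q P P₀ (hprefQ Q hQ) hprefPP₀
  obtain ⟨σ', hσ'good, hσ'beats⟩ := himpr
  have hσ'ne : σ'.Nonempty := Finset.card_pos.mp (by rw [hσ'good.2.1]; omega)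
  obtain ⟨P', hP'σ', hfP', _⟩ := fspec σ' hσ'ne
  have hgt : f σ < f σ' := by
    rw [hfP₀, hfP']
    exact keyN_lt_of_pref G (hσ'beats P' hP'σ')
  have hle : f σ' ≤ f σ :=
    hσmax σ' (Finset.mem_filter.mpr ⟨Finset.mem_univ _, hσ'good⟩)
  omega

end KWVGAux
namespace KWVGAux

variable {n k : ℕ}

lemma stable_AW (G : kWVG n k) (hp : ∀ j, G.p j = 1) (ω : Outcome G)
    (hstab : SCDStable G ω) {C : Finset (Fin n)} (hCne : C.Nonempty)
    (hAW : ¬ Pack G (Finset.univ \ C) C k) : 1 ≤ ∑ i ∈ C, ω.x i := by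
  by_contra h
  push_neg at h
  exact hstab ⟨C, (IsSCD_iff G hp ω.x ω.x_nonneg C).mpr ⟨hCne, h, hAW⟩⟩

lemma forward (G : kWVG n k) (hp : ∀ j, G.p j = 1) (ω : Outcome G)
    (hstab : SCDStable G ω) : (St G k).2 = 0 := by
  by_contra hm0
  have hm : 1 ≤ (St G k).2 := Nat.pos_of_ne_zero hm0
  set S := (St G k).1 with hS
  set m := (St G k).2 with hmdef
  have hmk : m ≤ k := m_le_k G k
  have hinv : m + (Finset.univ \ S).card = k := St_inv G k
  have hirr : ∀ j ∈ S, Pack G (S \ {j}) {j} m := by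
    intro j hj
    by_contra hc
    exact not_SWin_fin G j ((SWin_iff G S m j).mpr ⟨hj, hc⟩)
  have htot_le : (∑ i, ω.x i) ≤ (k : ℚ) := by
    rw [outcome_total G hp ω]
    exact_mod_cast min_le_right _ _
  have hISWge : ∀ i ∈ Finset.univ \ S, 1 ≤ ω.x i := by
    intro i hi
    have hisw : IsISW G i := (ISW_iff G i).mpr (Finset.mem_sdiff.mp hi).2
    have h1 := stable_AW G hp ω hstab (Finset.singleton_nonempty i) (ISW_AW G hisw)
    rwa [Finset.sum_singleton] at h1
  have hsumISW : (((Finset.univ \ S).card : ℕ) : ℚ) ≤ ∑ i ∈ Finset.univ \ S, ω.x i := by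
    calc (((Finset.univ \ S).card : ℕ) : ℚ) = ∑ _i ∈ Finset.univ \ S, (1:ℚ) := by simp
      _ ≤ _ := Finset.sum_le_sum hISWge
  have hsplit : (∑ i ∈ Finset.univ \ S, ω.x i) + (∑ i ∈ S, ω.x i) = ∑ i, ω.x i :=
    Finset.sum_sdiff (Finset.subset_univ S)
  have hcardS : (((Finset.univ \ S).card : ℕ) : ℚ) = (k : ℚ) - (m : ℚ) := by
    have h1 : (Finset.univ \ S).card = k - m := by omega
    rw [h1, Nat.cast_sub hmk]
  have hxS_le : (∑ i ∈ S, ω.x i) ≤ (m : ℚ) := by linarith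
  have hxzero : ∀ i ∈ S, ω.x i = 0 := by
    intro i hi
    obtain ⟨σ, hσpart, hσcard, hσAW⟩ := crux G hm hirr hi
    have hpieceAW : ∀ P ∈ σ, 1 ≤ ∑ j ∈ P, ω.x j := by
      intro P hP
      have hPsub : P ⊆ S := Finset.Subset.trans
        (hσpart.2.2 ▸ Finset.le_sup (f := id) hP) Finset.sdiff_subset
      exact stable_AW G hp ω hstab (hσpart.1 P hP)
        (liftPack G k hPsub (hσAW P hP))
    have hsumT : (m : ℚ) ≤ ∑ j ∈ S \ {i}, ω.x j := by
      rw [sum_partition hσpart ω.x]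
      calc (m:ℚ) = ∑ _P ∈ σ, (1:ℚ) := by rw [Finset.sum_const, hσcard]; simp
        _ ≤ _ := Finset.sum_le_sum hpieceAW
    have hsum_split : (∑ j ∈ S, ω.x j) = (∑ j ∈ S \ {i}, ω.x j) + ω.x i :=
      Finset.sum_eq_sum_sdiff_singleton_add hi _
    have hnn := ω.x_nonneg i
    linarith
  have hxS0 : (∑ i ∈ S, ω.x i) = 0 := Finset.sum_eq_zero hxzero
  have hSne : S.Nonempty := by
    have h1 : (Finset.univ \ S).card = Finset.univ.card - S.card :=
      Finset.card_sdiff_of_subset (Finset.subset_univ S)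
    have h2 : (Finset.univ : Finset (Fin n)).card = n := by
      rw [Finset.card_univ, Fintype.card_fin]
    have h3 := Finset.card_le_univ S
    have h4 := G.k_le_n
    apply Finset.card_pos.mp
    clear_value S m
    omega
  have hSAW : ¬ Pack G (S \ S) S m := by
    rintro ⟨F, hFcard, hFsub, hFpref, hFdisj⟩
    have hFne : F.Nonempty := Finset.card_pos.mp (by omega)
    obtain ⟨B, hB⟩ := hFne
    have hBempty : B = ∅ := Finset.subset_empty.mp (by simpa using hFsub B hB)
    have h0 : (∑ x ∈ B, G.w x) < ∑ x ∈ S, G.w x := by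
      rw [hBempty]
      simpa using wsum_pos G hSne
    exact pref_asymm G (G.pref_weight S B h0) (hFpref B hB)
  have h1 := stable_AW G hp ω hstab hSne (liftPack G k (Finset.Subset.refl S) hSAW)
  linarith

lemma payoff_unique (G : kWVG n k) (hp : ∀ j, G.p j = 1) (ω : Outcome G)
    (hstab : SCDStable G ω) (i : Fin n) : ω.x i = if IsISW G i then 1 else 0 := by
  have hm0 : (St G k).2 = 0 := forward G hp ω hstab
  have hcardISW : (Finset.univ.filter (fun j => IsISW G j)).card = k := by
    rw [card_ISW, hm0]; omega
  set A := Finset.univ.filter (fun j => IsISW G j) with hA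
  have hge1 : ∀ j ∈ A, 1 ≤ ω.x j := by
    intro j hj
    have h1 := stable_AW G hp ω hstab (Finset.singleton_nonempty j)
      (ISW_AW G (Finset.mem_filter.mp hj).2)
    rwa [Finset.sum_singleton] at h1
  have hsumA : (k : ℚ) ≤ ∑ j ∈ A, ω.x j := by
    calc (k:ℚ) = ∑ _j ∈ A, (1:ℚ) := by rw [Finset.sum_const, hcardISW]; simp
      _ ≤ _ := Finset.sum_le_sum hge1
  have htot_le : (∑ j, ω.x j) ≤ (k:ℚ) := by
    rw [outcome_total G hp ω]
    exact_mod_cast min_le_right _ _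
  have hsplit : (∑ j ∈ Finset.univ \ A, ω.x j) + (∑ j ∈ A, ω.x j) = ∑ j, ω.x j :=
    Finset.sum_sdiff (Finset.subset_univ A)
  have hrest_nonneg : 0 ≤ ∑ j ∈ Finset.univ \ A, ω.x j :=
    Finset.sum_nonneg (fun j _ => ω.x_nonneg j)
  have hrest0 : (∑ j ∈ Finset.univ \ A, ω.x j) = 0 := by linarith
  have hsumA' : (∑ j ∈ A, ω.x j) = k := by linarith
  by_cases hisw : IsISW G i
  · rw [if_pos hisw]
    have hsum0 : (∑ j ∈ A, (ω.x j - 1)) = 0 := by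
      rw [Finset.sum_sub_distrib, hsumA', Finset.sum_const, hcardISW]
      simp
    have hzero := (Finset.sum_eq_zero_iff_of_nonneg
      (fun j hj => by linarith [hge1 j hj] : ∀ j ∈ A, 0 ≤ ω.x j - 1)).mp hsum0
    have := hzero i (Finset.mem_filter.mpr ⟨Finset.mem_univ i, hisw⟩)
    linarith
  · rw [if_neg hisw]
    have hmem : i ∈ Finset.univ \ A := Finset.mem_sdiff.mpr
      ⟨Finset.mem_univ i, by simp [hA, hisw]⟩
    exact (Finset.sum_eq_zero_iff_of_nonneg (fun j _ => ω.x_nonneg j)).mp hrest0 i hmem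

end KWVGAux
/-- A `k`-uniform-prize WVG has an SCD-stable outcome iff it has `k` iterative
singleton winners; moreover, every SCD-stable outcome pays `1` to each of the `k`
iterative singleton winners and `0` to everyone else. -/
theorem uniform_prize_stability (n k : ℕ) (G : kWVG n k) (hp : ∀ j, G.p j = 1) :
    ((∃ ω : Outcome G, SCDStable G ω) ↔
      (Finset.univ.filter (fun i => IsISW G i)).card = k) ∧
    (∀ ω : Outcome G, SCDStable G ω →
      ∀ i, ω.x i = if IsISW G i then 1 else 0) := by
  constructor
  · constructor
    · rintro ⟨ω, hstab⟩
      rw [KWVGAux.card_ISW, KWVGAux.forward G hp ω hstab]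
      omega
    · intro hcard
      have h1 := KWVGAux.card_ISW G
      have h2 := KWVGAux.m_le_k G k
      have hm0 : (KWVGAux.St G k).2 = 0 := by omega
      exact KWVGAux.backward G hp hm0
  · intro ω hstab i
    exact KWVGAux.payoff_unique G hp ω hstab i
end

section
/- For each θ ∈ {MCD, wMCD, MCDT}, the θ-core of a k-uniform-prize WVG is non-empty if and only if the game has k iterative singleton winners. -/
open Finset
open scoped Classical

variable {n k : ℕ}

namespace UPCAux

variable {n k : ℕ}

/-- rank auxiliary: number of coalitions of `π` preferred to `C`. -/
noncomputable def rk (G : kWVG n k) (π : Finset (Finset (Fin n)))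
    (C : Finset (Fin n)) : ℕ :=
  (π.filter (fun C' => G.pref C' C)).card

lemma pref_asymm (G : kWVG n k) {A B : Finset (Fin n)} (h : G.pref A B) :
    ¬ G.pref B A := fun h' => G.pref_irrefl A (G.pref_trans A B A h h')

lemma weight_le_of_pref (G : kWVG n k) {A B : Finset (Fin n)} (h : G.pref A B) :
    (∑ i ∈ B, G.w i) ≤ ∑ i ∈ A, G.w i := by
  by_contra hlt
  push_neg at hlt
  exact pref_asymm G h (G.pref_weight B A hlt)

lemma rk_lt_of_pref (G : kWVG n k) {π : Finset (Finset (Fin n))}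
    {A B : Finset (Fin n)} (hA : A ∈ π) (h : G.pref A B) :
    rk G π A < rk G π B := by
  apply Finset.card_lt_card
  constructor
  · intro C hC
    simp only [Finset.mem_filter] at hC ⊢
    exact ⟨hC.1, G.pref_trans _ _ _ hC.2 h⟩
  · intro hsub
    have hAB : A ∈ π.filter (fun C' => G.pref C' B) := by
      simp only [Finset.mem_filter]; exact ⟨hA, h⟩
    have := hsub hAB
    simp only [Finset.mem_filter] at this
    exact G.pref_irrefl A this.2

lemma rk_inj (G : kWVG n k) {π : Finset (Finset (Fin n))}
    {A B : Finset (Fin n)} (hA : A ∈ π) (hB : B ∈ π)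
    (h : rk G π A = rk G π B) : A = B := by
  by_contra hne
  rcases G.pref_total A B hne with hp | hp
  · exact absurd h (Nat.ne_of_lt (rk_lt_of_pref G hA hp))
  · exact absurd h.symm (Nat.ne_of_lt (rk_lt_of_pref G hB hp))

lemma card_winners_le (G : kWVG n k) (π : Finset (Finset (Fin n))) (m : ℕ) :
    (π.filter (fun C => rk G π C < m)).card ≤ m := by
  have h := Finset.card_le_card_of_injOn (fun C => rk G π C)
    (s := π.filter (fun C => rk G π C < m)) (t := Finset.range m)
    (fun C hC => by
      simp only [Finset.mem_coe, Finset.mem_filter] at hC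
      simpa using hC.2)
    (fun A hA B hB hab => by
      simp only [Finset.coe_filter, Set.mem_setOf_eq] at hA hB
      exact rk_inj G hA.1 hB.1 hab)
  simpa using h

lemma cv_eq (G : kWVG n k) (hp : ∀ j, G.p j = 1) (π : Finset (Finset (Fin n)))
    (C : Finset (Fin n)) :
    coalitionValue G π C = if rk G π C < k then 1 else 0 := by
  unfold coalitionValue rk
  split_ifs with h
  · exact hp _
  · rfl

lemma cv_nonneg (G : kWVG n k) (π : Finset (Finset (Fin n))) (C : Finset (Fin n)) :
    0 ≤ coalitionValue G π C := by
  unfold coalitionValue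
  split_ifs with h
  · exact le_of_lt (G.p_pos _)
  · exact le_rfl

lemma sum_cv_eq (G : kWVG n k) (hp : ∀ j, G.p j = 1)
    (π πs : Finset (Finset (Fin n))) :
    ∑ C ∈ πs, coalitionValue G π C = ((πs.filter (fun C => rk G π C < k)).card : ℚ) := by
  calc ∑ C ∈ πs, coalitionValue G π C
      = ∑ C ∈ πs, (if rk G π C < k then (1:ℚ) else 0) := by
        exact Finset.sum_congr rfl (fun C _ => cv_eq G hp π C)
    _ = ((πs.filter (fun C => rk G π C < k)).card : ℚ) := by
        rw [Finset.sum_boole]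

lemma sum_partition (f : Fin n → ℚ) {π : Finset (Finset (Fin n))}
    {A : Finset (Fin n)} (h : IsPartition π A) :
    ∑ C ∈ π, ∑ i ∈ C, f i = ∑ i ∈ A, f i := by
  rw [← h.2.2, Finset.sup_eq_biUnion]
  exact (Finset.sum_biUnion (fun B hB B' hB' hne => h.2.1 B hB B' hB' hne)).symm

lemma card_le_of_meets (hn : 0 < n) (F : Finset (Finset (Fin n)))
    (R : Finset (Fin n))
    (hdisj : ∀ A ∈ F, ∀ B ∈ F, A ≠ B → Disjoint A B)
    (hmeet : ∀ A ∈ F, (A ∩ R).Nonempty) : F.card ≤ R.card := by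
  classical
  apply Finset.card_le_card_of_injOn
    (fun A => if h : (A ∩ R).Nonempty then (A ∩ R).min' h else ⟨0, hn⟩)
  · intro A hA
    dsimp only
    rw [dif_pos (hmeet A hA)]
    have := Finset.min'_mem _ (hmeet A hA)
    exact (Finset.mem_inter.mp this).2
  · intro A hA B hB hab
    simp only [Finset.mem_coe] at hA hB
    dsimp only at hab
    rw [dif_pos (hmeet A hA), dif_pos (hmeet B hB)] at hab
    by_contra hne
    have hAmem := Finset.min'_mem _ (hmeet A hA)
    rw [hab] at hAmem
    have hBmem := Finset.min'_mem _ (hmeet B hB)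
    have hd := hdisj A hA B hB hne
    exact Finset.disjoint_left.mp hd (Finset.mem_inter.mp hAmem).1
      (Finset.mem_inter.mp hBmem).1


/-- sum over a disjoint family of subsets of `S` is at most the sum over `S`,
for nonnegative `f`. -/
lemma sum_blocks_le (f : Fin n → ℚ) (hf : ∀ i, 0 ≤ f i)
    {F : Finset (Finset (Fin n))} {S : Finset (Fin n)}
    (hdisj : ∀ A ∈ F, ∀ B ∈ F, A ≠ B → Disjoint A B)
    (hsub : ∀ A ∈ F, A ⊆ S) :
    ∑ B ∈ F, ∑ i ∈ B, f i ≤ ∑ i ∈ S, f i := by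
  rw [← Finset.sum_biUnion (fun B hB B' hB' hne => hdisj B hB B' hB' hne)]
  apply Finset.sum_le_sum_of_subset_of_nonneg
  · intro x hx
    rcases Finset.mem_biUnion.mp hx with ⟨B, hB, hxB⟩
    exact hsub B hB hxB
  · intro i _ _
    exact hf i

/-- existence of a `≻`-maximum of a nonempty finite family. -/
lemma exists_pref_max (G : kWVG n k) (U : Finset (Finset (Fin n)))
    (hU : U.Nonempty) :
    ∃ C ∈ U, ∀ B ∈ U, B ≠ C → G.pref C B := by
  classical
  induction U using Finset.induction_on with
  | empty => exact absurd hU (by simp)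
  | @insert a s ha ih =>
    rcases s.eq_empty_or_nonempty with rfl | hs
    · exact ⟨a, by simp, by intro B hB hne; simp at hB; exact absurd hB hne⟩
    · obtain ⟨C, hC, hmax⟩ := ih hs
      by_cases hac : a = C
      · refine ⟨C, Finset.mem_insert_of_mem hC, ?_⟩
        intro B hB hne
        rcases Finset.mem_insert.mp hB with rfl | hB'
        · exact absurd hac hne
        · exact hmax B hB' hne
      · rcases G.pref_total a C hac with hp | hp
        · refine ⟨a, Finset.mem_insert_self a s, ?_⟩
          intro B hB hne
          rcases Finset.mem_insert.mp hB with rfl | hB'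
          · exact absurd rfl hne
          · by_cases hBC : B = C
            · exact hBC ▸ hp
            · exact G.pref_trans a C B hp (hmax B hB' hBC)
        · refine ⟨C, Finset.mem_insert_of_mem hC, ?_⟩
          intro B hB hne
          rcases Finset.mem_insert.mp hB with rfl | hB'
          · exact hp
          · exact hmax B hB' hne

lemma block_subset {π : Finset (Finset (Fin n))} {A B : Finset (Fin n)}
    (h : IsPartition π A) (hB : B ∈ π) : B ⊆ A := by
  rw [← h.2.2]
  exact Finset.le_sup (f := id) hB

/-- projection of a partition of `univ` to a partition of `S`. -/
lemma proj_partition (S : Finset (Fin n)) {π' : Finset (Finset (Fin n))}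
    (h : IsPartition π' Finset.univ) (hS : S.Nonempty) :
    IsPartition ((π'.filter (fun B => (B ∩ S).Nonempty)).image (fun B => B ∩ S)) S := by
  classical
  refine ⟨?_, ?_, ?_⟩
  · intro C hC
    rcases Finset.mem_image.mp hC with ⟨B, hB, rfl⟩
    exact (Finset.mem_filter.mp hB).2
  · intro A hA B hB hne
    rcases Finset.mem_image.mp hA with ⟨A', hA', rfl⟩
    rcases Finset.mem_image.mp hB with ⟨B', hB', rfl⟩
    have hne' : A' ≠ B' := fun he => hne (by rw [he])
    have := h.2.1 A' (Finset.mem_filter.mp hA').1 B' (Finset.mem_filter.mp hB').1 hne'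
    exact Finset.disjoint_left.mpr (fun a haA haB =>
      (Finset.disjoint_left.mp this (Finset.mem_inter.mp haA).1)
        (Finset.mem_inter.mp haB).1)
  · apply Finset.Subset.antisymm
    · intro x hx
      rcases Finset.mem_sup.mp hx with ⟨C, hC, hxC⟩
      rcases Finset.mem_image.mp hC with ⟨B, _, rfl⟩
      exact (Finset.mem_inter.mp hxC).2
    · intro x hx
      have hxu : x ∈ π'.sup id := by rw [h.2.2]; exact Finset.mem_univ x
      rcases Finset.mem_sup.mp hxu with ⟨B, hB, hxB⟩
      apply Finset.mem_sup.mpr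
      refine ⟨B ∩ S, ?_, Finset.mem_inter.mpr ⟨hxB, hx⟩⟩
      apply Finset.mem_image.mpr
      exact ⟨B, Finset.mem_filter.mpr ⟨hB, ⟨x, Finset.mem_inter.mpr ⟨hxB, hx⟩⟩⟩, rfl⟩

/-- key transfer lemma: a coalition `C ⊆ S` of a family `F` that is guaranteed
rank `< m` in partitions of `S` containing `F` is guaranteed rank `< k` in
partitions of `univ` containing `F`, provided `|univ \ S| + m = k`. -/
lemma rk_lt_k_of_safe (G : kWVG n k) {S : Finset (Fin n)} {m : ℕ}
    (hcard : (Finset.univ \ S).card + m = k)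
    {F π' : Finset (Finset (Fin n))} {C : Finset (Fin n)}
    (hπ' : IsPartition π' Finset.univ) (hF : F ⊆ π') (hC : C ∈ F)
    (hCS : ∀ B ∈ F, B ⊆ S)
    (hsafe : ∀ ρ, IsPartition ρ S → F ⊆ ρ → rk G ρ C < m) :
    rk G π' C < k := by
  classical
  have hn : 0 < n := lt_of_lt_of_le G.k_pos G.k_le_n
  have hSne : S.Nonempty := by
    rcases G.k_pos.trans_le (le_of_eq hcard.symm) with _
    -- S contains C which is nonempty
    exact Finset.Nonempty.mono (hCS C hC) (hπ'.1 C (hF hC))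
  set π'' := (π'.filter (fun B => (B ∩ S).Nonempty)).image (fun B => B ∩ S) with hπ''def
  have hπ'' : IsPartition π'' S := proj_partition S hπ' hSne
  have hFsub : F ⊆ π'' := by
    intro B hB
    apply Finset.mem_image.mpr
    have hBS : B ∩ S = B := Finset.inter_eq_left.mpr (hCS B hB)
    refine ⟨B, Finset.mem_filter.mpr ⟨hF hB, ?_⟩, hBS⟩
    rw [hBS]; exact hπ'.1 B (hF hB)
  have hrk'' : rk G π'' C < m := hsafe π'' hπ'' hFsub
  -- split the coalitions of π' preferred to C
  have hsplit : π'.filter (fun B => G.pref B C) ⊆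
      (π'.filter (fun B => B ⊆ S ∧ G.pref B C)) ∪
      (π'.filter (fun B => (B ∩ (Finset.univ \ S)).Nonempty)) := by
    intro B hB
    rcases Finset.mem_filter.mp hB with ⟨hBπ, hBp⟩
    by_cases hBS : B ⊆ S
    · exact Finset.mem_union_left _ (Finset.mem_filter.mpr ⟨hBπ, hBS, hBp⟩)
    · apply Finset.mem_union_right
      apply Finset.mem_filter.mpr
      refine ⟨hBπ, ?_⟩
      rcases Finset.not_subset.mp hBS with ⟨a, haB, haS⟩
      exact ⟨a, Finset.mem_inter.mpr ⟨haB, Finset.mem_sdiff.mpr ⟨Finset.mem_univ a, haS⟩⟩⟩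
  have h1 : (π'.filter (fun B => B ⊆ S ∧ G.pref B C)).card ≤ rk G π'' C := by
    apply Finset.card_le_card
    intro B hB
    rcases Finset.mem_filter.mp hB with ⟨hBπ, hBS, hBp⟩
    apply Finset.mem_filter.mpr
    constructor
    · apply Finset.mem_image.mpr
      have hBS' : B ∩ S = B := Finset.inter_eq_left.mpr hBS
      refine ⟨B, Finset.mem_filter.mpr ⟨hBπ, ?_⟩, hBS'⟩
      rw [hBS']; exact hπ'.1 B hBπ
    · exact hBp
  have h2 : (π'.filter (fun B => (B ∩ (Finset.univ \ S)).Nonempty)).card ≤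
      (Finset.univ \ S).card := by
    apply card_le_of_meets hn
    · intro A hA B hB hne
      exact hπ'.2.1 A (Finset.mem_filter.mp hA).1 B (Finset.mem_filter.mp hB).1 hne
    · intro A hA
      exact (Finset.mem_filter.mp hA).2
  have := Finset.card_le_card hsplit
  have hcu := Finset.card_union_le (π'.filter (fun B => B ⊆ S ∧ G.pref B C))
      (π'.filter (fun B => (B ∩ (Finset.univ \ S)).Nonempty))
  unfold rk at hrk'' ⊢
  unfold rk at h1
  omega


/-- the iterated reduction state. -/
noncomputable def P (G : kWVG n k) (t : ℕ) : Finset (Fin n) × ℕ :=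
  (reduceStep G)^[t] (Finset.univ, k)

noncomputable def swf (G : kWVG n k) (Sm : Finset (Fin n) × ℕ) : Finset (Fin n) :=
  Sm.1.filter (fun i => SWin G Sm.1 Sm.2 i)

lemma P_zero (G : kWVG n k) : P G 0 = (Finset.univ, k) := rfl

lemma P_succ (G : kWVG n k) (t : ℕ) : P G (t + 1) = reduceStep G (P G t) := by
  unfold P
  rw [Function.iterate_succ_apply']

lemma reduceStep_eq (G : kWVG n k) (Sm : Finset (Fin n) × ℕ) :
    reduceStep G Sm = (Sm.1 \ swf G Sm, Sm.2 - (swf G Sm).card) := rfl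

/-- the all-singletons partition. -/
lemma singletons_partition (S : Finset (Fin n)) :
    IsPartition (S.image (fun i => ({i} : Finset (Fin n)))) S := by
  classical
  refine ⟨?_, ?_, ?_⟩
  · intro C hC
    rcases Finset.mem_image.mp hC with ⟨i, _, rfl⟩
    exact Finset.singleton_nonempty i
  · intro A hA B hB hne
    rcases Finset.mem_image.mp hA with ⟨i, _, rfl⟩
    rcases Finset.mem_image.mp hB with ⟨j, _, rfl⟩
    have : i ≠ j := fun h => hne (by rw [h])
    simp only [Finset.disjoint_singleton]
    exact this
  · apply Finset.Subset.antisymm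
    · intro x hx
      rcases Finset.mem_sup.mp hx with ⟨C, hC, hxC⟩
      rcases Finset.mem_image.mp hC with ⟨i, hi, rfl⟩
      simp only [id_eq, Finset.mem_singleton] at hxC
      exact hxC ▸ hi
    · intro x hx
      exact Finset.mem_sup.mpr ⟨{x}, Finset.mem_image_of_mem _ hx, Finset.mem_singleton_self x⟩

/-- at most `m` singleton winners of `(S, m)`. -/
lemma swf_card_le (G : kWVG n k) (S : Finset (Fin n)) (m : ℕ) :
    (S.filter (fun i => SWin G S m i)).card ≤ m := by
  classical
  set ρ := S.image (fun i => ({i} : Finset (Fin n))) with hρdef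
  have hρ : IsPartition ρ S := singletons_partition S
  have h := Finset.card_le_card_of_injOn (fun i => rk G ρ {i})
    (s := S.filter (fun i => SWin G S m i)) (t := Finset.range m)
    (fun i hi => by
      rcases Finset.mem_filter.mp hi with ⟨hiS, hsw⟩
      have : {i} ∈ ρ := Finset.mem_image_of_mem _ hiS
      have := hsw.2 ρ hρ this
      simpa [rk] using this)
    (fun a ha b hb hab => by
      simp only [Finset.coe_filter, Set.mem_setOf_eq] at ha hb
      have hsing := rk_inj G (Finset.mem_image_of_mem _ ha.1)
        (Finset.mem_image_of_mem _ hb.1) hab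
      exact Finset.singleton_injective hsing)
  simpa using h

/-- main invariant: removed players plus remaining prizes equals `k`. -/
lemma P_invariant (G : kWVG n k) (t : ℕ) :
    (Finset.univ \ (P G t).1).card + (P G t).2 = k := by
  induction t with
  | zero => simp [P_zero]
  | succ t ih =>
    rw [P_succ, reduceStep_eq]
    have hsw : swf G (P G t) ⊆ (P G t).1 := Finset.filter_subset _ _
    have hcle : (swf G (P G t)).card ≤ (P G t).2 := swf_card_le G _ _
    have hsub : (P G t).1 ⊆ Finset.univ := Finset.subset_univ _
    have hdiff : Finset.univ \ ((P G t).1 \ swf G (P G t)) =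
        (Finset.univ \ (P G t).1) ∪ swf G (P G t) := by
      ext a
      simp only [Finset.mem_sdiff, Finset.mem_union, Finset.mem_univ, true_and]
      constructor
      · intro h
        by_cases ha : a ∈ (P G t).1
        · right
          by_contra hna
          exact h ⟨ha, hna⟩
        · left; exact ha
      · rintro (h | h)
        · intro hc; exact h hc.1
        · intro hc; exact hc.2 h
    have hdisj : Disjoint (Finset.univ \ (P G t).1) (swf G (P G t)) := by
      apply Finset.disjoint_left.mpr
      intro a ha hsw'
      exact (Finset.mem_sdiff.mp ha).2 (hsw hsw')
    simp only [hdiff]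
    rw [Finset.card_union_of_disjoint hdisj]
    omega

lemma P_S_antitone (G : kWVG n k) (t : ℕ) : (P G (t+1)).1 ⊆ (P G t).1 := by
  rw [P_succ, reduceStep_eq]
  exact Finset.sdiff_subset

lemma P_S_antitone' (G : kWVG n k) {s t : ℕ} (h : s ≤ t) : (P G t).1 ⊆ (P G s).1 := by
  induction t with
  | zero => rw [Nat.le_zero.mp h]
  | succ t ih =>
    rcases Nat.lt_or_ge s (t+1) with hst | hst
    · exact (P_S_antitone G t).trans (ih (Nat.lt_succ_iff.mp hst))
    · rw [Nat.le_antisymm h hst]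

lemma P_fix_of_swempty (G : kWVG n k) {t : ℕ} (h : swf G (P G t) = ∅) :
    ∀ s, P G (t + s) = P G t := by
  intro s
  induction s with
  | zero => rfl
  | succ s ih =>
    have : t + (s + 1) = (t + s) + 1 := by omega
    rw [this, P_succ, ih, reduceStep_eq, h]
    simp

lemma swempty_of_m_zero (G : kWVG n k) {t : ℕ} (h : (P G t).2 = 0) :
    swf G (P G t) = ∅ := by
  apply Finset.filter_eq_empty_iff.mpr
  intro i hi
  intro hsw
  have hmem : ({i} : Finset (Fin n)) ∈ (P G t).1.image (fun j => ({j} : Finset (Fin n))) :=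
    Finset.mem_image_of_mem _ hi
  have := hsw.2 _ (singletons_partition (P G t).1) hmem
  omega

/-- the iteration is stationary from step `k` on. -/
lemma P_stab (G : kWVG n k) : ∀ s, P G (k + s) = P G k := by
  have key : swf G (P G k) = ∅ := by
    by_cases hex : ∃ t < k, swf G (P G t) = ∅
    · obtain ⟨t, htk, ht⟩ := hex
      have hPk : P G k = P G t := by
        have h' := P_fix_of_swempty G ht (k - t)
        rwa [show t + (k - t) = k from by omega] at h'
      rw [hPk]; exact ht
    · push_neg at hex
      have hm : ∀ t ≤ k, (P G t).2 ≤ k - t := by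
        intro t htk
        induction t with
        | zero => simp [P_zero]
        | succ t ih =>
          have h1 : (P G t).2 ≤ k - t := ih (by omega)
          have h2 : swf G (P G t) ≠ ∅ := (hex t (by omega)).ne_empty
          have h3 : 1 ≤ (swf G (P G t)).card :=
            Finset.card_pos.mpr (Finset.nonempty_of_ne_empty h2)
          rw [P_succ, reduceStep_eq]
          simp only
          omega
      have : (P G k).2 = 0 := by
        have := hm k le_rfl
        omega
      exact swempty_of_m_zero G this
  exact P_fix_of_swempty G key

lemma P_ge_k (G : kWVG n k) {t : ℕ} (h : k ≤ t) : P G t = P G k := by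
  have : t = k + (t - k) := by omega
  rw [this]
  exact P_stab G (t - k)

lemma isw_iff (G : kWVG n k) (i : Fin n) : IsISW G i ↔ i ∉ (P G k).1 := by
  constructor
  · rintro ⟨t, hsw⟩
    by_cases htk : t < k
    · have hrem : i ∉ (P G (t+1)).1 := by
        rw [P_succ, reduceStep_eq]
        simp only [Finset.mem_sdiff, not_and, not_not]
        intro hiS
        exact Finset.mem_filter.mpr ⟨hsw.1, hsw⟩
      intro hik
      exact hrem (P_S_antitone' G (by omega : t + 1 ≤ k) hik)
    · exfalso
      have hsw2 : SWin G (P G t).1 (P G t).2 i := hsw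
      have hPt : P G t = P G k := P_ge_k G (by omega)
      rw [hPt] at hsw2
      clear hsw
      rename' hsw2 => hsw
      have hkey : swf G (P G k) = ∅ := by
        have h1 := P_stab G 1
        have : ∀ s, P G (k + s) = P G k := P_stab G
        by_contra hne
        -- use stationarity: P (k+1) = P k means the filter got removed yet S unchanged
        have h2 : (P G (k+1)).1 = (P G k).1 := by rw [this 1]
        rw [P_succ, reduceStep_eq] at h2
        simp only at h2
        have hsub : swf G (P G k) ⊆ (P G k).1 := Finset.filter_subset _ _
        obtain ⟨a, ha⟩ := Finset.nonempty_of_ne_empty hne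
        have : a ∈ (P G k).1 \ swf G (P G k) := h2.symm ▸ (hsub ha)
        exact (Finset.mem_sdiff.mp this).2 ha
      have : i ∈ swf G (P G k) := Finset.mem_filter.mpr ⟨hsw.1, hsw⟩
      rw [hkey] at this
      exact absurd this (Finset.notMem_empty i)
  · intro hik
    have : ∀ t, i ∉ (P G t).1 → IsISW G i := by
      intro t
      induction t with
      | zero => intro h; exact absurd (Finset.mem_univ i) h
      | succ t ih =>
        intro h
        by_cases hit : i ∈ (P G t).1
        · rw [P_succ, reduceStep_eq] at h
          simp only [Finset.mem_sdiff, not_and, not_not] at h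
          have := h hit
          exact ⟨t, (Finset.mem_filter.mp this).2⟩
        · exact ih hit
    exact this k hik

lemma isw_card (G : kWVG n k) :
    (Finset.univ.filter (fun i => IsISW G i)).card + (P G k).2 = k := by
  have : Finset.univ.filter (fun i => IsISW G i) = Finset.univ \ (P G k).1 := by
    ext i
    simp only [Finset.mem_filter, Finset.mem_univ, true_and, Finset.mem_sdiff]
    exact isw_iff G i
  rw [this]
  exact P_invariant G k

/-- key: an iterative singleton winner is a singleton winner in the full game. -/
lemma isw_rk (G : kWVG n k) {i : Fin n} (h : IsISW G i)
    {π' : Finset (Finset (Fin n))} (hπ' : IsPartition π' Finset.univ)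
    (hmem : ({i} : Finset (Fin n)) ∈ π') : rk G π' {i} < k := by
  obtain ⟨t, hsw⟩ := h
  apply rk_lt_k_of_safe G (P_invariant G t) hπ'
    (F := {({i} : Finset (Fin n))}) (Finset.singleton_subset_iff.mpr hmem)
    (Finset.mem_singleton_self _)
  · intro B hB
    rw [Finset.mem_singleton] at hB
    subst hB
    exact Finset.singleton_subset_iff.mpr hsw.1
  · intro ρ hρ hFρ
    have : ({i} : Finset (Fin n)) ∈ ρ := hFρ (Finset.mem_singleton_self _)
    exact hsw.2 ρ hρ this


lemma w_mono (G : kWVG n k) {A B : Finset (Fin n)} (h : A ⊆ B) :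
    ∑ i ∈ A, G.w i ≤ ∑ i ∈ B, G.w i :=
  Finset.sum_le_sum_of_subset_of_nonneg h (fun i _ _ => le_of_lt (G.w_pos i))

lemma w_strict_mono (G : kWVG n k) {A B : Finset (Fin n)} (h : A ⊆ B)
    (hne : A ≠ B) : ∑ i ∈ A, G.w i < ∑ i ∈ B, G.w i := by
  have hBA : (B \ A).Nonempty := by
    rw [Finset.sdiff_nonempty]
    intro hBA
    exact hne (Finset.Subset.antisymm h hBA)
  have h1 : ∑ i ∈ B, G.w i = ∑ i ∈ B \ A, G.w i + ∑ i ∈ A, G.w i :=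
    (Finset.sum_sdiff h).symm
  have h2 : 0 < ∑ i ∈ B \ A, G.w i :=
    Finset.sum_pos (fun i _ => G.w_pos i) hBA
  linarith

/-- the main combinatorial lemma: in an irreducible positive-prize reduced game, any
nonnegative payoff of total at most `m` admits an underpaid coalition that is
guaranteed a prize in the reduced game. -/
lemma crux (G : kWVG n k) {S : Finset (Fin n)} {m : ℕ} (hm : 1 ≤ m)
    (x : Fin n → ℚ) (hx0 : ∀ i, 0 ≤ x i) (hxS : ∑ i ∈ S, x i ≤ (m : ℚ))
    (hS : S.Nonempty)
    (hnoSW : ∀ i ∈ S, ¬ SWin G S m i) :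
    ∃ C : Finset (Fin n), C.Nonempty ∧ C ⊆ S ∧ (∑ i ∈ C, x i) < 1 ∧
      ∀ ρ, IsPartition ρ S → C ∈ ρ → rk G ρ C < m := by
  classical
  obtain ⟨i₀, hi₀⟩ := hS
  have hn : 0 < n := i₀.pos
  -- unfold the no-singleton-winner hypothesis
  have hnoSW' : ∀ i ∈ S, ∃ ρ, IsPartition ρ S ∧ ({i} : Finset (Fin n)) ∈ ρ ∧
      m ≤ (ρ.filter (fun C' => G.pref C' {i})).card := by
    intro i hi
    have := hnoSW i hi
    unfold SWin at this
    push_neg at this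
    obtain ⟨ρ, h1, h2, h3⟩ := this hi
    exact ⟨ρ, h1, h2, h3⟩
  -- step 1 : S has at least m+1 players
  have hScard : m + 1 ≤ S.card := by
    obtain ⟨ρ, hρ, hiρ, hrk⟩ := hnoSW' i₀ hi₀
    have h1 : ρ.filter (fun C' => G.pref C' {i₀}) ⊆ ρ.erase {i₀} := by
      intro B hB
      rcases Finset.mem_filter.mp hB with ⟨hBρ, hBp⟩
      apply Finset.mem_erase.mpr
      refine ⟨?_, hBρ⟩
      intro hBe
      exact G.pref_irrefl _ (hBe ▸ hBp)
    have h2 : m ≤ (ρ.erase {i₀}).card := le_trans hrk (Finset.card_le_card h1)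
    have h3 : (ρ.erase {i₀}).card = ρ.card - 1 := Finset.card_erase_of_mem hiρ
    have h4 : 1 ≤ ρ.card := Finset.card_pos.mpr ⟨_, hiρ⟩
    have h5 : ρ.card ≤ S.card := by
      apply card_le_of_meets hn
      · exact hρ.2.1
      · intro A hA
        have hAS : A ⊆ S := block_subset hρ hA
        have : A ∩ S = A := Finset.inter_eq_left.mpr hAS
        rw [this]
        exact hρ.1 A hA
    omega
  -- step 2 : some player is underpaid
  have hmin : ∃ i ∈ S, x i < 1 := by
    by_contra hc
    push_neg at hc
    have h1 : (S.card : ℚ) ≤ ∑ i ∈ S, x i := by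
      have := Finset.card_nsmul_le_sum S x 1 hc
      simpa using this
    have h2 : ((m : ℚ) + 1) ≤ (S.card : ℚ) := by
      exact_mod_cast hScard
    linarith
  -- the family of underpaid coalitions and its ≻-maximum
  set U := S.powerset.filter (fun C => C.Nonempty ∧ ∑ i ∈ C, x i < 1) with hUdef
  have hU : U.Nonempty := by
    obtain ⟨i, hiS, hix⟩ := hmin
    exact ⟨{i}, Finset.mem_filter.mpr ⟨Finset.mem_powerset.mpr
      (Finset.singleton_subset_iff.mpr hiS), Finset.singleton_nonempty i, by simpa using hix⟩⟩
  obtain ⟨Cs, hCsU, hCsmax⟩ := exists_pref_max G U hU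
  rcases Finset.mem_filter.mp hCsU with ⟨hCspow, hCsne, hCsx⟩
  have hCsS : Cs ⊆ S := Finset.mem_powerset.mp hCspow
  refine ⟨Cs, hCsne, hCsS, hCsx, ?_⟩
  intro ρ hρ hCρ
  by_contra hge
  push_neg at hge
  -- the blocking family F
  set F := ρ.filter (fun B => G.pref B Cs) with hFdef
  have hFcard : m ≤ F.card := hge
  have hFmem : ∀ B ∈ F, B ∈ ρ ∧ G.pref B Cs := fun B hB => Finset.mem_filter.mp hB
  have hFneCs : ∀ B ∈ F, B ≠ Cs := by
    intro B hB hBe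
    exact G.pref_irrefl _ (hBe ▸ (hFmem B hB).2)
  have hFS : ∀ B ∈ F, B ⊆ S := fun B hB => block_subset hρ (hFmem B hB).1
  have hFne : ∀ B ∈ F, B.Nonempty := fun B hB => hρ.1 B (hFmem B hB).1
  have hFdisjCs : ∀ B ∈ F, Disjoint B Cs := fun B hB =>
    hρ.2.1 B (hFmem B hB).1 Cs hCρ (hFneCs B hB)
  have hFpdisj : ∀ A ∈ F, ∀ B ∈ F, A ≠ B → Disjoint A B := fun A hA B hB hne =>
    hρ.2.1 A (hFmem A hA).1 B (hFmem B hB).1 hne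
  -- every blocking coalition is fully paid
  have hB1 : ∀ B ∈ F, 1 ≤ ∑ i ∈ B, x i := by
    intro B hB
    by_contra hlt
    push_neg at hlt
    have hBU : B ∈ U := Finset.mem_filter.mpr
      ⟨Finset.mem_powerset.mpr (hFS B hB), hFne B hB, hlt⟩
    exact pref_asymm G (hFmem B hB).2 (hCsmax B hBU (hFneCs B hB))
  -- sum bounds
  have hinsS : ∀ A ∈ insert Cs F, A ⊆ S := by
    intro A hA
    rcases Finset.mem_insert.mp hA with rfl | hA'
    · exact hCsS
    · exact hFS A hA'
  have hinsdisj : ∀ A ∈ insert Cs F, ∀ B ∈ insert Cs F, A ≠ B → Disjoint A B := by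
    intro A hA B hB hne
    rcases Finset.mem_insert.mp hA with rfl | hA' <;>
      rcases Finset.mem_insert.mp hB with rfl | hB'
    · exact absurd rfl hne
    · exact (hFdisjCs B hB').symm
    · exact hFdisjCs A hA'
    · exact hFpdisj A hA' B hB' hne
  have hCsF : Cs ∉ F := fun h => hFneCs Cs h rfl
  have hsumle : ∑ i ∈ Cs, x i + ∑ B ∈ F, ∑ i ∈ B, x i ≤ ∑ i ∈ S, x i := by
    have := sum_blocks_le x hx0 hinsdisj hinsS
    rwa [Finset.sum_insert hCsF] at this
  have hcardle : (F.card : ℚ) ≤ ∑ B ∈ F, ∑ i ∈ B, x i := by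
    have := Finset.card_nsmul_le_sum F (fun B => ∑ i ∈ B, x i) 1 hB1
    simpa using this
  have hCs0 : 0 ≤ ∑ i ∈ Cs, x i := Finset.sum_nonneg (fun i _ => hx0 i)
  have hFm : (m : ℚ) ≤ (F.card : ℚ) := by exact_mod_cast hFcard
  -- all tight
  have hCsx0 : ∑ i ∈ Cs, x i = 0 := by linarith
  have hFcard' : F.card = m := by
    have h1 : (F.card : ℚ) ≤ (m : ℚ) := by linarith
    have h2 : F.card ≤ m := by exact_mod_cast h1
    omega
  have hFsum : ∑ B ∈ F, ∑ i ∈ B, x i = (m : ℚ) := by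
    have h1 : ∑ B ∈ F, ∑ i ∈ B, x i ≤ (m : ℚ) := by linarith
    have h2 : (m : ℚ) ≤ ∑ B ∈ F, ∑ i ∈ B, x i := by
      calc (m : ℚ) ≤ (F.card : ℚ) := hFm
        _ ≤ _ := hcardle
    linarith
  have hxS' : ∑ i ∈ S, x i = (m : ℚ) := by
    have := hsumle
    rw [hCsx0, hFsum] at this
    -- this : 0 + m ≤ x(S); with hxS
    have h2 : (m : ℚ) ≤ ∑ i ∈ S, x i := by linarith
    linarith
  -- each blocking coalition is paid exactly 1
  have hBx1 : ∀ B ∈ F, ∑ i ∈ B, x i = 1 := by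
    intro B hB
    have h1 : ∑ B' ∈ F.erase B, ∑ i ∈ B', x i ≥ ((F.erase B).card : ℚ) := by
      have := Finset.card_nsmul_le_sum (F.erase B) (fun B' => ∑ i ∈ B', x i) 1
        (fun B' hB' => hB1 B' (Finset.mem_of_mem_erase hB'))
      simpa using this
    have h2 : (F.erase B).card = m - 1 := by
      rw [Finset.card_erase_of_mem hB, hFcard']
    have h3 : ∑ i ∈ B, x i + ∑ B' ∈ F.erase B, ∑ i ∈ B', x i = (m : ℚ) := by
      rw [← hFsum, ← Finset.sum_erase_add F _ hB]
      ring
    have h4 : ((m : ℚ) - 1) ≤ ∑ B' ∈ F.erase B, ∑ i ∈ B', x i := by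
      have : ((F.erase B).card : ℚ) = (m : ℚ) - 1 := by
        rw [h2]
        have : 1 ≤ m := hm
        push_cast [Nat.cast_sub this]
        ring
      linarith
    have := hB1 B hB
    linarith
  -- each blocking coalition is a fully paid singleton
  have hBsing : ∀ B ∈ F, ∃ b, B = {b} ∧ x b = 1 := by
    intro B hB
    have hBx := hBx1 B hB
    have hbex : ∃ b ∈ B, 0 < x b := by
      by_contra hc
      push_neg at hc
      have : ∑ i ∈ B, x i ≤ 0 := Finset.sum_nonpos hc
      linarith
    obtain ⟨b, hbB, hbx⟩ := hbex
    have hBb : B = {b} := by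
      by_contra hne
      have hBbne : (B \ {b}).Nonempty := by
        rw [Finset.sdiff_nonempty]
        intro hsub
        exact hne (Finset.Subset.antisymm hsub (Finset.singleton_subset_iff.mpr hbB))
      set C' := Cs ∪ (B \ {b}) with hC'def
      have hdisj' : Disjoint Cs (B \ {b}) :=
        Finset.disjoint_of_subset_right Finset.sdiff_subset (hFdisjCs B hB).symm
      have hC'S : C' ⊆ S := Finset.union_subset hCsS
        ((Finset.sdiff_subset).trans (hFS B hB))
      have hC'x : ∑ i ∈ C', x i < 1 := by
        rw [hC'def, Finset.sum_union hdisj']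
        have h1 : ∑ i ∈ B \ {b}, x i = ∑ i ∈ B, x i - x b := by
          have : ∑ i ∈ B \ {b}, x i + ∑ i ∈ {b}, x i = ∑ i ∈ B, x i :=
            Finset.sum_sdiff (Finset.singleton_subset_iff.mpr hbB)
          simp only [Finset.sum_singleton] at this
          linarith
        rw [hCsx0, h1, hBx]
        linarith
      have hC'U : C' ∈ U := Finset.mem_filter.mpr
        ⟨Finset.mem_powerset.mpr hC'S, Finset.Nonempty.mono Finset.subset_union_left hCsne, hC'x⟩
      have hC'ne : C' ≠ Cs := by
        intro he
        have : B \ {b} ⊆ Cs := he ▸ Finset.subset_union_right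
        obtain ⟨a, ha⟩ := hBbne
        exact Finset.disjoint_right.mp hdisj' ha (this ha)
      have hmax := hCsmax C' hC'U hC'ne
      have hwlt : ∑ i ∈ Cs, G.w i < ∑ i ∈ C', G.w i :=
        w_strict_mono G Finset.subset_union_left (Ne.symm hC'ne)
      exact pref_asymm G hmax (G.pref_weight C' Cs hwlt)
    refine ⟨b, hBb, ?_⟩
    rw [hBb, Finset.sum_singleton] at hBx
    exact hBx
  -- the set of fully paid players and the poor remainder
  set Z := F.sup id with hZdef
  have hZS : Z ⊆ S := by
    rw [hZdef]
    show F.sup id ≤ S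
    exact Finset.sup_le (fun B hB => hFS B hB)
  have hZcard : Z.card = m := by
    have h1 : Z = F.biUnion id := by rw [hZdef, Finset.sup_eq_biUnion]
    have h2 := Finset.card_biUnion (s := F) (t := id)
      (fun A hA B hB hne => hFpdisj A hA B hB hne)
    have h3 : ∑ u ∈ F, (id u).card = ∑ u ∈ F, 1 :=
      Finset.sum_congr rfl (fun B hB => by
        obtain ⟨b, hb, _⟩ := hBsing B hB
        rw [hb]; simp)
    rw [h1, h2, h3, Finset.sum_const, smul_eq_mul, mul_one, hFcard']
  have hZx : ∑ i ∈ Z, x i = (m : ℚ) := by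
    have h1 : Z = F.biUnion id := by rw [hZdef, Finset.sup_eq_biUnion]
    have h2 := Finset.sum_biUnion (s := F) (t := id) (f := x)
      (fun A hA B hB hne => hFpdisj A hA B hB hne)
    rw [h1, h2]
    exact hFsum
  set Pp := S \ Z with hPpdef
  have hPpx : ∑ i ∈ Pp, x i = 0 := by
    have h1 : ∑ i ∈ Pp, x i + ∑ i ∈ Z, x i = ∑ i ∈ S, x i := Finset.sum_sdiff hZS
    rw [hZx, hxS'] at h1
    linarith
  have hPpne : Pp.Nonempty := by
    rw [hPpdef]
    have : (S \ Z).card = S.card - Z.card := Finset.card_sdiff_of_subset hZS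
    rw [← Finset.card_pos, this, hZcard]
    omega
  -- Cs is exactly the poor set
  have hCsZ : Disjoint Cs Z := by
    rw [Finset.disjoint_right]
    intro a haZ haCs
    rw [hZdef] at haZ
    rcases Finset.mem_sup.mp haZ with ⟨B, hB, haB⟩
    simp only [id_eq] at haB
    exact Finset.disjoint_left.mp (hFdisjCs B hB) haB haCs
  have hCsPp : Cs ⊆ Pp := fun a ha =>
    Finset.mem_sdiff.mpr ⟨hCsS ha, Finset.disjoint_left.mp hCsZ ha⟩
  have hCsPp' : Cs = Pp := by
    by_contra hne
    have hPpU : Pp ∈ U := Finset.mem_filter.mpr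
      ⟨Finset.mem_powerset.mpr Finset.sdiff_subset, hPpne, by rw [hPpx]; norm_num⟩
    have hmax := hCsmax Pp hPpU (fun h => hne h.symm)
    have hw := w_strict_mono G hCsPp hne
    exact pref_asymm G hmax (G.pref_weight Pp Cs hw)
  -- pick a fully paid singleton player b
  have hFnonempty : F.Nonempty := Finset.card_pos.mp (by omega)
  obtain ⟨B0, hB0⟩ := hFnonempty
  obtain ⟨b, hB0eq, hbx⟩ := hBsing B0 hB0
  subst hB0eq
  have hbZ : b ∈ Z := by
    rw [hZdef]
    exact Finset.mem_sup.mpr ⟨{b}, hB0, Finset.mem_singleton_self b⟩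
  have hbS : b ∈ S := hZS hbZ
  have hbCs : G.pref {b} Cs := (hFmem _ hB0).2
  -- b is not a singleton winner: derive a contradiction
  obtain ⟨σ, hσ, hbσ, hrkb⟩ := hnoSW' b hbS
  set E := σ.filter (fun B' => G.pref B' ({b} : Finset (Fin n))) with hEdef
  have hEcard : m ≤ E.card := hrkb
  have hEmeets : ∀ B' ∈ E, (B' ∩ (Z \ {b})).Nonempty := by
    intro B' hB'
    rcases Finset.mem_filter.mp hB' with ⟨hB'σ, hB'p⟩
    have hB'ne : B' ≠ {b} := fun he => G.pref_irrefl _ (he ▸ hB'p)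
    have hB'disj : Disjoint B' {b} := hσ.2.1 B' hB'σ {b} hbσ hB'ne
    have hbB' : b ∉ B' := fun h =>
      (Finset.disjoint_left.mp hB'disj h) (Finset.mem_singleton_self b)
    by_contra hemp
    rw [Finset.not_nonempty_iff_eq_empty] at hemp
    have hB'Z : Disjoint B' Z := by
      rw [Finset.disjoint_left]
      intro a haB' haZ
      have ha' : a ∈ B' ∩ (Z \ {b}) := Finset.mem_inter.mpr ⟨haB',
        Finset.mem_sdiff.mpr ⟨haZ, by
          rw [Finset.mem_singleton]; rintro rfl; exact hbB' haB'⟩⟩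
      rw [hemp] at ha'
      exact Finset.notMem_empty a ha'
    have hB'S : B' ⊆ S := block_subset hσ hB'σ
    have hB'Pp : B' ⊆ Pp := fun a ha =>
      Finset.mem_sdiff.mpr ⟨hB'S ha, Finset.disjoint_left.mp hB'Z ha⟩
    rw [← hCsPp'] at hB'Pp
    have h1 : ∑ i ∈ ({b} : Finset (Fin n)), G.w i ≤ ∑ i ∈ B', G.w i :=
      weight_le_of_pref G hB'p
    have h2 : ∑ i ∈ Cs, G.w i ≤ ∑ i ∈ ({b} : Finset (Fin n)), G.w i :=
      weight_le_of_pref G hbCs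
    have h3 : ∑ i ∈ B', G.w i ≤ ∑ i ∈ Cs, G.w i := w_mono G hB'Pp
    have hB'Cs : B' = Cs := by
      by_contra hne
      have := w_strict_mono G hB'Pp hne
      linarith
    rw [hB'Cs] at hB'p
    exact pref_asymm G hbCs hB'p
  have hEdisj : ∀ A ∈ E, ∀ B ∈ E, A ≠ B → Disjoint A B := fun A hA B hB hne =>
    hσ.2.1 A (Finset.mem_filter.mp hA).1 B (Finset.mem_filter.mp hB).1 hne
  have hfin : E.card ≤ (Z \ {b}).card := card_le_of_meets hn E _ hEdisj hEmeets
  have hZb : (Z \ {b}).card = m - 1 := by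
    rw [Finset.card_sdiff_of_subset (Finset.singleton_subset_iff.mpr hbZ), hZcard]
    simp
  omega

lemma swf_k_empty (G : kWVG n k) : swf G (P G k) = ∅ := by
  by_contra hne
  have h2 : (P G (k+1)).1 = (P G k).1 := by rw [P_stab G 1]
  rw [P_succ, reduceStep_eq] at h2
  simp only at h2
  obtain ⟨a, ha⟩ := Finset.nonempty_of_ne_empty hne
  have hsub : swf G (P G k) ⊆ (P G k).1 := Finset.filter_subset _ _
  have : a ∈ (P G k).1 \ swf G (P G k) := by rw [h2]; exact hsub ha
  exact (Finset.mem_sdiff.mp this).2 ha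

noncomputable def Wset (G : kWVG n k) : Finset (Fin n) :=
  Finset.univ.filter (fun i => IsISW G i)

noncomputable def Rset (G : kWVG n k) : Finset (Fin n) := Finset.univ \ Wset G

noncomputable def pi0 (G : kWVG n k) : Finset (Finset (Fin n)) :=
  (insert (Rset G) ((Wset G).image (fun i => ({i} : Finset (Fin n))))).erase ∅

noncomputable def x0 (G : kWVG n k) : Fin n → ℚ :=
  fun i => if i ∈ Wset G then 1 else 0

lemma mem_pi0 (G : kWVG n k) {C : Finset (Fin n)} :
    C ∈ pi0 G ↔ C ≠ ∅ ∧ (C = Rset G ∨ ∃ i ∈ Wset G, C = {i}) := by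
  unfold pi0
  rw [Finset.mem_erase, Finset.mem_insert]
  simp only [Finset.mem_image]
  constructor
  · rintro ⟨h1, (h2 | ⟨i, hi, hC⟩)⟩
    · exact ⟨h1, Or.inl h2⟩
    · exact ⟨h1, Or.inr ⟨i, hi, hC.symm⟩⟩
  · rintro ⟨h1, (h2 | ⟨i, hi, hC⟩)⟩
    · exact ⟨h1, Or.inl h2⟩
    · exact ⟨h1, Or.inr ⟨i, hi, hC.symm⟩⟩

lemma pi0_partition (G : kWVG n k) : IsPartition (pi0 G) Finset.univ := by
  classical
  refine ⟨?_, ?_, ?_⟩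
  · intro C hC
    exact Finset.nonempty_of_ne_empty ((mem_pi0 G).mp hC).1
  · intro A hA B hB hne
    rcases ((mem_pi0 G).mp hA).2 with rfl | ⟨i, hi, rfl⟩ <;>
      rcases ((mem_pi0 G).mp hB).2 with h | ⟨j, hj, rfl⟩
    · exact absurd h.symm hne
    · rw [Finset.disjoint_singleton_right]
      intro hjR
      exact (Finset.mem_sdiff.mp hjR).2 hj
    · rw [h]
      rw [Finset.disjoint_singleton_left]
      intro hiR
      exact (Finset.mem_sdiff.mp hiR).2 hi
    · rw [Finset.disjoint_singleton_right, Finset.mem_singleton]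
      intro hji
      exact hne (by rw [hji])
  · apply Finset.Subset.antisymm
    · intro a _
      exact Finset.mem_univ a
    · intro a _
      apply Finset.mem_sup.mpr
      by_cases haW : a ∈ Wset G
      · refine ⟨{a}, ?_, Finset.mem_singleton_self a⟩
        apply (mem_pi0 G).mpr
        exact ⟨Finset.singleton_ne_empty a, Or.inr ⟨a, haW, rfl⟩⟩
      · have haR : a ∈ Rset G := Finset.mem_sdiff.mpr ⟨Finset.mem_univ a, haW⟩
        refine ⟨Rset G, ?_, haR⟩
        apply (mem_pi0 G).mpr
        refine ⟨?_, Or.inl rfl⟩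
        intro he
        rw [he] at haR
        exact Finset.notMem_empty a haR

lemma Wset_card (G : kWVG n k) (hk : (P G k).2 = 0) : (Wset G).card = k := by
  have := isw_card G
  unfold Wset
  omega

lemma singleton_mem_pi0 (G : kWVG n k) {i : Fin n} (hi : i ∈ Wset G) :
    ({i} : Finset (Fin n)) ∈ pi0 G :=
  (mem_pi0 G).mpr ⟨Finset.singleton_ne_empty i, Or.inr ⟨i, hi, rfl⟩⟩

lemma pi0_budget (G : kWVG n k) (hp : ∀ j, G.p j = 1) (hk : (P G k).2 = 0) :
    ∀ C ∈ pi0 G, ∑ i ∈ C, x0 G i = coalitionValue G (pi0 G) C := by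
  intro C hC
  rcases ((mem_pi0 G).mp hC) with ⟨hCne, hCalt⟩
  rcases hCalt with rfl | ⟨i, hi, rfl⟩
  · -- the remainder coalition gets nothing
    have hLHS : ∑ i ∈ Rset G, x0 G i = 0 := by
      apply Finset.sum_eq_zero
      intro i hiR
      unfold x0
      rw [if_neg (Finset.mem_sdiff.mp hiR).2]
    rw [hLHS, cv_eq G hp]
    rw [eq_comm, ite_eq_right_iff]
    intro hrk
    exfalso
    -- the k winner singletons already fill all k prizes
    have himg : insert (Rset G) ((Wset G).image (fun i => ({i} : Finset (Fin n)))) ⊆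
        (pi0 G).filter (fun C' => rk G (pi0 G) C' < k) := by
      intro B hB
      rcases Finset.mem_insert.mp hB with rfl | hB'
      · exact Finset.mem_filter.mpr ⟨hC, hrk⟩
      · rcases Finset.mem_image.mp hB' with ⟨j, hj, rfl⟩
        refine Finset.mem_filter.mpr ⟨singleton_mem_pi0 G hj, ?_⟩
        have hjI : IsISW G j := (Finset.mem_filter.mp hj).2
        exact isw_rk G hjI (pi0_partition G) (singleton_mem_pi0 G hj)
    have hRnotimg : Rset G ∉ (Wset G).image (fun i => ({i} : Finset (Fin n))) := by
      intro hmem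
      rcases Finset.mem_image.mp hmem with ⟨j, hj, hje⟩
      have : j ∈ Rset G := by rw [← hje]; exact Finset.mem_singleton_self j
      exact (Finset.mem_sdiff.mp this).2 hj
    have hcard1 : (insert (Rset G)
        ((Wset G).image (fun i => ({i} : Finset (Fin n))))).card = k + 1 := by
      rw [Finset.card_insert_of_notMem hRnotimg,
        Finset.card_image_of_injective _ Finset.singleton_injective, Wset_card G hk]
    have := Finset.card_le_card himg
    have := card_winners_le G (pi0 G) k
    omega
  · -- a winner singleton gets 1
    have hLHS : ∑ j ∈ ({i} : Finset (Fin n)), x0 G j = 1 := by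
      rw [Finset.sum_singleton]
      unfold x0
      rw [if_pos hi]
    rw [hLHS, cv_eq G hp]
    have hiI : IsISW G i := (Finset.mem_filter.mp hi).2
    rw [if_pos (isw_rk G hiI (pi0_partition G) hC)]

/-- key counting bound : in the extension of any deviating family by outside
singletons, the family's total prize money is at most its own payoff. -/
lemma dev_bound (G : kWVG n k) (hp : ∀ j, G.p j = 1) (hk : (P G k).2 = 0)
    {πD : Finset (Finset (Fin n))} (hdev : IsDevPartition πD) :
    ∃ π', IsPartition π' Finset.univ ∧ πD ⊆ π' ∧
      ∑ C ∈ πD, coalitionValue G π' C ≤ ∑ i ∈ πD.sup id, x0 G i := by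
  classical
  set D := πD.sup id with hDdef
  have hCD : ∀ C ∈ πD, C ⊆ D := fun C hC => Finset.le_sup (f := id) hC
  set π' := πD ∪ ((Finset.univ \ D).image (fun i => ({i} : Finset (Fin n)))) with hπ'def
  have hπ'mem : ∀ B ∈ π', B ∈ πD ∨ ∃ j ∈ Finset.univ \ D, B = {j} := by
    intro B hB
    rcases Finset.mem_union.mp hB with h | h
    · exact Or.inl h
    · rcases Finset.mem_image.mp h with ⟨j, hj, rfl⟩
      exact Or.inr ⟨j, hj, rfl⟩
  have hπ' : IsPartition π' Finset.univ := by
    refine ⟨?_, ?_, ?_⟩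
    · intro C hC
      rcases hπ'mem C hC with h | ⟨j, _, rfl⟩
      · exact hdev.2.1 C h
      · exact Finset.singleton_nonempty j
    · intro A hA B hB hne
      rcases hπ'mem A hA with hA' | ⟨a, ha, rfl⟩ <;>
        rcases hπ'mem B hB with hB' | ⟨b, hb, rfl⟩
      · exact hdev.2.2 A hA' B hB' hne
      · rw [Finset.disjoint_singleton_right]
        intro hbA
        exact (Finset.mem_sdiff.mp hb).2 (hCD A hA' hbA)
      · rw [Finset.disjoint_singleton_left]
        intro haB
        exact (Finset.mem_sdiff.mp ha).2 (hCD B hB' haB)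
      · rw [Finset.disjoint_singleton_right, Finset.mem_singleton]
        intro hba
        exact hne (by rw [hba])
    · apply Finset.Subset.antisymm
      · intro a _; exact Finset.mem_univ a
      · intro a _
        apply Finset.mem_sup.mpr
        by_cases haD : a ∈ D
        · rcases Finset.mem_sup.mp haD with ⟨C, hC, haC⟩
          exact ⟨C, Finset.mem_union_left _ hC, haC⟩
        · refine ⟨{a}, Finset.mem_union_right _ ?_, Finset.mem_singleton_self a⟩
          exact Finset.mem_image_of_mem _ (Finset.mem_sdiff.mpr ⟨Finset.mem_univ a, haD⟩)
  refine ⟨π', hπ', Finset.subset_union_left, ?_⟩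
  -- counting
  have hsum := sum_cv_eq G hp π' πD
  rw [hsum]
  -- the winners outside D
  set Wout := ((Wset G) \ D).image (fun i => ({i} : Finset (Fin n))) with hWoutdef
  have hWoutsub : Wout ⊆ π'.filter (fun C => rk G π' C < k) := by
    intro B hB
    rcases Finset.mem_image.mp hB with ⟨j, hj, rfl⟩
    have hjW : j ∈ Wset G := (Finset.mem_sdiff.mp hj).1
    have hjD : j ∉ D := (Finset.mem_sdiff.mp hj).2
    have hmem : ({j} : Finset (Fin n)) ∈ π' := by
      apply Finset.mem_union_right
      exact Finset.mem_image_of_mem _ (Finset.mem_sdiff.mpr ⟨Finset.mem_univ j, hjD⟩)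
    refine Finset.mem_filter.mpr ⟨hmem, ?_⟩
    exact isw_rk G (Finset.mem_filter.mp hjW).2 hπ' hmem
  have hdisj : Disjoint (πD.filter (fun C => rk G π' C < k)) Wout := by
    rw [Finset.disjoint_right]
    intro B hBW hBD
    rcases Finset.mem_image.mp hBW with ⟨j, hj, rfl⟩
    have : j ∈ D := hCD _ (Finset.mem_filter.mp hBD).1 (Finset.mem_singleton_self j)
    exact (Finset.mem_sdiff.mp hj).2 this
  have hunionsub : (πD.filter (fun C => rk G π' C < k)) ∪ Wout ⊆
      π'.filter (fun C => rk G π' C < k) := by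
    apply Finset.union_subset _ hWoutsub
    intro B hB
    rcases Finset.mem_filter.mp hB with ⟨h1, h2⟩
    exact Finset.mem_filter.mpr ⟨Finset.mem_union_left _ h1, h2⟩
  have hcount : (πD.filter (fun C => rk G π' C < k)).card + ((Wset G) \ D).card ≤ k := by
    have h1 := Finset.card_le_card hunionsub
    rw [Finset.card_union_of_disjoint hdisj] at h1
    have h2 : Wout.card = ((Wset G) \ D).card :=
      Finset.card_image_of_injective _ Finset.singleton_injective
    have h3 := card_winners_le G π' k
    omega
  have hWD : ((Wset G) \ D).card + ((Wset G) ∩ D).card = k := by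
    rw [Finset.card_sdiff_add_card_inter, Wset_card G hk]
  have hxD : ∑ i ∈ D, x0 G i = (((Wset G) ∩ D).card : ℚ) := by
    unfold x0
    rw [Finset.sum_boole]
    congr 1
    rw [Finset.filter_mem_eq_inter, Finset.inter_comm]
  rw [hxD]
  have : (πD.filter (fun C => rk G π' C < k)).card ≤ ((Wset G) ∩ D).card := by omega
  exact_mod_cast this

lemma stable_outcome_exists (G : kWVG n k) (hp : ∀ j, G.p j = 1)
    (hk : (P G k).2 = 0) :
    ∃ ω : Outcome G, MCDStable G ω ∧ wMCDStable G ω ∧ MCDTStable G ω := by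
  classical
  refine ⟨⟨pi0 G, pi0_partition G, x0 G, ?_, pi0_budget G hp hk⟩, ?_, ?_, ?_⟩
  · intro i
    unfold x0
    split_ifs <;> norm_num
  · rintro ⟨πD, hdev, hmcd⟩
    obtain ⟨π', h1, h2, h3⟩ := dev_bound G hp hk hdev
    have hstrict : ∑ C ∈ πD, ∑ i ∈ C, x0 G i < ∑ C ∈ πD, coalitionValue G π' C :=
      Finset.sum_lt_sum_of_nonempty hdev.1 (fun C hC => hmcd π' h1 h2 C hC)
    have hsum : ∑ C ∈ πD, ∑ i ∈ C, x0 G i = ∑ i ∈ πD.sup id, x0 G i :=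
      sum_partition (x0 G) ⟨hdev.2.1, hdev.2.2, rfl⟩
    rw [hsum] at hstrict
    linarith
  · rintro ⟨πD, hdev, hwmcd⟩
    obtain ⟨π', h1, h2, h3⟩ := dev_bound G hp hk hdev
    obtain ⟨hle, C0, hC0, hlt⟩ := hwmcd π' h1 h2
    have hstrict : ∑ C ∈ πD, ∑ i ∈ C, x0 G i < ∑ C ∈ πD, coalitionValue G π' C :=
      Finset.sum_lt_sum hle ⟨C0, hC0, hlt⟩
    have hsum : ∑ C ∈ πD, ∑ i ∈ C, x0 G i = ∑ i ∈ πD.sup id, x0 G i :=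
      sum_partition (x0 G) ⟨hdev.2.1, hdev.2.2, rfl⟩
    rw [hsum] at hstrict
    linarith
  · rintro ⟨πD, hdev, hmcdt⟩
    obtain ⟨π', h1, h2, h3⟩ := dev_bound G hp hk hdev
    have := hmcdt π' h1 h2
    linarith


/-- if the reduction does not consume all prizes, every outcome admits a
single-coalition deviation that is simultaneously an MCD, a wMCD, and an MCDT. -/
lemma deviation_exists (G : kWVG n k) (hp : ∀ j, G.p j = 1)
    (hk : (P G k).2 ≠ 0) (ω : Outcome G) :
    ∃ πD, IsMCD G ω.x πD ∧ IswMCD G ω.x πD ∧ IsMCDT G ω.x πD := by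
  classical
  set S := (P G k).1 with hSdef
  set m := (P G k).2 with hmdef
  have hm : 1 ≤ m := Nat.one_le_iff_ne_zero.mpr hk
  have hInv : (Finset.univ \ S).card + m = k := P_invariant G k
  have hnoSW : ∀ i ∈ S, ¬ SWin G S m i := by
    intro i hi hsw
    have : i ∈ swf G (P G k) := Finset.mem_filter.mpr ⟨hi, hsw⟩
    rw [swf_k_empty G] at this
    exact Finset.notMem_empty i this
  -- we produce a single coalition C that is underpaid and always wins a prize
  have key : ∃ C : Finset (Fin n), C.Nonempty ∧ (∑ i ∈ C, ω.x i) < 1 ∧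
      ∀ π', IsPartition π' Finset.univ → C ∈ π' → rk G π' C < k := by
    by_cases hcase : ∃ w ∈ Finset.univ \ S, ω.x w < 1
    · -- an iterative singleton winner is underpaid
      obtain ⟨w, hwS, hwx⟩ := hcase
      refine ⟨{w}, Finset.singleton_nonempty w, by simpa using hwx, ?_⟩
      intro π' hπ' hmem
      have hwI : IsISW G w := (isw_iff G w).mpr (Finset.mem_sdiff.mp hwS).2
      exact isw_rk G hwI hπ' hmem
    · -- all removed players are fully paid; use the crux lemma on the reduced game
      push_neg at hcase
      have hn : 0 < n := lt_of_lt_of_le G.k_pos G.k_le_n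
      -- total payment is at most k
      have htot : ∑ i ∈ Finset.univ, ω.x i = ∑ C ∈ ω.part, coalitionValue G ω.part C := by
        rw [← sum_partition ω.x ω.ispart]
        exact Finset.sum_congr rfl (fun C hC => ω.x_budget C hC)
      have hle : ∑ C ∈ ω.part, coalitionValue G ω.part C ≤ (k : ℚ) := by
        rw [sum_cv_eq G hp ω.part ω.part]
        exact_mod_cast card_winners_le G ω.part k
      have hWx : (((Finset.univ \ S).card : ℚ)) ≤ ∑ i ∈ Finset.univ \ S, ω.x i := by
        have := Finset.card_nsmul_le_sum (Finset.univ \ S) ω.x 1 (fun i hi => hcase i hi)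
        simpa using this
      have hsplit : ∑ i ∈ Finset.univ \ S, ω.x i + ∑ i ∈ S, ω.x i
          = ∑ i ∈ Finset.univ, ω.x i :=
        Finset.sum_sdiff (Finset.subset_univ S)
      have hcast : ((Finset.univ \ S).card : ℚ) + (m : ℚ) = (k : ℚ) := by
        exact_mod_cast hInv
      have hxS : ∑ i ∈ S, ω.x i ≤ (m : ℚ) := by linarith
      have hSne : S.Nonempty := by
        rw [← Finset.card_pos]
        have h1 : (Finset.univ \ S).card = n - S.card := by
          rw [Finset.card_sdiff_of_subset (Finset.subset_univ S)]
          simp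
        have h2 : k ≤ n := G.k_le_n
        have h3 : S.card ≤ n := le_trans (Finset.card_le_card (Finset.subset_univ S))
          (by simp)
        omega
      obtain ⟨C, hCne, hCS, hCx, hCsafe⟩ :=
        crux G hm ω.x ω.x_nonneg hxS hSne hnoSW
      refine ⟨C, hCne, hCx, ?_⟩
      intro π' hπ' hmem
      apply rk_lt_k_of_safe G hInv hπ' (F := {C})
        (Finset.singleton_subset_iff.mpr hmem) (Finset.mem_singleton_self C)
      · intro B hB
        rw [Finset.mem_singleton] at hB
        exact hB ▸ hCS
      · intro ρ hρ hFρ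
        exact hCsafe ρ hρ (hFρ (Finset.mem_singleton_self C))
  obtain ⟨C, hCne, hCx, hCrk⟩ := key
  have hdev : IsDevPartition ({C} : Finset (Finset (Fin n))) := by
    refine ⟨Finset.singleton_nonempty C, ?_, ?_⟩
    · intro B hB
      rw [Finset.mem_singleton] at hB
      exact hB ▸ hCne
    · intro A hA B hB hne
      rw [Finset.mem_singleton] at hA hB
      exact absurd (hA.trans hB.symm) hne
  have hwin : ∀ π', IsPartition π' Finset.univ → ({C} : Finset (Finset (Fin n))) ⊆ π' →
      (∑ i ∈ C, ω.x i) < coalitionValue G π' C := by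
    intro π' hπ' hsub
    have hmem : C ∈ π' := hsub (Finset.mem_singleton_self C)
    rw [cv_eq G hp, if_pos (hCrk π' hπ' hmem)]
    exact hCx
  refine ⟨{C}, ⟨hdev, ?_⟩, ⟨hdev, ?_⟩, ⟨hdev, ?_⟩⟩
  · intro π' h1 h2 B hB
    rw [Finset.mem_singleton] at hB
    exact hB ▸ hwin π' h1 h2
  · intro π' h1 h2
    constructor
    · intro B hB
      rw [Finset.mem_singleton] at hB
      exact le_of_lt (hB ▸ hwin π' h1 h2)
    · exact ⟨C, Finset.mem_singleton_self C, hwin π' h1 h2⟩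
  · intro π' h1 h2
    rw [Finset.sup_singleton, Finset.sum_singleton]
    exact hwin π' h1 h2

end UPCAux

/-- For each `θ ∈ {MCD, wMCD, MCDT}`, the `θ`-core of a `k`-uniform-prize WVG is
non-empty iff the game has `k` iterative singleton winners. -/
theorem uniform_prize_cores_nonempty_iff (n k : ℕ) (G : kWVG n k)
    (hp : ∀ j, G.p j = 1) :
    ((∃ ω : Outcome G, MCDStable G ω) ↔
      (Finset.univ.filter (fun i => IsISW G i)).card = k) ∧
    ((∃ ω : Outcome G, wMCDStable G ω) ↔
      (Finset.univ.filter (fun i => IsISW G i)).card = k) ∧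
    ((∃ ω : Outcome G, MCDTStable G ω) ↔
      (Finset.univ.filter (fun i => IsISW G i)).card = k) := by
  classical
  have hiswc := UPCAux.isw_card G
  have hfwd : (∃ ω : Outcome G, MCDStable G ω) →
      (Finset.univ.filter (fun i => IsISW G i)).card = k := by
    rintro ⟨ω, hst⟩
    by_contra hne
    have hk : (UPCAux.P G k).2 ≠ 0 := fun h0 => hne (by omega)
    obtain ⟨πD, h1, _, _⟩ := UPCAux.deviation_exists G hp hk ω
    exact hst ⟨πD, h1⟩
  have hbwd : (Finset.univ.filter (fun i => IsISW G i)).card = k →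
      ∃ ω : Outcome G, MCDStable G ω ∧ wMCDStable G ω ∧ MCDTStable G ω := by
    intro h
    have hk : (UPCAux.P G k).2 = 0 := by omega
    exact UPCAux.stable_outcome_exists G hp hk
  refine ⟨⟨hfwd, fun h => ?_⟩, ⟨?_, fun h => ?_⟩, ⟨?_, fun h => ?_⟩⟩
  · obtain ⟨ω, s1, _, _⟩ := hbwd h
    exact ⟨ω, s1⟩
  · rintro ⟨ω, hst⟩
    apply hfwd
    refine ⟨ω, ?_⟩
    rintro ⟨πD, hdev, hmcd⟩
    apply hst
    refine ⟨πD, hdev, ?_⟩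
    intro π' h1 h2
    exact ⟨fun C hC => le_of_lt (hmcd π' h1 h2 C hC),
      let ⟨C, hC⟩ := hdev.1
      ⟨C, hC, hmcd π' h1 h2 C hC⟩⟩
  · obtain ⟨ω, _, s2, _⟩ := hbwd h
    exact ⟨ω, s2⟩
  · rintro ⟨ω, hst⟩
    by_contra hne
    have hk : (UPCAux.P G k).2 ≠ 0 := fun h0 => hne (by omega)
    obtain ⟨πD, _, _, h3⟩ := UPCAux.deviation_exists G hp hk ω
    exact hst ⟨πD, h3⟩
  · obtain ⟨ω, _, _, s3⟩ := hbwd h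
    exact ⟨ω, s3⟩
end

section
/- In any k-uniform-prize WVG G, the SCD-core, the MCD-core, the wMCD-core, and the MCDT-core all coincide: an outcome of G is SCD-stable if and only if it is MCD-stable, if and only if it is wMCD-stable, if and only if it is MCDT-stable. -/
open Finset
open scoped Classical

variable {n k : ℕ}

/-! ### Auxiliary machinery -/

section Aux

variable {n k : ℕ} (G : kWVG n k)

/-- total weight of a coalition -/
local notation "wsum" => fun (S : Finset (Fin n)) => ∑ i ∈ S, G.w i

lemma pref_asymm {A B : Finset (Fin n)} (h : G.pref A B) : ¬ G.pref B A := by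
  intro h'
  exact G.pref_irrefl A (G.pref_trans A B A h h')

lemma pref_wle {A B : Finset (Fin n)} (h : G.pref A B) :
    (∑ i ∈ B, G.w i) ≤ (∑ i ∈ A, G.w i) := by
  by_contra hlt
  push_neg at hlt
  exact pref_asymm G h (G.pref_weight B A hlt)

lemma wsum_nonneg (S : Finset (Fin n)) : 0 ≤ ∑ i ∈ S, G.w i :=
  Finset.sum_nonneg fun i _ => (G.w_pos i).le

lemma wsum_pos {S : Finset (Fin n)} (hS : S.Nonempty) : 0 < ∑ i ∈ S, G.w i :=
  Finset.sum_pos (fun i _ => G.w_pos i) hS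

lemma wsum_lt_of_ssubset {A B : Finset (Fin n)} (h : A ⊂ B) :
    (∑ i ∈ A, G.w i) < ∑ i ∈ B, G.w i := by
  obtain ⟨x, hxB, hxA⟩ := Finset.exists_of_ssubset h
  exact Finset.sum_lt_sum_of_subset h.subset hxB hxA (G.w_pos x) (fun i _ _ => (G.w_pos i).le)

lemma pref_nonempty_of_pref {A B : Finset (Fin n)} (hB : B.Nonempty) (h : G.pref A B) :
    A.Nonempty := by
  rw [Finset.nonempty_iff_ne_empty]
  rintro rfl
  have h1 : (0:ℚ) < ∑ i ∈ B, G.w i := wsum_pos G hB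
  have h2 := pref_wle G h
  simp at h2
  linarith

/-- if `W ⊆ V` and `W` defeats `P`, then `V` defeats `P` -/
lemma pref_of_superset_pref {W V P : Finset (Fin n)} (hWV : W ⊆ V) (h : G.pref W P) :
    G.pref V P := by
  rcases hWV.eq_or_ssubset with rfl | hss
  · exact h
  · exact G.pref_weight V P (lt_of_le_of_lt (pref_wle G h) (wsum_lt_of_ssubset G hss))

lemma pref_of_ssuperset {P V : Finset (Fin n)} (h : P ⊂ V) : G.pref V P :=
  G.pref_weight V P (wsum_lt_of_ssubset G h)

end Aux

section Parts

variable {n k : ℕ} (G : kWVG n k)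

/-- a partition of `M` into nonempty pairwise disjoint parts -/
def PartOf (σ : Finset (Finset (Fin n))) (M : Finset (Fin n)) : Prop :=
  (∀ C ∈ σ, C.Nonempty) ∧ (∀ A ∈ σ, ∀ B ∈ σ, A ≠ B → Disjoint A B) ∧ σ.sup id = M

lemma PartOf.subset_of_mem {σ : Finset (Finset (Fin n))} {M C : Finset (Fin n)}
    (h : PartOf σ M) (hC : C ∈ σ) : C ⊆ M := by
  rw [← h.2.2]; exact Finset.le_sup (f := id) hC

lemma partOf_exists (M : Finset (Fin n)) :
    ∀ j : ℕ, 1 ≤ j → j ≤ M.card → ∃ σ : Finset (Finset (Fin n)), PartOf σ M ∧ σ.card = j := by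
  intro j
  induction j generalizing M with
  | zero => omega
  | succ j ih =>
    intro _ hcard
    rcases Nat.eq_zero_or_pos j with rfl | hj
    · refine ⟨{M}, ⟨?_, ?_, ?_⟩, ?_⟩
      · intro C hC; rw [Finset.mem_singleton] at hC; subst hC
        exact Finset.card_pos.mp (by omega)
      · intro A hA B hB hAB
        rw [Finset.mem_singleton] at hA hB; subst hA; subst hB; exact absurd rfl hAB
      · simp
      · simp
    · have hMne : M.Nonempty := Finset.card_pos.mp (by omega)
      obtain ⟨a, ha⟩ := hMne
      have hcard' : j ≤ (M.erase a).card := by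
        rw [Finset.card_erase_of_mem ha]; omega
      obtain ⟨σ', ⟨hne, hdisj, hsup⟩, hc⟩ := ih (M.erase a) hj hcard'
      have hsub : ∀ B ∈ σ', B ⊆ M.erase a := by
        intro B hB; rw [← hsup]; exact Finset.le_sup (f := id) hB
      have hnotmem : ({a} : Finset (Fin n)) ∉ σ' := by
        intro hmem
        have := hsub _ hmem (Finset.mem_singleton_self a)
        simp at this
      refine ⟨insert {a} σ', ⟨?_, ?_, ?_⟩, ?_⟩
      · intro C hC
        rcases Finset.mem_insert.mp hC with rfl | hC'
        · exact Finset.singleton_nonempty a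
        · exact hne _ hC'
      · intro A hA B hB hAB
        rcases Finset.mem_insert.mp hA with rfl | hA' <;>
          rcases Finset.mem_insert.mp hB with rfl | hB'
        · exact absurd rfl hAB
        · refine Finset.disjoint_left.mpr ?_
          intro x hx hxB
          rw [Finset.mem_singleton] at hx; subst hx
          exact absurd (hsub _ hB' hxB) (by simp)
        · refine Finset.disjoint_left.mpr ?_
          intro x hxA hx
          rw [Finset.mem_singleton] at hx; subst hx
          exact absurd (hsub _ hA' hxA) (by simp)
        · exact hdisj _ hA' _ hB' hAB
      · rw [Finset.sup_insert, hsup]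
        simp only [id]
        rw [Finset.sup_eq_union] at *
        ext x
        simp only [Finset.mem_union, Finset.mem_singleton, Finset.mem_erase]
        constructor
        · rintro (rfl | ⟨-, hx⟩)
          · exact ha
          · exact hx
        · intro hx
          by_cases hxa : x = a
          · exact Or.inl hxa
          · exact Or.inr ⟨hxa, hx⟩
      · rw [Finset.card_insert_of_notMem hnotmem, hc]

/-- a strict-total-order minimum element of a nonempty finite family of coalitions -/
lemma exists_pref_min (s : Finset (Finset (Fin n))) (hs : s.Nonempty) :
    ∃ P ∈ s, ∀ Q ∈ s, Q ≠ P → G.pref Q P := by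
  classical
  induction s using Finset.induction_on with
  | empty => exact absurd hs (by simp)
  | @insert x s hx ih =>
    rcases s.eq_empty_or_nonempty with rfl | hs'
    · exact ⟨x, Finset.mem_insert_self _ _, by simp⟩
    · obtain ⟨P, hP, hmin⟩ := ih hs'
      have hxP : x ≠ P := fun h => hx (h ▸ hP)
      rcases G.pref_total x P hxP with h1 | h2
      · refine ⟨P, Finset.mem_insert_of_mem hP, ?_⟩
        intro Q hQ hQP
        rcases Finset.mem_insert.mp hQ with rfl | hQ'
        · exact h1
        · exact hmin Q hQ' hQP
      · refine ⟨x, Finset.mem_insert_self _ _, ?_⟩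
        intro Q hQ hQx
        rcases Finset.mem_insert.mp hQ with rfl | hQ'
        · exact absurd rfl hQx
        · rcases eq_or_ne Q P with rfl | hQP
          · exact h2
          · exact G.pref_trans Q P x (hmin Q hQ' hQP) h2

/-- the pref-minimum part of a family (junk value for empty families) -/
noncomputable def minP (σ : Finset (Finset (Fin n))) : Finset (Fin n) :=
  if h : σ.Nonempty then (exists_pref_min G σ h).choose else ∅

lemma minP_mem {σ : Finset (Finset (Fin n))} (h : σ.Nonempty) : minP G σ ∈ σ := by
  rw [minP, dif_pos h]
  exact (exists_pref_min G σ h).choose_spec.1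

lemma minP_min {σ : Finset (Finset (Fin n))} (h : σ.Nonempty) :
    ∀ Q ∈ σ, Q ≠ minP G σ → G.pref Q (minP G σ) := by
  rw [minP, dif_pos h]
  exact (exists_pref_min G σ h).choose_spec.2

/-- rank measure: the number of coalitions a coalition defeats -/
noncomputable def rankP (S : Finset (Fin n)) : ℕ :=
  ((Finset.univ : Finset (Finset (Fin n))).filter (fun B => G.pref S B)).card

lemma rankP_lt_of_pref {A B : Finset (Fin n)} (h : G.pref A B) : rankP G B < rankP G A := by
  apply Finset.card_lt_card
  rw [Finset.ssubset_iff_of_subset]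
  · refine ⟨B, ?_, ?_⟩
    · simp only [rankP, Finset.mem_filter, Finset.mem_univ, true_and]
      exact h
    · simp only [rankP, Finset.mem_filter, Finset.mem_univ, true_and]
      exact G.pref_irrefl B
  · intro X hX
    simp only [rankP, Finset.mem_filter, Finset.mem_univ, true_and] at hX ⊢
    exact G.pref_trans A B X h hX

end Parts

section Maximin

variable {n k : ℕ} (G : kWVG n k)

/-- a coalition that is guaranteed a prize in every partition containing it -/
def GuarWin (E : Finset (Fin n)) : Prop :=
  ∀ π' : Finset (Finset (Fin n)), IsPartition π' Finset.univ → E ∈ π' →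
    (π'.filter (fun B => G.pref B E)).card < k

lemma maximin_skeleton (M : Finset (Fin n)) (j : ℕ) (hj : 1 ≤ j) (hjM : j ≤ M.card) :
    ∃ σ : Finset (Finset (Fin n)), PartOf σ M ∧ σ.card = j ∧
      ∀ F' : Finset (Finset (Fin n)), F'.card = j - 1 →
        (∀ B ∈ F', B.Nonempty ∧ B ⊆ M ∧ G.pref B (minP G σ)) →
        (∀ A ∈ F', ∀ B ∈ F', A ≠ B → Disjoint A B) →
        ¬ G.pref (M \ F'.sup id) (minP G σ) := by
  classical
  set T : Finset (Finset (Finset (Fin n))) :=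
    Finset.univ.filter (fun σ => PartOf σ M ∧ σ.card = j) with hT
  have hTne : T.Nonempty := by
    obtain ⟨σ, h1, h2⟩ := partOf_exists M j hj hjM
    exact ⟨σ, by simp [hT, h1, h2]⟩
  obtain ⟨σ, hσT, hmax⟩ := T.exists_max_image (fun σ => rankP G (minP G σ)) hTne
  rw [hT, Finset.mem_filter] at hσT
  obtain ⟨-, hσpart, hσcard⟩ := hσT
  refine ⟨σ, hσpart, hσcard, ?_⟩
  intro F' hF'card hF'mem hF'disj hpref
  set P₀ := minP G σ with hP₀
  have hσne : σ.Nonempty := Finset.card_pos.mp (by omega)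
  have hP₀mem : P₀ ∈ σ := minP_mem G hσne
  have hP₀ne : P₀.Nonempty := hσpart.1 _ hP₀mem
  set Q₀ : Finset (Fin n) := M \ F'.sup id with hQ₀
  have hQ₀ne : Q₀.Nonempty := pref_nonempty_of_pref G hP₀ne hpref
  have hsupM : F'.sup id ⊆ M := Finset.sup_le (fun B hB => (hF'mem B hB).2.1)
  have hQ₀notmem : Q₀ ∉ F' := by
    intro hmem
    have h1 : Q₀ ⊆ F'.sup id := Finset.le_sup (f := id) hmem
    obtain ⟨x, hx⟩ := hQ₀ne
    have := Finset.mem_sdiff.mp hx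
    exact this.2 (h1 hx)
  set σ' : Finset (Finset (Fin n)) := insert Q₀ F' with hσ'
  have hσ'card : σ'.card = j := by
    rw [hσ', Finset.card_insert_of_notMem hQ₀notmem, hF'card]; omega
  have hσ'part : PartOf σ' M := by
    refine ⟨?_, ?_, ?_⟩
    · intro C hC
      rcases Finset.mem_insert.mp hC with rfl | hC'
      · exact hQ₀ne
      · exact (hF'mem C hC').1
    · intro A hA B hB hAB
      rcases Finset.mem_insert.mp hA with rfl | hA' <;>
        rcases Finset.mem_insert.mp hB with rfl | hB'
      · exact absurd rfl hAB
      · exact (Finset.sdiff_disjoint (s := F'.sup id) (t := M)).mono_right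
          (Finset.le_sup (f := id) hB')
      · exact ((Finset.sdiff_disjoint (s := F'.sup id) (t := M)).mono_right
          (Finset.le_sup (f := id) hA')).symm
      · exact hF'disj _ hA' _ hB' hAB
    · rw [hσ', Finset.sup_insert]
      simp only [id]
      rw [Finset.sup_eq_union]
      exact Finset.sdiff_union_of_subset hsupM
  have hσ'T : σ' ∈ T := by
    rw [hT, Finset.mem_filter]
    exact ⟨Finset.mem_univ _, hσ'part, hσ'card⟩
  have hσ'ne : σ'.Nonempty := Finset.card_pos.mp (by omega)
  have hminmem := minP_mem G hσ'ne
  have hallpref : ∀ C ∈ σ', G.pref C P₀ := by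
    intro C hC
    rcases Finset.mem_insert.mp hC with rfl | hC'
    · exact hpref
    · exact (hF'mem C hC').2.2
  have himp : G.pref (minP G σ') P₀ := hallpref _ hminmem
  have h1 : rankP G P₀ < rankP G (minP G σ') := rankP_lt_of_pref G himp
  have h2 := hmax σ' hσ'T
  omega

/-- extraction of `k` pairwise disjoint beaters from a non-guaranteed coalition -/
lemma beater_family {Q : Finset (Fin n)} (h : ¬ GuarWin G Q) :
    ∃ F : Finset (Finset (Fin n)), k ≤ F.card ∧
      (∀ B ∈ F, B.Nonempty ∧ Disjoint B Q ∧ G.pref B Q) ∧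
      (∀ A ∈ F, ∀ B ∈ F, A ≠ B → Disjoint A B) := by
  rw [GuarWin] at h
  push_neg at h
  obtain ⟨π', hpart, hmem, hk⟩ := h
  refine ⟨π'.filter (fun B => G.pref B Q), hk, ?_, ?_⟩
  · intro B hB
    rw [Finset.mem_filter] at hB
    refine ⟨hpart.1 _ hB.1, ?_, hB.2⟩
    refine hpart.2.1 _ hB.1 _ hmem ?_
    intro hBQ
    exact G.pref_irrefl Q (hBQ ▸ hB.2)
  · intro A hA B hB hAB
    rw [Finset.mem_filter] at hA hB
    exact hpart.2.1 _ hA.1 _ hB.1 hAB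

lemma card_family_le {F : Finset (Finset (Fin n))} {M : Finset (Fin n)}
    (hne : ∀ B ∈ F, B.Nonempty) (hdisj : ∀ A ∈ F, ∀ B ∈ F, A ≠ B → Disjoint A B)
    (hsub : ∀ B ∈ F, B ⊆ M) : F.card ≤ M.card := by
  classical
  calc F.card = ∑ _B ∈ F, 1 := by simp
    _ ≤ ∑ B ∈ F, B.card := Finset.sum_le_sum (fun B hB => Finset.card_pos.mpr (hne B hB))
    _ = (F.biUnion id).card := (Finset.card_biUnion (fun A hA B hB hAB => hdisj A hA B hB hAB)).symm
    _ ≤ M.card := Finset.card_le_card (by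
        intro x hx
        obtain ⟨B, hB, hxB⟩ := Finset.mem_biUnion.mp hx
        exact hsub B hB hxB)

/-- in a pairwise disjoint family, all but at most one member avoid a given point -/
lemma usable_count {F : Finset (Finset (Fin n))} {r : Fin n}
    (hdisj : ∀ A ∈ F, ∀ B ∈ F, A ≠ B → Disjoint A B) :
    F.card ≤ (F.filter (fun B => r ∉ B)).card + 1 := by
  classical
  set U := F.filter (fun B => r ∉ B) with hU
  have hsub : U ⊆ F := Finset.filter_subset _ _
  have h1 : (F \ U).card ≤ 1 := by
    rw [Finset.card_le_one]
    intro A hA B hB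
    rw [Finset.mem_sdiff, hU, Finset.mem_filter] at hA hB
    have hrA : r ∈ A := by
      by_contra hr; exact hA.2 ⟨hA.1, hr⟩
    have hrB : r ∈ B := by
      by_contra hr; exact hB.2 ⟨hB.1, hr⟩
    by_contra hAB
    exact Finset.disjoint_left.mp (hdisj A hA.1 B hB.1 hAB) hrA hrB
  have h2 : (F \ U).card = F.card - U.card := Finset.card_sdiff_of_subset hsub
  have h3 : U.card ≤ F.card := Finset.card_le_card hsub
  omega

end Maximin

section Families

variable {n k : ℕ} (G : kWVG n k)

lemma improve_of_many (M : Finset (Fin n)) (j : ℕ) (hj : 1 ≤ j) (σ : Finset (Finset (Fin n)))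
    (hstab : ∀ F' : Finset (Finset (Fin n)), F'.card = j - 1 →
        (∀ B ∈ F', B.Nonempty ∧ B ⊆ M ∧ G.pref B (minP G σ)) →
        (∀ A ∈ F', ∀ B ∈ F', A ≠ B → Disjoint A B) →
        ¬ G.pref (M \ F'.sup id) (minP G σ))
    (U : Finset (Finset (Fin n)))
    (hU : ∀ B ∈ U, B.Nonempty ∧ B ⊆ M ∧ G.pref B (minP G σ))
    (hUdisj : ∀ A ∈ U, ∀ B ∈ U, A ≠ B → Disjoint A B)
    (hUj : j ≤ U.card) : False := by
  classical
  obtain ⟨F₀, hF₀U, hF₀card⟩ := Finset.exists_subset_card_eq hUj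
  have hF₀ne : F₀.Nonempty := Finset.card_pos.mp (by omega)
  obtain ⟨B', hB'⟩ := hF₀ne
  set F' := F₀.erase B' with hF'
  have hcard : F'.card = j - 1 := by rw [hF', Finset.card_erase_of_mem hB', hF₀card]
  have hmemF : ∀ B ∈ F', B ∈ U := fun B hB => hF₀U (Finset.mem_of_mem_erase hB)
  apply hstab F' hcard (fun B hB => hU B (hmemF B hB))
    (fun A hA B hB hAB => hUdisj A (hmemF A hA) B (hmemF B hB) hAB)
  have hB'M := (hU B' (hF₀U hB')).2.1
  have hB'pref := (hU B' (hF₀U hB')).2.2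
  have hsub : B' ⊆ M \ F'.sup id := by
    rw [Finset.subset_sdiff]
    refine ⟨hB'M, ?_⟩
    rw [Finset.disjoint_sup_right]
    intro C hC
    refine hUdisj B' (hF₀U hB') C (hmemF C hC) ?_
    intro h
    subst h
    exact (Finset.notMem_erase B' F₀) hC
  exact pref_of_superset_pref G hsub hB'pref

lemma improve_of_nonmin (M : Finset (Fin n)) (j : ℕ) (σ : Finset (Finset (Fin n)))
    (hσ : PartOf σ M) (hσne : σ.Nonempty)
    (hstab : ∀ F' : Finset (Finset (Fin n)), F'.card = j - 1 →
        (∀ B ∈ F', B.Nonempty ∧ B ⊆ M ∧ G.pref B (minP G σ)) →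
        (∀ A ∈ F', ∀ B ∈ F', A ≠ B → Disjoint A B) →
        ¬ G.pref (M \ F'.sup id) (minP G σ))
    (Q : Finset (Fin n)) (hQmem : Q ∈ σ) (hQne : Q ≠ minP G σ)
    (U : Finset (Finset (Fin n)))
    (hU : ∀ B ∈ U, B.Nonempty ∧ B ⊆ M ∧ G.pref B (minP G σ))
    (hUdisj : ∀ A ∈ U, ∀ B ∈ U, A ≠ B → Disjoint A B)
    (hUQ : ∀ B ∈ U, Disjoint B Q)
    (hUj : j - 1 ≤ U.card) : False := by
  classical
  obtain ⟨F', hF'U, hF'card⟩ := Finset.exists_subset_card_eq hUj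
  apply hstab F' hF'card (fun B hB => hU B (hF'U hB))
    (fun A hA B hB hAB => hUdisj A (hF'U hA) B (hF'U hB) hAB)
  have hsub : Q ⊆ M \ F'.sup id := by
    rw [Finset.subset_sdiff]
    refine ⟨hσ.subset_of_mem hQmem, ?_⟩
    rw [Finset.disjoint_sup_right]
    intro C hC
    exact (hUQ C (hF'U hC)).symm
  exact pref_of_superset_pref G hsub (minP_min G hσne Q hQmem hQne)

/-- helper: each coalition of a family defeats the pref-min of its own family -/
lemma pref_min_trans {σ : Finset (Finset (Fin n))} (hσne : σ.Nonempty)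
    {Q B : Finset (Fin n)} (hQ : Q ∈ σ) (hBQ : G.pref B Q) : G.pref B (minP G σ) := by
  rcases eq_or_ne Q (minP G σ) with rfl | hne
  · exact hBQ
  · exact G.pref_trans _ _ _ hBQ (minP_min G hσne Q hQ hne)

/-- a partition of all players into `k` guaranteed winners -/
lemma famAll : ∃ σ : Finset (Finset (Fin n)), PartOf σ (Finset.univ) ∧ σ.card = k ∧
    ∀ Q ∈ σ, GuarWin G Q := by
  classical
  have hk1 : 1 ≤ k := G.k_pos
  have hkM : k ≤ (Finset.univ : Finset (Fin n)).card := by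
    rw [Finset.card_univ, Fintype.card_fin]; exact G.k_le_n
  obtain ⟨σ, hpart, hcard, hstab⟩ := maximin_skeleton G Finset.univ k hk1 hkM
  refine ⟨σ, hpart, hcard, ?_⟩
  intro Q hQ
  by_contra hng
  obtain ⟨F, hFk, hFmem, hFdisj⟩ := beater_family G hng
  have hσne : σ.Nonempty := Finset.card_pos.mp (by omega)
  exact improve_of_many G Finset.univ k hk1 σ hstab F
    (fun B hB => ⟨(hFmem B hB).1, Finset.subset_univ _,
      pref_min_trans G hσne hQ (hFmem B hB).2.2⟩)
    hFdisj hFk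

/-- a partition of all players but one into `k-1` guaranteed winners -/
lemma famAvoid1 (hk2 : 2 ≤ k) (r : Fin n) :
    ∃ σ : Finset (Finset (Fin n)), PartOf σ (Finset.univ.erase r) ∧ σ.card = k - 1 ∧
    ∀ Q ∈ σ, GuarWin G Q := by
  classical
  have hk1 : 1 ≤ k - 1 := by omega
  have hkM : k - 1 ≤ (Finset.univ.erase r).card := by
    rw [Finset.card_erase_of_mem (Finset.mem_univ r), Finset.card_univ, Fintype.card_fin]
    have := G.k_le_n; omega
  obtain ⟨σ, hpart, hcard, hstab⟩ := maximin_skeleton G (Finset.univ.erase r) (k-1) hk1 hkM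
  refine ⟨σ, hpart, hcard, ?_⟩
  intro Q hQ
  by_contra hng
  obtain ⟨F, hFk, hFmem, hFdisj⟩ := beater_family G hng
  have hσne : σ.Nonempty := Finset.card_pos.mp (by omega)
  set U := F.filter (fun B => r ∉ B) with hUdef
  have hUcard : k - 1 ≤ U.card := by
    have h1 := usable_count (r := r) hFdisj
    have h2 : U.card = (F.filter (fun B => r ∉ B)).card := by rw [hUdef]
    omega
  refine improve_of_many G (Finset.univ.erase r) (k-1) hk1 σ hstab U ?_ ?_ hUcard
  · intro B hB
    rw [hUdef, Finset.mem_filter] at hB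
    refine ⟨(hFmem B hB.1).1, ?_, pref_min_trans G hσne hQ (hFmem B hB.1).2.2⟩
    rw [Finset.subset_erase]
    exact ⟨Finset.subset_univ _, hB.2⟩
  · intro A hA B hB hAB
    rw [hUdef, Finset.mem_filter] at hA hB
    exact hFdisj A hA.1 B hB.1 hAB

/-- if `{r}` is not a guaranteed winner, all players but `r` partition into `k`
guaranteed winners -/
lemma famWithout (r : Fin n) (hr : ¬ GuarWin G {r}) :
    ∃ σ : Finset (Finset (Fin n)), PartOf σ (Finset.univ.erase r) ∧ σ.card = k ∧
    ∀ Q ∈ σ, GuarWin G Q := by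
  classical
  have hk1 : 1 ≤ k := G.k_pos
  obtain ⟨Fr, hFrk, hFrmem, hFrdisj⟩ := beater_family G hr
  have hFrM : ∀ B ∈ Fr, B ⊆ Finset.univ.erase r := by
    intro B hB
    rw [Finset.subset_erase]
    exact ⟨Finset.subset_univ _,
      fun hrB => Finset.disjoint_left.mp (hFrmem B hB).2.1 hrB (Finset.mem_singleton_self r)⟩
  have hkM : k ≤ (Finset.univ.erase r).card :=
    le_trans hFrk (card_family_le (fun B hB => (hFrmem B hB).1) hFrdisj hFrM)
  obtain ⟨σ, hpart, hcard, hstab⟩ := maximin_skeleton G (Finset.univ.erase r) k hk1 hkM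
  have hσne : σ.Nonempty := Finset.card_pos.mp (by omega)
  set P₀ := minP G σ with hP₀def
  -- Step 1 : P₀ defeats {r}
  have hstep1 : G.pref P₀ {r} := by
    by_contra hc
    have hP₀M : P₀ ⊆ Finset.univ.erase r := hpart.subset_of_mem (minP_mem G hσne)
    have hne : P₀ ≠ {r} := by
      intro h
      have : r ∈ P₀ := h ▸ Finset.mem_singleton_self r
      exact (Finset.mem_erase.mp (hP₀M this)).1 rfl
    have hrP : G.pref {r} P₀ := (G.pref_total _ _ hne).resolve_left hc
    exact improve_of_many G (Finset.univ.erase r) k hk1 σ hstab Fr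
      (fun B hB => ⟨(hFrmem B hB).1, hFrM B hB,
        G.pref_trans _ _ _ (hFrmem B hB).2.2 hrP⟩)
      hFrdisj hFrk
  -- Step 2 : every part is a guaranteed winner
  refine ⟨σ, hpart, hcard, ?_⟩
  intro Q hQ
  by_contra hng
  obtain ⟨F, hFk, hFmem, hFdisj⟩ := beater_family G hng
  set U := F.filter (fun B => r ∉ B) with hUdef
  have hUmemF : ∀ B ∈ U, B ∈ F ∧ r ∉ B := by
    intro B hB; rw [hUdef, Finset.mem_filter] at hB; exact hB
  have hUcard : k - 1 ≤ U.card := by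
    have h1 := usable_count (r := r) hFdisj
    have h2 : U.card = (F.filter (fun B => r ∉ B)).card := by rw [hUdef]
    omega
  have hUprops : ∀ B ∈ U, B.Nonempty ∧ B ⊆ Finset.univ.erase r ∧ G.pref B P₀ := by
    intro B hB
    obtain ⟨hBF, hrB⟩ := hUmemF B hB
    refine ⟨(hFmem B hBF).1, ?_, pref_min_trans G hσne hQ (hFmem B hBF).2.2⟩
    rw [Finset.subset_erase]
    exact ⟨Finset.subset_univ _, hrB⟩
  have hUdisj : ∀ A ∈ U, ∀ B ∈ U, A ≠ B → Disjoint A B :=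
    fun A hA B hB hAB => hFdisj A (hUmemF A hA).1 B (hUmemF B hB).1 hAB
  by_cases hUk : k ≤ U.card
  · exact improve_of_many G (Finset.univ.erase r) k hk1 σ hstab U hUprops hUdisj hUk
  rcases eq_or_ne Q P₀ with rfl | hQP₀
  · -- the γ case : Q is the minimum and exactly one beater contains r
    obtain ⟨F', hF'U, hF'card⟩ := Finset.exists_subset_card_eq hUcard
    -- find a beater containing r
    have hUF : U ⊆ F := Finset.filter_subset _ _
    have hUssub : U ⊂ F := by
      rw [Finset.ssubset_iff_of_subset hUF]
      by_contra hc
      push_neg at hc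
      have : F ⊆ U := fun B hB => hc B hB
      have := Finset.card_le_card this
      omega
    obtain ⟨B₁, hB₁F, hB₁U⟩ := Finset.exists_of_ssubset hUssub
    have hrB₁ : r ∈ B₁ := by
      by_contra hc
      exact hB₁U (by rw [hUdef, Finset.mem_filter]; exact ⟨hB₁F, hc⟩)
    have hB₁ne : B₁ ≠ {r} := by
      intro h
      have h1 : G.pref B₁ P₀ := (hFmem B₁ hB₁F).2.2
      have h2 : G.pref B₁ {r} := G.pref_trans _ _ _ h1 hstep1
      rw [h] at h2
      exact G.pref_irrefl _ h2
    obtain ⟨b, hbB₁, hbr⟩ : ∃ b ∈ B₁, b ≠ r := by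
      by_contra hc
      push_neg at hc
      apply hB₁ne
      apply Finset.Subset.antisymm
      · intro x hx
        rw [Finset.mem_singleton]
        exact hc x hx
      · intro x hx
        rw [Finset.mem_singleton] at hx
        exact hx ▸ hrB₁
    apply hstab F' hF'card (fun B hB => hUprops B (hF'U hB))
      (fun A hA B hB hAB => hUdisj A (hF'U hA) B (hF'U hB) hAB)
    -- P₀ ⊊ M \ sup F'
    apply pref_of_ssuperset G
    rw [Finset.ssubset_iff_of_subset]
    · refine ⟨b, ?_, fun hbP₀ => Finset.disjoint_left.mp (hFmem B₁ hB₁F).2.1 hbB₁ hbP₀⟩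
      rw [Finset.mem_sdiff]
      constructor
      · exact Finset.mem_erase.mpr ⟨hbr, Finset.mem_univ b⟩
      · intro hbsup
        rw [Finset.mem_sup] at hbsup
        obtain ⟨C, hCF', hbC⟩ := hbsup
        have hCU := hF'U hCF'
        have hCB₁ : C ≠ B₁ := fun h => (hUmemF C hCU).2 (h ▸ hrB₁)
        exact Finset.disjoint_left.mp
          (hFdisj C (hUmemF C hCU).1 B₁ hB₁F hCB₁) hbC hbB₁
    · rw [Finset.subset_sdiff]
      refine ⟨hpart.subset_of_mem hQ, ?_⟩
      rw [Finset.disjoint_sup_right]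
      intro C hC
      exact ((hFmem C (hUmemF C (hF'U hC)).1).2.1).symm
  · exact improve_of_nonmin G (Finset.univ.erase r) k σ hpart hσne hstab Q hQ hQP₀ U
      hUprops hUdisj (fun B hB => (hFmem B (hUmemF B hB).1).2.1) (by omega)

end Families

section Values

variable {n k : ℕ} (G : kWVG n k)

lemma coalitionValue_eq (hp : ∀ j, G.p j = 1) (π' : Finset (Finset (Fin n)))
    (C : Finset (Fin n)) :
    coalitionValue G π' C =
      if (π'.filter (fun B => G.pref B C)).card < k then 1 else 0 := by
  rw [coalitionValue]
  split_ifs with h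
  · exact hp _
  · rfl

lemma winners_card_le (π' : Finset (Finset (Fin n))) :
    (π'.filter (fun C => (π'.filter (fun B => G.pref B C)).card < k)).card ≤ k := by
  classical
  have hinj : ∀ C ∈ π', ∀ C' ∈ π', C ≠ C' →
      (π'.filter (fun B => G.pref B C)).card ≠ (π'.filter (fun B => G.pref B C')).card := by
    have key : ∀ C ∈ π', ∀ C' ∈ π', G.pref C C' →
        (π'.filter (fun B => G.pref B C)).card < (π'.filter (fun B => G.pref B C')).card := by
      intro C hC C' hC' hpref
      apply Finset.card_lt_card
      rw [Finset.ssubset_iff_of_subset]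
      · refine ⟨C, ?_, ?_⟩
        · rw [Finset.mem_filter]; exact ⟨hC, hpref⟩
        · rw [Finset.mem_filter]; push_neg; intro _; exact G.pref_irrefl C
      · intro B hB
        rw [Finset.mem_filter] at hB ⊢
        exact ⟨hB.1, G.pref_trans _ _ _ hB.2 hpref⟩
    intro C hC C' hC' hne
    rcases G.pref_total C C' hne with h | h
    · exact ne_of_lt (key C hC C' hC' h)
    · exact ne_of_gt (key C' hC' C hC h)
  calc (π'.filter (fun C => (π'.filter (fun B => G.pref B C)).card < k)).card
      ≤ (Finset.range k).card := by
        apply Finset.card_le_card_of_injOn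
          (fun C => (π'.filter (fun B => G.pref B C)).card)
        · intro C hC
          rw [Finset.mem_coe, Finset.mem_filter] at hC
          rw [Finset.mem_coe, Finset.mem_range]
          exact hC.2
        · intro C hC C' hC' heq
          rw [Finset.coe_filter, Set.mem_setOf_eq] at hC hC'
          by_contra hne
          exact hinj C hC.1 C' hC'.1 hne heq
    _ = k := Finset.card_range k

lemma sum_value_eq (hp : ∀ j, G.p j = 1) (π' s : Finset (Finset (Fin n))) :
    ∑ C ∈ s, coalitionValue G π' C =
      ((s.filter (fun C => (π'.filter (fun B => G.pref B C)).card < k)).card : ℚ) := by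
  classical
  rw [← Finset.sum_boole]
  exact Finset.sum_congr rfl fun C _ => coalitionValue_eq G hp π' C

lemma sum_x_parts {n : ℕ} (x : Fin n → ℚ) (σ : Finset (Finset (Fin n)))
    (hdisj : ∀ A ∈ σ, ∀ B ∈ σ, A ≠ B → Disjoint A B) :
    ∑ C ∈ σ, ∑ i ∈ C, x i = ∑ i ∈ σ.sup id, x i := by
  classical
  have hpd : (↑σ : Set (Finset (Fin n))).PairwiseDisjoint id := fun A hA B hB hAB =>
    hdisj A (Finset.mem_coe.mp hA) B (Finset.mem_coe.mp hB) hAB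
  rw [Finset.sup_eq_biUnion, Finset.sum_biUnion hpd]
  exact Finset.sum_congr rfl fun C _ => rfl

end Values

section Hard

variable {n k : ℕ} (G : kWVG n k)

/-- the central lemma: a SCD-stable outcome admits no MCDT -/
lemma no_MCDT_of_no_SCD (hp : ∀ j, G.p j = 1) (ω : Outcome G)
    (hs : ¬ ∃ C, IsSCD G ω.x C) : ¬ ∃ πD, IsMCDT G ω.x πD := by
  classical
  set x := ω.x with hxdef
  have hxg : ∀ E : Finset (Fin n), E.Nonempty → GuarWin G E → 1 ≤ ∑ i ∈ E, x i := by
    intro E hEne hEg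
    by_contra hlt
    push_neg at hlt
    apply hs
    refine ⟨E, hEne, ?_⟩
    intro π' hπ' hmem
    rw [coalitionValue_eq G hp, if_pos (hEg π' hπ' hmem)]
    exact hlt
  have hxuniv_le : ∑ i ∈ Finset.univ, x i ≤ (k : ℚ) := by
    have h1 : ∑ i ∈ Finset.univ, x i = ∑ C ∈ ω.part, ∑ i ∈ C, x i := by
      rw [sum_x_parts x ω.part ω.ispart.2.1, ω.ispart.2.2]
    have h2 : ∑ C ∈ ω.part, ∑ i ∈ C, x i = ∑ C ∈ ω.part, coalitionValue G ω.part C :=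
      Finset.sum_congr rfl fun C hC => ω.x_budget C hC
    rw [h1, h2, sum_value_eq G hp]
    have h3 := winners_card_le G ω.part
    exact_mod_cast h3
  have family_bound : ∀ σ : Finset (Finset (Fin n)), σ.card = k →
      (∀ C ∈ σ, C.Nonempty ∧ GuarWin G C) →
      (∀ A ∈ σ, ∀ B ∈ σ, A ≠ B → Disjoint A B) →
      (∀ C ∈ σ, ∑ i ∈ C, x i = 1) ∧ (∀ r : Fin n, r ∉ σ.sup id → x r = 0) ∧
        ∑ i ∈ Finset.univ, x i = (k:ℚ) := by
    intro σ hcard hparts hdisj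
    have hsum1 : (k:ℚ) ≤ ∑ C ∈ σ, ∑ i ∈ C, x i := by
      calc (k:ℚ) = ∑ _C ∈ σ, (1:ℚ) := by rw [Finset.sum_const, hcard]; ring
        _ ≤ ∑ C ∈ σ, ∑ i ∈ C, x i :=
          Finset.sum_le_sum fun C hC => hxg C (hparts C hC).1 (hparts C hC).2
    have hsup_le : ∑ i ∈ σ.sup id, x i ≤ ∑ i ∈ Finset.univ, x i :=
      Finset.sum_le_sum_of_subset_of_nonneg (Finset.subset_univ _)
        (fun i _ _ => ω.x_nonneg i)
    have hparts_eq := sum_x_parts x σ hdisj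
    have huniv_eq : ∑ i ∈ Finset.univ, x i = (k:ℚ) := by
      rw [hparts_eq] at hsum1
      linarith
    have hsup_eq : ∑ i ∈ σ.sup id, x i = (k:ℚ) := by
      rw [hparts_eq] at hsum1
      linarith [hsup_le, huniv_eq.le]
    refine ⟨?_, ?_, huniv_eq⟩
    · have hzero : ∑ C ∈ σ, (∑ i ∈ C, x i - 1) = 0 := by
        rw [Finset.sum_sub_distrib, Finset.sum_const, hcard, hparts_eq, hsup_eq]
        simp
      intro C hC
      have hterm := (Finset.sum_eq_zero_iff_of_nonneg
        (fun C hC => by linarith [hxg C (hparts C hC).1 (hparts C hC).2])).mp hzero C hC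
      linarith
    · intro r hr
      have hsplit : ∑ i ∈ Finset.univ \ σ.sup id, x i +
          ∑ i ∈ σ.sup id, x i = ∑ i ∈ Finset.univ, x i :=
        Finset.sum_sdiff (Finset.subset_univ _)
      have hzero : ∑ i ∈ Finset.univ \ σ.sup id, x i = 0 := by
        rw [huniv_eq, hsup_eq] at hsplit; linarith
      exact (Finset.sum_eq_zero_iff_of_nonneg
        (fun i _ => ω.x_nonneg i)).mp hzero r (by
          rw [Finset.mem_sdiff]; exact ⟨Finset.mem_univ r, hr⟩)
  have hsing1 : ∀ r : Fin n, GuarWin G {r} → x r = 1 := by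
    intro r hr
    rcases Nat.lt_or_ge k 2 with hk1 | hk2
    · have hk : k = 1 := by have := G.k_pos; omega
      have hfb := family_bound {({r} : Finset (Fin n))} (by rw [Finset.card_singleton]; omega)
        (by intro C hC; rw [Finset.mem_singleton] at hC; subst hC
            exact ⟨Finset.singleton_nonempty r, hr⟩)
        (by intro A hA B hB hAB
            rw [Finset.mem_singleton] at hA hB; subst hA; subst hB; exact absurd rfl hAB)
      have h1 := hfb.1 {r} (Finset.mem_singleton_self _)
      rwa [Finset.sum_singleton] at h1
    · obtain ⟨σ₀, hσ₀part, hσ₀card, hσ₀guar⟩ := famAvoid1 G hk2 r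
      have hsub : ∀ B ∈ σ₀, B ⊆ Finset.univ.erase r := fun B hB => hσ₀part.subset_of_mem hB
      have hrnot : ∀ B ∈ σ₀, r ∉ B := by
        intro B hB hrB
        exact (Finset.mem_erase.mp (hsub B hB hrB)).1 rfl
      have hnotmem : ({r} : Finset (Fin n)) ∉ σ₀ := by
        intro hmem
        exact hrnot _ hmem (Finset.mem_singleton_self r)
      have hfb := family_bound (insert {r} σ₀)
        (by rw [Finset.card_insert_of_notMem hnotmem, hσ₀card]; have := G.k_pos; omega)
        (by intro C hC
            rcases Finset.mem_insert.mp hC with rfl | hC'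
            · exact ⟨Finset.singleton_nonempty r, hr⟩
            · exact ⟨hσ₀part.1 C hC', hσ₀guar C hC'⟩)
        (by intro A hA B hB hAB
            rcases Finset.mem_insert.mp hA with rfl | hA' <;>
              rcases Finset.mem_insert.mp hB with rfl | hB'
            · exact absurd rfl hAB
            · rw [Finset.disjoint_singleton_left]; exact hrnot B hB'
            · rw [Finset.disjoint_singleton_right]; exact hrnot A hA'
            · exact hσ₀part.2.1 A hA' B hB' hAB)
      have h1 := hfb.1 {r} (Finset.mem_insert_self _ _)
      rwa [Finset.sum_singleton] at h1
  have hsing0 : ∀ r : Fin n, ¬ GuarWin G {r} → x r = 0 := by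
    intro r hr
    obtain ⟨σ₀, hσ₀part, hσ₀card, hσ₀guar⟩ := famWithout G r hr
    have hfb := family_bound σ₀ hσ₀card
      (fun C hC => ⟨hσ₀part.1 C hC, hσ₀guar C hC⟩) hσ₀part.2.1
    apply hfb.2.1 r
    rw [hσ₀part.2.2]
    simp
  have hxuniv : ∑ i ∈ Finset.univ, x i = (k:ℚ) := by
    obtain ⟨σA, hApart, hAcard, hAguar⟩ := famAll G
    exact (family_bound σA hAcard (fun C hC => ⟨hApart.1 C hC, hAguar C hC⟩)
      hApart.2.1).2.2
  -- now suppose an MCDT exists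
  rintro ⟨πD, ⟨⟨hDne, hDpne, hDdisj⟩, hcond⟩⟩
  set D := πD.sup id with hDdef
  set R := Finset.univ \ D with hRdef
  have hDsub : ∀ C ∈ πD, C ⊆ D := fun C hC => Finset.le_sup (f := id) hC
  set RS := R.filter (fun r => GuarWin G {r}) with hRSdef
  set R0 := R \ RS with hR0def
  set q := RS.card with hqdef
  have hxR : ∑ i ∈ R, x i = (q:ℚ) := by
    rw [← Finset.sum_filter_add_sum_filter_not R (fun r => GuarWin G {r})]
    have h1 : ∑ i ∈ R.filter (fun r => GuarWin G {r}), x i = (q:ℚ) := by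
      rw [Finset.sum_congr rfl (fun r hr => hsing1 r (Finset.mem_filter.mp hr).2)]
      rw [Finset.sum_const, ← hRSdef, ← hqdef]
      simp
    have h2 : ∑ i ∈ R.filter (fun r => ¬ GuarWin G {r}), x i = 0 := by
      rw [Finset.sum_congr rfl (fun r hr => hsing0 r (Finset.mem_filter.mp hr).2)]
      simp
    rw [h1, h2]; ring
  have hxD : ∑ i ∈ D, x i = (k:ℚ) - q := by
    have hsplit : ∑ i ∈ R, x i + ∑ i ∈ D, x i = ∑ i ∈ Finset.univ, x i := by
      rw [hRdef]
      exact Finset.sum_sdiff (Finset.subset_univ _)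
    rw [hxR, hxuniv] at hsplit
    linarith
  -- build the completion of πD
  set Sng : Finset (Finset (Fin n)) := RS.image (fun r => ({r} : Finset (Fin n))) with hSngdef
  set Rest : Finset (Finset (Fin n)) := if R0.Nonempty then {R0} else ∅ with hRestdef
  set π3 : Finset (Finset (Fin n)) := πD ∪ Sng ∪ Rest with hπ3def
  have hRD : Disjoint D R := by
    rw [hRdef]
    exact Finset.disjoint_sdiff
  have hSngsub : ∀ S ∈ Sng, ∃ r ∈ RS, S = {r} := by
    intro S hS
    rw [hSngdef, Finset.mem_image] at hS
    obtain ⟨r, hr, rfl⟩ := hS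
    exact ⟨r, hr, rfl⟩
  have hRSsubR : RS ⊆ R := Finset.filter_subset _ _
  have hR0subR : R0 ⊆ R := Finset.sdiff_subset
  have hRestsub : ∀ S ∈ Rest, S = R0 ∧ R0.Nonempty := by
    intro S hS
    rw [hRestdef] at hS
    split_ifs at hS with h
    · exact ⟨Finset.mem_singleton.mp hS, h⟩
    · exact absurd hS (Finset.notMem_empty S)
  have hmemπ3 : ∀ S ∈ π3, S ∈ πD ∨ (∃ r ∈ RS, S = {r}) ∨ (S = R0 ∧ R0.Nonempty) := by
    intro S hS
    rw [hπ3def, Finset.mem_union, Finset.mem_union] at hS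
    rcases hS with (hS | hS) | hS
    · exact Or.inl hS
    · exact Or.inr (Or.inl (hSngsub S hS))
    · exact Or.inr (Or.inr (hRestsub S hS))
  have hπ3part : IsPartition π3 Finset.univ := by
    refine ⟨?_, ?_, ?_⟩
    · intro C hC
      rcases hmemπ3 C hC with h | ⟨r, _, rfl⟩ | ⟨rfl, hne0⟩
      · exact hDpne C h
      · exact Finset.singleton_nonempty r
      · exact hne0
    · intro A hA B hB hAB
      rcases hmemπ3 A hA with hAD | ⟨r, hr, rfl⟩ | ⟨rfl, -⟩ <;>
        rcases hmemπ3 B hB with hBD | ⟨r', hr', rfl⟩ | ⟨rfl, -⟩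
      · exact hDdisj A hAD B hBD hAB
      · exact (hRD.mono_left (hDsub A hAD)).mono_right
          (Finset.singleton_subset_iff.mpr (hRSsubR hr'))
      · exact (hRD.mono_left (hDsub A hAD)).mono_right hR0subR
      · exact ((hRD.mono_left (hDsub B hBD)).mono_right
          (Finset.singleton_subset_iff.mpr (hRSsubR hr))).symm
      · rw [Finset.disjoint_singleton_left]
        rw [Finset.mem_singleton]
        intro h
        exact hAB (h ▸ rfl)
      · rw [Finset.disjoint_singleton_left]
        rw [hR0def, Finset.mem_sdiff]
        push_neg
        intro _
        exact hr
      · exact ((hRD.mono_left (hDsub B hBD)).mono_right hR0subR).symm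
      · rw [Finset.disjoint_singleton_right]
        rw [hR0def, Finset.mem_sdiff]
        push_neg
        intro _
        exact hr'
      · exact absurd rfl hAB
    · apply Finset.Subset.antisymm (Finset.subset_univ _)
      intro a _
      rw [Finset.mem_sup]
      by_cases haD : a ∈ D
      · rw [hDdef, Finset.mem_sup] at haD
        obtain ⟨C, hC, haC⟩ := haD
        refine ⟨C, ?_, haC⟩
        rw [hπ3def]
        exact Finset.mem_union_left _ (Finset.mem_union_left _ hC)
      · have haR : a ∈ R := by
          rw [hRdef, Finset.mem_sdiff]; exact ⟨Finset.mem_univ a, haD⟩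
        by_cases haRS : a ∈ RS
        · refine ⟨{a}, ?_, Finset.mem_singleton_self a⟩
          rw [hπ3def]
          exact Finset.mem_union_left _ (Finset.mem_union_right _ (by
            rw [hSngdef]; exact Finset.mem_image_of_mem _ haRS))
        · have haR0 : a ∈ R0 := by
            rw [hR0def, Finset.mem_sdiff]; exact ⟨haR, haRS⟩
          refine ⟨R0, ?_, haR0⟩
          rw [hπ3def]
          refine Finset.mem_union_right _ ?_
          rw [hRestdef, if_pos ⟨a, haR0⟩]
          exact Finset.mem_singleton_self R0
  have hπDsubπ3 : πD ⊆ π3 := by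
    rw [hπ3def]
    exact (Finset.subset_union_left).trans Finset.subset_union_left
  -- counting winners in π3
  set Wf := π3.filter (fun C => (π3.filter (fun B => G.pref B C)).card < k) with hWfdef
  have hWfk : Wf.card ≤ k := winners_card_le G π3
  have hSngWf : Sng ⊆ Wf := by
    intro S hS
    obtain ⟨r, hr, rfl⟩ := hSngsub S hS
    rw [hWfdef, Finset.mem_filter]
    have hmem : ({r} : Finset (Fin n)) ∈ π3 := by
      rw [hπ3def]
      exact Finset.mem_union_left _ (Finset.mem_union_right _ (by
        rw [hSngdef]; exact Finset.mem_image_of_mem _ hr))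
    exact ⟨hmem, (Finset.mem_filter.mp hr).2 π3 hπ3part hmem⟩
  set πDW := πD.filter (fun C => (π3.filter (fun B => G.pref B C)).card < k) with hπDWdef
  have hπDWsub : πDW ⊆ Wf := by
    rw [hπDWdef, hWfdef]
    exact Finset.filter_subset_filter _ hπDsubπ3
  have hdisjSng : Disjoint πDW Sng := by
    rw [Finset.disjoint_left]
    intro C hC hCS
    obtain ⟨r, hr, rfl⟩ := hSngsub _ hCS
    have h1 : r ∈ D := hDsub _ (Finset.mem_of_mem_filter _ hC) (Finset.mem_singleton_self r)
    exact Finset.disjoint_left.mp hRD h1 (hRSsubR hr)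
  have hSngcard : Sng.card = q := by
    rw [hSngdef, hqdef]
    exact Finset.card_image_of_injective _ (fun a b h => Finset.singleton_inj.mp h)
  have hcards : πDW.card + q ≤ k := by
    have h1 : (πDW ∪ Sng).card = πDW.card + Sng.card := Finset.card_union_of_disjoint hdisjSng
    have h2 : πDW ∪ Sng ⊆ Wf := Finset.union_subset hπDWsub hSngWf
    have h3 := Finset.card_le_card h2
    omega
  -- the contradiction
  have hv := hcond π3 hπ3part hπDsubπ3
  rw [sum_value_eq G hp] at hv
  have hcast : ((πD.filter (fun C => (π3.filter (fun B => G.pref B C)).card < k)).card : ℚ)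
      + (q:ℚ) ≤ (k:ℚ) := by
    exact_mod_cast hcards
  rw [hxD] at hv
  linarith

end Hard

section Easy

variable {n k : ℕ} (G : kWVG n k)

lemma devPartition_singleton {C : Finset (Fin n)} (hC : C.Nonempty) :
    IsDevPartition ({C} : Finset (Finset (Fin n))) := by
  refine ⟨Finset.singleton_nonempty C, ?_, ?_⟩
  · intro B hB; rw [Finset.mem_singleton] at hB; subst hB; exact hC
  · intro A hA B hB hAB
    rw [Finset.mem_singleton] at hA hB; subst hA; subst hB; exact absurd rfl hAB

lemma exists_MCD_of_SCD {x : Fin n → ℚ} (h : ∃ C, IsSCD G x C) :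
    ∃ πD, IsMCD G x πD := by
  obtain ⟨C, hCne, hC⟩ := h
  refine ⟨{C}, devPartition_singleton hCne, ?_⟩
  intro π' hπ hsub B hB
  rw [Finset.mem_singleton] at hB; subst hB
  exact hC π' hπ (hsub (Finset.mem_singleton_self _))

lemma exists_wMCD_of_SCD {x : Fin n → ℚ} (h : ∃ C, IsSCD G x C) :
    ∃ πD, IswMCD G x πD := by
  obtain ⟨C, hCne, hC⟩ := h
  refine ⟨{C}, devPartition_singleton hCne, ?_⟩
  intro π' hπ hsub
  have hCmem := hsub (Finset.mem_singleton_self C)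
  constructor
  · intro B hB
    rw [Finset.mem_singleton] at hB; subst hB
    exact (hC π' hπ hCmem).le
  · exact ⟨C, Finset.mem_singleton_self C, hC π' hπ hCmem⟩

lemma exists_MCDT_of_MCD {x : Fin n → ℚ} (h : ∃ πD, IsMCD G x πD) :
    ∃ πD, IsMCDT G x πD := by
  obtain ⟨πD, hdev, hcond⟩ := h
  refine ⟨πD, hdev, ?_⟩
  intro π' h1 h2
  rw [← sum_x_parts x πD hdev.2.2]
  exact Finset.sum_lt_sum_of_nonempty hdev.1 (fun C hC => hcond π' h1 h2 C hC)

lemma exists_MCDT_of_wMCD {x : Fin n → ℚ} (h : ∃ πD, IswMCD G x πD) :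
    ∃ πD, IsMCDT G x πD := by
  obtain ⟨πD, hdev, hcond⟩ := h
  refine ⟨πD, hdev, ?_⟩
  intro π' h1 h2
  rw [← sum_x_parts x πD hdev.2.2]
  obtain ⟨hle, hlt⟩ := hcond π' h1 h2
  exact Finset.sum_lt_sum hle hlt

end Easy

/-- In a `k`-uniform-prize WVG the SCD-, MCD-, wMCD- and MCDT-cores all coincide. -/
theorem uniform_prize_cores_coincide (n k : ℕ) (G : kWVG n k) (hp : ∀ j, G.p j = 1) :
    ∀ ω : Outcome G,
      (SCDStable G ω ↔ MCDStable G ω) ∧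
      (SCDStable G ω ↔ wMCDStable G ω) ∧
      (SCDStable G ω ↔ MCDTStable G ω) := by
  intro ω
  have hback : (∃ πD, IsMCDT G ω.x πD) → (∃ C, IsSCD G ω.x C) := by
    intro h
    by_contra hn
    exact no_MCDT_of_no_SCD G hp ω hn h
  have hSM : (∃ C, IsSCD G ω.x C) ↔ (∃ πD, IsMCD G ω.x πD) :=
    ⟨exists_MCD_of_SCD G, fun h => hback (exists_MCDT_of_MCD G h)⟩
  have hSw : (∃ C, IsSCD G ω.x C) ↔ (∃ πD, IswMCD G ω.x πD) :=
    ⟨exists_wMCD_of_SCD G, fun h => hback (exists_MCDT_of_wMCD G h)⟩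
  have hST : (∃ C, IsSCD G ω.x C) ↔ (∃ πD, IsMCDT G ω.x πD) :=
    ⟨fun h => exists_MCDT_of_MCD G (exists_MCD_of_SCD G h), hback⟩
  refine ⟨not_congr hSM, not_congr hSw, not_congr hST⟩
end

section
/- Every wMCD-stable outcome of a k-Prize Weighted Voting Game is Pareto-optimal. -/
open Finset
open scoped Classical

variable {n k : ℕ}

/-- An outcome is Pareto-optimal if no outcome makes some player strictly better off
and no player worse off. -/
def ParetoOptimal (G : kWVG n k) (ω : Outcome G) : Prop :=
  ¬ ∃ ω' : Outcome G, (∀ i, ω.x i ≤ ω'.x i) ∧ (∃ j, ω.x j < ω'.x j)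

/-- An outcome is utilitarian if no outcome achieves a strictly larger total payoff. -/
def Utilitarian (G : kWVG n k) (ω : Outcome G) : Prop :=
  ¬ ∃ ω' : Outcome G, (∑ i, ω.x i) < ∑ i, ω'.x i

/-- Every wMCD-stable outcome of a `k`-prize weighted voting game is Pareto-optimal. -/
theorem wMCD_stable_implies_pareto (n k : ℕ) (G : kWVG n k) (ω : Outcome G)
    (hstable : wMCDStable G ω) : ParetoOptimal G ω := by
  rintro ⟨ω', hle, j, hj⟩
  apply hstable
  refine ⟨ω'.part, ⟨?_, ω'.ispart.1, ω'.ispart.2.1⟩, ?_⟩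
  · have hn : 0 < n := lt_of_lt_of_le G.k_pos G.k_le_n
    have hi : (⟨0, hn⟩ : Fin n) ∈ ω'.part.sup id := by
      rw [ω'.ispart.2.2]; exact Finset.mem_univ _
    rcases Finset.mem_sup.mp hi with ⟨B, hB, _⟩
    exact ⟨B, hB⟩
  · intro π' hπ' hsub
    have heq : π' = ω'.part := by
      apply Finset.Subset.antisymm _ hsub
      intro C hC
      obtain ⟨i, hiC⟩ := hπ'.1 C hC
      have hi : i ∈ ω'.part.sup id := by
        rw [ω'.ispart.2.2]; exact Finset.mem_univ i
      rcases Finset.mem_sup.mp hi with ⟨B, hB, hiB⟩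
      by_cases hCB : C = B
      · rwa [hCB]
      · exact absurd (hπ'.2.1 C hC B (hsub hB) hCB)
          (fun h => Finset.disjoint_left.mp h hiC hiB)
    subst heq
    constructor
    · intro C hC
      rw [← ω'.x_budget C hC]
      exact Finset.sum_le_sum fun i _ => hle i
    · have hjmem : j ∈ ω'.part.sup id := by
        rw [ω'.ispart.2.2]; exact Finset.mem_univ j
      rcases Finset.mem_sup.mp hjmem with ⟨C, hC, hjC⟩
      refine ⟨C, hC, ?_⟩
      rw [← ω'.x_budget C hC]
      exact Finset.sum_lt_sum (fun i _ => hle i) ⟨j, hjC, hj⟩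
end
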